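/- arXiv:2308.14086 — 8 statements merged into one kernel-verified Lean document; each statement's English description precedes it below -/
import Mathlib

section
/- Let f : ℝ × ℝ × ℝ → ℝ be of class C² and let T > 0. Let u₁, u₂ : [0,T] × ℝ → ℝ be classical solutions of u_t = u_xx + f(t, u, u_x) on the circle: each uᵢ is 2π-periodic in x, uᵢ and ∂_x uᵢ are continuous on [0,T] × ℝ, the partial derivatives ∂_t uᵢ and ∂_xx uᵢ exist and are continuous on (0,T] × ℝ, and the equation holds on (0,T] × ℝ. If u₁(T,·) = u₂(T,·), then u₁ = u₂ on all of [0,T] × ℝ. (This is the backward uniqueness underlying the injectivity of the time-T Poincaré map of the equation u_t = u_xx + f(t,u,u_x) on S¹.) -/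
/-!
Agmon–Nirenberg frequency argument. The difference `w = u₁ - u₂` satisfies
`|w_t - w_xx| ≤ L (|w| + |w_x|)`, where `L` is a Lipschitz constant of `f` on the range of the
solutions, which is compact by periodicity. Let `E = ∫ w²` and `D = ∫ w_x²` over a period.
Integrating by parts and completing a square, wherever `E > 0` one gets
`(D / E)' ≤ C (1 + D / E)` and `E' ≥ -C (E + D)`. Grönwall's inequality bounds the frequency
`D / E` on any interval where `E > 0`, hence `E' ≥ -C' E` there, so `E` cannot reach `0` in
finite time. As `E(T) = 0`, `E` vanishes on `(0, T)`, hence by continuity on `[0, T]`, and so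
does `w`.
-/

open Real Set MeasureTheory Filter Topology intervalIntegral Function

theorem continuous_of_continuousOn_prod_univ {F : ℝ → ℝ → ℝ} {s : Set ℝ}
    (hF : ContinuousOn ↿F (s ×ˢ univ)) {t : ℝ} (ht : t ∈ s) : Continuous (F t) :=
  hF.comp_continuous (continuous_const.prodMk continuous_id) fun x => ⟨ht, mem_univ x⟩

theorem continuousOn_intervalIntegral_of_continuousOn_prod_univ {F : ℝ → ℝ → ℝ} {s : Set ℝ}
    (hF : ContinuousOn ↿F (s ×ˢ univ)) (a b : ℝ) :
    ContinuousOn (fun t => ∫ x in a..b, F t x) s := by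
  rw [continuousOn_iff_continuous_domRestrict]
  have hF' : Continuous fun p : s × ℝ => F p.1 p.2 :=
    hF.comp_continuous (continuous_subtype_val.prodMap continuous_id) fun p => ⟨p.1.2, mem_univ _⟩
  exact continuous_parametric_intervalIntegral_of_continuous (a₀ := a) hF' continuous_const

theorem exists_abs_le_of_continuousOn_of_periodic {F : ℝ → ℝ → ℝ} {s : Set ℝ} {c : ℝ}
    (hc : 0 < c) (hs : IsCompact s) (hF : ContinuousOn ↿F (s ×ˢ univ))
    (hper : ∀ t ∈ s, Periodic (F t) c) : ∃ M, ∀ t ∈ s, ∀ x, |F t x| ≤ M := by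
  obtain ⟨M, hM⟩ := (hs.prod isCompact_Icc).exists_bound_of_continuousOn
    (hF.mono (prod_mono_right (subset_univ (Icc 0 c))))
  refine ⟨M, fun t ht x => ?_⟩
  obtain ⟨y, hy, hxy⟩ := (hper t ht).exists_mem_Ico₀ hc x
  rw [hxy]
  exact hM (t, y) ⟨ht, Ico_subset_Icc_self hy⟩

theorem Function.Periodic.eq_zero_of_integral_eq_zero {g : ℝ → ℝ} {c : ℝ} (hg : Periodic g c)
    (hc : 0 < c) (hcont : Continuous g) (hnonneg : 0 ≤ g) (hint : ∫ x in 0..c, g x = 0) :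
    g = 0 := by
  have hae := (integral_eq_zero_iff_of_le_of_nonneg_ae hc.le (Eventually.of_forall hnonneg)
    (hcont.intervalIntegrable 0 c)).1 hint
  have hIoc : EqOn g 0 (Ioc 0 c) :=
    Measure.eqOn_Ioc_of_ae_eq volume hae hcont.continuousOn continuousOn_const
  funext x
  obtain ⟨y, hy, hxy⟩ := hg.exists_mem_Ioc hc x 0
  rw [hxy]
  exact hIoc (by simpa using hy)

theorem Function.Periodic.periodic_of_hasDerivAt {g g' : ℝ → ℝ} {c : ℝ} (hg : Periodic g c)
    (hd : ∀ x, HasDerivAt g (g' x) x) : Periodic g' c := fun x => by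
  have h := (hd (x + c)).comp_add_const x c
  rw [show (fun y => g (y + c)) = g from funext hg] at h
  exact h.unique (hd x)

theorem integral_mul_deriv_eq_neg_integral_deriv_mul {f f' g g' : ℝ → ℝ} {a b : ℝ}
    (hf : ∀ x ∈ uIcc a b, HasDerivAt f (f' x) x) (hg : ∀ x ∈ uIcc a b, HasDerivAt g (g' x) x)
    (hf' : IntervalIntegrable f' volume a b) (hg' : IntervalIntegrable g' volume a b)
    (hbd : f b * g b = f a * g a) :
    ∫ x in a..b, f x * g' x = -∫ x in a..b, f' x * g x := by
  rw [integral_mul_deriv_eq_deriv_mul hf hg hf' hg', hbd, sub_self, zero_sub]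

theorem integral_sq_sub_integral_sq {f g : ℝ → ℝ} (hf : Continuous f) (hg : Continuous g)
    (a b : ℝ) : (∫ x in a..b, f x ^ 2) - ∫ x in a..b, g x ^ 2 =
      ∫ x in a..b, (f x - g x) * (f x + g x) := by
  rw [← intervalIntegral.integral_sub (f := fun x => f x ^ 2) (g := fun x => g x ^ 2)
    ((hf.pow 2).intervalIntegrable a b) ((hg.pow 2).intervalIntegrable a b)]
  exact integral_congr fun x _ => by ring

theorem exists_abs_sub_le_of_contDiff {f : ℝ → ℝ → ℝ → ℝ}
    (hf : ContDiff ℝ 1 fun p : ℝ × ℝ × ℝ => f p.1 p.2.1 p.2.2) {s : Set ℝ} (hs : IsCompact s)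
    (M : ℝ) : ∃ L, ∀ t ∈ s, ∀ a b c d : ℝ, |a| ≤ M → |b| ≤ M → |c| ≤ M → |d| ≤ M →
      |f t a b - f t c d| ≤ L * (|a - c| + |b - d|) := by
  obtain ⟨K, hK⟩ := hf.locallyLipschitz.locallyLipschitzOn.exists_lipschitzOnWith_of_compact
    (hs.prod ((isCompact_closedBall (0 : ℝ) M).prod (isCompact_closedBall (0 : ℝ) M)))
  refine ⟨K, fun t ht a b c d ha hb hc hd => ?_⟩
  have hmem : ∀ y z : ℝ, |y| ≤ M → |z| ≤ M →
      ((t, y, z) : ℝ × ℝ × ℝ) ∈ s ×ˢ (Metric.closedBall 0 M ×ˢ Metric.closedBall 0 M) :=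
    fun y z hy hz => ⟨ht, by simpa using hy, by simpa using hz⟩
  have hdist : dist ((t, a, b) : ℝ × ℝ × ℝ) (t, c, d) ≤ |a - c| + |b - d| := by
    simp only [Prod.dist_eq, dist_self, Real.dist_eq]
    exact max_le (by positivity) (max_le (by linarith [abs_nonneg (b - d)])
      (by linarith [abs_nonneg (a - c)]))
  calc |f t a b - f t c d| ≤ K * dist ((t, a, b) : ℝ × ℝ × ℝ) (t, c, d) :=
        hK.dist_le_mul _ (hmem a b ha hb) _ (hmem c d hc hd)
    _ ≤ K * (|a - c| + |b - d|) := by gcongr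

theorem tendsto_integral_slope_mul {v vt h : ℝ → ℝ → ℝ} {s : Set ℝ} {t₀ a b : ℝ}
    (hs : s ∈ 𝓝 t₀) (hv : ∀ t ∈ s, ∀ x, HasDerivAt (v · x) (vt t x) t)
    (hvc : ∀ t ∈ s, Continuous (v t)) (hvt : ContinuousOn ↿vt (s ×ˢ univ))
    (hh : ContinuousOn ↿h (s ×ˢ univ)) :
    Tendsto (fun t => ∫ x in a..b, slope (v · x) t₀ t * h t x) (𝓝[≠] t₀)
      (𝓝 (∫ x in a..b, vt t₀ x * h t₀ x)) := by
  obtain ⟨δ, hδ, hδs⟩ := Metric.nhds_basis_closedBall.mem_iff.1 hs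
  have hK : IsCompact (Metric.closedBall t₀ δ ×ˢ uIcc a b) :=
    (isCompact_closedBall _ _).prod isCompact_uIcc
  have hKs : Metric.closedBall t₀ δ ×ˢ uIcc a b ⊆ s ×ˢ univ := prod_mono hδs (subset_univ _)
  obtain ⟨C₁, hC₁⟩ := hK.exists_bound_of_continuousOn (hvt.mono hKs)
  obtain ⟨C₂, hC₂⟩ := hK.exists_bound_of_continuousOn (hh.mono hKs)
  have hball : ∀ᶠ t in 𝓝[≠] t₀, t ∈ Metric.closedBall t₀ δ :=
    mem_nhdsWithin_of_mem_nhds (Metric.closedBall_mem_nhds t₀ hδ)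
  refine tendsto_integral_filter_of_dominated_convergence (fun _ => C₁ * C₂) ?_ ?_
    intervalIntegrable_const ?_
  · filter_upwards [hball] with t ht
    simp only [slope_def_field]
    exact ((((hvc t (hδs ht)).sub (hvc t₀ (mem_of_mem_nhds hs))).div_const _).mul
      (continuous_of_continuousOn_prod_univ hh (hδs ht))).aestronglyMeasurable
  · filter_upwards [hball] with t ht
    refine Eventually.of_forall fun x hx => ?_
    have hx' := uIoc_subset_uIcc hx
    have hC₁' : 0 ≤ C₁ := (norm_nonneg _).trans (hC₁ (t, x) ⟨ht, hx'⟩)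
    have hmvt : ‖v t x - v t₀ x‖ ≤ C₁ * ‖t - t₀‖ :=
      (convex_closedBall t₀ δ).norm_image_sub_le_of_norm_hasDerivWithin_le
        (fun τ hτ => (hv τ (hδs hτ) x).hasDerivWithinAt) (fun τ hτ => hC₁ (τ, x) ⟨hτ, hx'⟩)
        (Metric.mem_closedBall_self hδ.le) ht
    have hslope : ‖slope (v · x) t₀ t‖ ≤ C₁ := by
      rw [slope_def_field, norm_div]
      exact div_le_of_le_mul₀ (norm_nonneg _) hC₁' hmvt
    rw [norm_mul]
    exact mul_le_mul hslope (hC₂ (t, x) ⟨ht, hx'⟩) (norm_nonneg _) hC₁'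
  · refine Eventually.of_forall fun x _ => ?_
    have hcont : ContinuousAt (h · x) t₀ := ContinuousAt.comp (g := ↿h) (f := fun t => (t, x))
      (hh.continuousAt (prod_mem_nhds hs univ_mem)) (by fun_prop)
    exact (hasDerivAt_iff_tendsto_slope.1 (hv t₀ (mem_of_mem_nhds hs) x)).mul
      (hcont.tendsto.mono_left nhdsWithin_le_nhds)

theorem hasDerivAt_of_sub_eq_integral_mul {Q : ℝ → ℝ} {v vt h : ℝ → ℝ → ℝ} {s : Set ℝ}
    {t₀ a b : ℝ} (hs : s ∈ 𝓝 t₀) (hv : ∀ t ∈ s, ∀ x, HasDerivAt (v · x) (vt t x) t)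
    (hvc : ∀ t ∈ s, Continuous (v t)) (hvt : ContinuousOn ↿vt (s ×ˢ univ))
    (hh : ContinuousOn ↿h (s ×ˢ univ))
    (hQ : ∀ t ∈ s, Q t - Q t₀ = ∫ x in a..b, (v t x - v t₀ x) * h t x) :
    HasDerivAt Q (∫ x in a..b, vt t₀ x * h t₀ x) t₀ := by
  rw [hasDerivAt_iff_tendsto_slope]
  refine (tendsto_integral_slope_mul hs hv hvc hvt hh).congr' ?_
  filter_upwards [mem_nhdsWithin_of_mem_nhds hs] with t ht
  rw [slope_def_field, hQ t ht, ← intervalIntegral.integral_div]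
  exact integral_congr fun x _ => by simp only [slope_def_field]; ring

noncomputable def intervalPairing (a b : ℝ) : LinearMap.BilinForm ℝ C(ℝ, ℝ) :=
  LinearMap.mk₂ ℝ (fun f g => ∫ x in a..b, f x * g x)
    (fun f₁ f₂ g => by
      simp only [ContinuousMap.add_apply, add_mul]
      exact integral_add ((f₁.continuous.mul g.continuous).intervalIntegrable _ _)
        ((f₂.continuous.mul g.continuous).intervalIntegrable _ _))
    (fun r f g => by
      simp only [ContinuousMap.smul_apply, smul_eq_mul, mul_assoc,
        intervalIntegral.integral_const_mul])
    (fun f g₁ g₂ => by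
      simp only [ContinuousMap.add_apply, mul_add]
      exact integral_add ((f.continuous.mul g₁.continuous).intervalIntegrable _ _)
        ((f.continuous.mul g₂.continuous).intervalIntegrable _ _))
    (fun r f g => by
      simp only [ContinuousMap.smul_apply, smul_eq_mul, mul_left_comm _ r,
        intervalIntegral.integral_const_mul])

@[simp]
theorem intervalPairing_apply (a b : ℝ) (f g : C(ℝ, ℝ)) :
    intervalPairing a b f g = ∫ x in a..b, f x * g x := rfl

theorem intervalPairing_comm (a b : ℝ) (f g : C(ℝ, ℝ)) :
    intervalPairing a b f g = intervalPairing a b g f := by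
  simp only [intervalPairing_apply, mul_comm]

theorem intervalPairing_self_nonneg {a b : ℝ} (hab : a ≤ b) (f : C(ℝ, ℝ)) :
    0 ≤ intervalPairing a b f f :=
  integral_nonneg hab fun x _ => mul_self_nonneg (f x)

namespace LinearMap.BilinForm

variable {V : Type*} [AddCommGroup V] [Module ℝ V] (B : LinearMap.BilinForm ℝ V)

theorem neg_add_le_two_mul (hpos : ∀ v, 0 ≤ B v v) (hsymm : ∀ v w, B v w = B w v) (v w : V) :
    -(B v v + B w w) ≤ 2 * B v w := by
  have := hpos (v + w)
  simp only [map_add, LinearMap.add_apply, hsymm w v] at this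
  linarith

/-- With `w' = v` and `a = Δw`, the left side is half the numerator of the derivative of the
frequency `-B w a / B w w`. -/
theorem frequency_numerator_le (hpos : ∀ v, 0 ≤ B v v) (hsymm : ∀ v w, B v w = B w v) {w : V}
    (hw : 0 < B w w) (a v : V) :
    B w a * B w v - B v a * B w w ≤ B (v - a) (v - a) * B w w / 4 := by
  -- `B u u = 4 B w w (rhs - lhs)` for this `u`
  have key := hpos (B w w • (v + a) - (2 * B w a) • w)
  simp only [map_add, map_sub, map_smul, LinearMap.add_apply, LinearMap.sub_apply,
    LinearMap.smul_apply, smul_eq_mul, hsymm a v, hsymm w v, hsymm a w] at key ⊢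
  by_contra! h
  nlinarith [mul_pos hw (sub_pos.2 h)]

end LinearMap.BilinForm

theorem pos_of_forall_Ico_pos_imp {E : ℝ → ℝ} {a b : ℝ} (hab : a ≤ b)
    (hE : ContinuousOn E (Icc a b)) (ha : 0 < E a)
    (hstep : ∀ c ∈ Ioc a b, (∀ s ∈ Ico a c, 0 < E s) → 0 < E c) : 0 < E b := by
  by_contra! hb
  set S := Icc a b ∩ E ⁻¹' Iic 0
  have hSbdd : BddBelow S := ⟨a, fun s hs => hs.1.1⟩
  have hc : sInf S ∈ S := (hE.preimage_isClosed_of_isClosed isClosed_Icc isClosed_Iic).csInf_mem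
    ⟨b, ⟨hab, le_rfl⟩, hb⟩ hSbdd
  have hac : a < sInf S := hc.1.1.lt_of_ne fun h => (h ▸ ha).not_ge hc.2
  refine (hstep _ ⟨hac, hc.1.2⟩ fun s hs => ?_).not_ge hc.2
  by_contra! hs'
  exact hs.2.not_ge (csInf_le hSbdd ⟨⟨hs.1, hs.2.le.trans hc.1.2⟩, hs'⟩)

theorem one_add_div_le_mul_exp_of_hasDerivAt {E D E' D' : ℝ → ℝ} {a b C : ℝ} (hab : a ≤ b)
    (hEpos : ∀ t ∈ Icc a b, 0 < E t) (hE' : ∀ t ∈ Icc a b, HasDerivAt E (E' t) t)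
    (hD' : ∀ t ∈ Icc a b, HasDerivAt D (D' t) t)
    (hN : ∀ t ∈ Icc a b, D' t * E t - D t * E' t ≤ C * (E t + D t) * E t) :
    1 + D b / E b ≤ (1 + D a / E a) * exp (C * (b - a)) := by
  have hderiv : ∀ t ∈ Icc a b, HasDerivAt (fun s => 1 + D s / E s)
      ((D' t * E t - D t * E' t) / E t ^ 2) t := fun t ht =>
    ((hD' t ht).div (hE' t ht) (hEpos t ht).ne').const_add 1
  have hbound : ∀ t ∈ Ico a b,
      (D' t * E t - D t * E' t) / E t ^ 2 ≤ C * (1 + D t / E t) + 0 := by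
    intro t ht
    have hE := hEpos t (Ico_subset_Icc_self ht)
    rw [div_le_iff₀ (by positivity)]
    calc D' t * E t - D t * E' t ≤ C * (E t + D t) * E t := hN t (Ico_subset_Icc_self ht)
      _ = (C * (1 + D t / E t) + 0) * E t ^ 2 := by field_simp; ring
  have := le_gronwallBound_of_liminf_deriv_right_le
    (fun t ht => (hderiv t ht).continuousAt.continuousWithinAt)
    (fun t ht _ hr =>
      (hderiv t (Ico_subset_Icc_self ht)).hasDerivWithinAt.liminf_right_slope_le hr)
    le_rfl hbound b ⟨hab, le_rfl⟩
  rwa [gronwallBound_ε0] at this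

theorem pos_of_hasDerivAt_of_frequency_bound {E D E' D' : ℝ → ℝ} {a b C : ℝ} (hab : a < b)
    (hC : 0 ≤ C) (hE : ContinuousOn E (Icc a b)) (hEpos : ∀ t ∈ Ico a b, 0 < E t)
    (hD : ∀ t ∈ Ico a b, 0 ≤ D t) (hE' : ∀ t ∈ Ico a b, HasDerivAt E (E' t) t)
    (hD' : ∀ t ∈ Ico a b, HasDerivAt D (D' t) t)
    (hN : ∀ t ∈ Ico a b, D' t * E t - D t * E' t ≤ C * (E t + D t) * E t)
    (hE'_ge : ∀ t ∈ Ico a b, -C * (E t + D t) ≤ E' t) : 0 < E b := by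
  set M := (1 + D a / E a) * exp (C * (b - a))
  have hM : ∀ t ∈ Ico a b, 1 + D t / E t ≤ M := by
    intro t ht
    have hsub : Icc a t ⊆ Ico a b := Icc_subset_Ico_right ht.2
    have hDa : 0 ≤ D a / E a := div_nonneg (hD a ⟨le_rfl, hab⟩) (hEpos a ⟨le_rfl, hab⟩).le
    calc 1 + D t / E t ≤ (1 + D a / E a) * exp (C * (t - a)) :=
          one_add_div_le_mul_exp_of_hasDerivAt ht.1 (fun s hs => hEpos s (hsub hs))
            (fun s hs => hE' s (hsub hs)) (fun s hs => hD' s (hsub hs))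
            (fun s hs => hN s (hsub hs))
      _ ≤ (1 + D a / E a) * exp (C * (b - a)) := by gcongr; exact ht.2.le
  have hbound : ∀ t ∈ Ico a b, -E' t ≤ -(C * M) * -E t + 0 := by
    intro t ht
    have hE := hEpos t ht
    have : E t + D t = E t * (1 + D t / E t) := by field_simp
    nlinarith [hE'_ge t ht, mul_le_mul_of_nonneg_left (hM t ht) (mul_nonneg hC hE.le)]
  have := le_gronwallBound_of_liminf_deriv_right_le hE.neg
    (fun t ht _ hr => (hE' t ht).neg.hasDerivWithinAt.liminf_right_slope_le hr)
    le_rfl hbound b ⟨hab.le, le_rfl⟩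
  rw [gronwallBound_ε0, Pi.neg_apply, Pi.neg_apply] at this
  nlinarith [hEpos a ⟨le_rfl, hab⟩, exp_pos (-(C * M) * (b - a))]

structure PeriodicParabolicIneq (c T L : ℝ) (w wt wx wxx : ℝ → ℝ → ℝ) : Prop where
  periodic : ∀ t ∈ Icc 0 T, Periodic (w t) c
  continuousOn : ContinuousOn ↿w (Icc 0 T ×ˢ univ)
  continuousOn_t : ContinuousOn ↿wt (Ioo 0 T ×ˢ univ)
  continuousOn_xx : ContinuousOn ↿wxx (Ioo 0 T ×ˢ univ)
  hasDerivAt_t : ∀ t ∈ Ioo 0 T, ∀ x, HasDerivAt (w · x) (wt t x) t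
  hasDerivAt_x : ∀ t ∈ Ioo 0 T, ∀ x, HasDerivAt (w t) (wx t x) x
  hasDerivAt_xx : ∀ t ∈ Ioo 0 T, ∀ x, HasDerivAt (wx t) (wxx t x) x
  abs_sub_le : ∀ t ∈ Ioo 0 T, ∀ x, |wt t x - wxx t x| ≤ L * (|w t x| + |wx t x|)

namespace PeriodicParabolicIneq

variable {c T L : ℝ} {w wt wx wxx : ℝ → ℝ → ℝ}

theorem continuous (hw : PeriodicParabolicIneq c T L w wt wx wxx) {t : ℝ}
    (ht : t ∈ Icc 0 T) : Continuous (w t) :=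
  continuous_of_continuousOn_prod_univ hw.continuousOn ht

theorem continuous_t (hw : PeriodicParabolicIneq c T L w wt wx wxx) {t : ℝ}
    (ht : t ∈ Ioo 0 T) : Continuous (wt t) :=
  continuous_of_continuousOn_prod_univ hw.continuousOn_t ht

theorem continuous_xx (hw : PeriodicParabolicIneq c T L w wt wx wxx) {t : ℝ}
    (ht : t ∈ Ioo 0 T) : Continuous (wxx t) :=
  continuous_of_continuousOn_prod_univ hw.continuousOn_xx ht

theorem continuous_x (hw : PeriodicParabolicIneq c T L w wt wx wxx) {t : ℝ}
    (ht : t ∈ Ioo 0 T) : Continuous (wx t) :=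
  continuous_iff_continuousAt.2 fun x => (hw.hasDerivAt_xx t ht x).continuousAt

theorem periodic_x (hw : PeriodicParabolicIneq c T L w wt wx wxx) {t : ℝ}
    (ht : t ∈ Ioo 0 T) : Periodic (wx t) c :=
  (hw.periodic t (Ioo_subset_Icc_self ht)).periodic_of_hasDerivAt (hw.hasDerivAt_x t ht)

theorem integral_mul_xx (hw : PeriodicParabolicIneq c T L w wt wx wxx) {t : ℝ}
    (ht : t ∈ Ioo 0 T) : ∫ x in 0..c, w t x * wxx t x = -∫ x in 0..c, wx t x ^ 2 := by
  rw [integral_mul_deriv_eq_neg_integral_deriv_mul (fun x _ => hw.hasDerivAt_x t ht x)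
    (fun x _ => hw.hasDerivAt_xx t ht x) ((hw.continuous_x ht).intervalIntegrable _ _)
    ((hw.continuous_xx ht).intervalIntegrable _ _)
    (by rw [(hw.periodic t (Ioo_subset_Icc_self ht)).eq, (hw.periodic_x ht).eq])]
  simp only [sq]

theorem hasDerivAt_energy (hw : PeriodicParabolicIneq c T L w wt wx wxx) {t₀ : ℝ}
    (ht₀ : t₀ ∈ Ioo 0 T) :
    HasDerivAt (fun t => ∫ x in 0..c, w t x ^ 2) (2 * ∫ x in 0..c, w t₀ x * wt t₀ x) t₀ := by
  have hw₀ := hw.continuous (Ioo_subset_Icc_self ht₀)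
  have key := hasDerivAt_of_sub_eq_integral_mul (h := fun t x => w t x + w t₀ x)
    (Ioo_mem_nhds ht₀.1 ht₀.2) hw.hasDerivAt_t
    (fun t ht => hw.continuous (Ioo_subset_Icc_self ht)) hw.continuousOn_t
    ((hw.continuousOn.mono (prod_mono Ioo_subset_Icc_self subset_rfl)).add
      (hw₀.comp continuous_snd).continuousOn)
    (fun t ht => integral_sq_sub_integral_sq (hw.continuous (Ioo_subset_Icc_self ht)) hw₀ 0 c)
  convert key using 1
  rw [← intervalIntegral.integral_const_mul]
  exact integral_congr fun x _ => by ring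

/-- `∂ₜ wₓ` need not exist: the increment of `∫ wₓ²` is integrated by parts into
`-∫ (w t - w t₀) (wₓₓ t + wₓₓ t₀)`, which involves only `w` itself in the time difference. -/
theorem hasDerivAt_dirichlet (hw : PeriodicParabolicIneq c T L w wt wx wxx) {t₀ : ℝ}
    (ht₀ : t₀ ∈ Ioo 0 T) :
    HasDerivAt (fun t => ∫ x in 0..c, wx t x ^ 2) (-2 * ∫ x in 0..c, wt t₀ x * wxx t₀ x) t₀ := by
  have key := hasDerivAt_of_sub_eq_integral_mul (h := fun t x => -(wxx t x + wxx t₀ x))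
    (Ioo_mem_nhds ht₀.1 ht₀.2) hw.hasDerivAt_t
    (fun t ht => hw.continuous (Ioo_subset_Icc_self ht)) hw.continuousOn_t
    (hw.continuousOn_xx.add ((hw.continuous_xx ht₀).comp continuous_snd).continuousOn).neg
    (fun t ht => by
      calc (∫ x in 0..c, wx t x ^ 2) - ∫ x in 0..c, wx t₀ x ^ 2
          = ∫ x in 0..c, (wx t x - wx t₀ x) * (wx t x + wx t₀ x) :=
            integral_sq_sub_integral_sq (hw.continuous_x ht) (hw.continuous_x ht₀) 0 c
        _ = -∫ x in 0..c, (w t x - w t₀ x) * (wxx t x + wxx t₀ x) := by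
            rw [integral_mul_deriv_eq_neg_integral_deriv_mul (f := fun x => w t x - w t₀ x)
              (g := fun x => wx t x + wx t₀ x)
              (fun x _ => (hw.hasDerivAt_x t ht x).sub (hw.hasDerivAt_x t₀ ht₀ x))
              (fun x _ => (hw.hasDerivAt_xx t ht x).add (hw.hasDerivAt_xx t₀ ht₀ x))
              (((hw.continuous_x ht).sub (hw.continuous_x ht₀)).intervalIntegrable _ _)
              (((hw.continuous_xx ht).add (hw.continuous_xx ht₀)).intervalIntegrable _ _)
              (by rw [(hw.periodic t (Ioo_subset_Icc_self ht)).eq,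
                (hw.periodic t₀ (Ioo_subset_Icc_self ht₀)).eq, (hw.periodic_x ht).eq,
                (hw.periodic_x ht₀).eq]), neg_neg]
        _ = ∫ x in 0..c, (w t x - w t₀ x) * -(wxx t x + wxx t₀ x) := by
            rw [← intervalIntegral.integral_neg]
            exact integral_congr fun x _ => by ring)
  convert key using 1
  rw [← intervalIntegral.integral_const_mul]
  exact integral_congr fun x _ => by ring

theorem integral_sq_sub_le (hw : PeriodicParabolicIneq c T L w wt wx wxx) (hc : 0 ≤ c) {t : ℝ}
    (ht : t ∈ Ioo 0 T) : ∫ x in 0..c, (wt t x - wxx t x) ^ 2 ≤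
      2 * L ^ 2 * ((∫ x in 0..c, w t x ^ 2) + ∫ x in 0..c, wx t x ^ 2) := by
  have hw_t := hw.continuous (Ioo_subset_Icc_self ht)
  have hwx_t := hw.continuous_x ht
  rw [← intervalIntegral.integral_add (f := fun x => w t x ^ 2) (g := fun x => wx t x ^ 2)
    ((hw_t.pow 2).intervalIntegrable _ _) ((hwx_t.pow 2).intervalIntegrable _ _),
    ← intervalIntegral.integral_const_mul]
  refine integral_mono_on hc
    ((((hw.continuous_t ht).sub (hw.continuous_xx ht)).pow 2).intervalIntegrable _ _)
    ((by fun_prop : Continuous fun x => 2 * L ^ 2 * (w t x ^ 2 + wx t x ^ 2)).intervalIntegrable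
      _ _) fun x _ => ?_
  calc (wt t x - wxx t x) ^ 2 ≤ (L * (|w t x| + |wx t x|)) ^ 2 := by
        rw [← sq_abs]
        exact pow_le_pow_left₀ (abs_nonneg _) (hw.abs_sub_le t ht x) 2
    _ ≤ 2 * L ^ 2 * (w t x ^ 2 + wx t x ^ 2) := by
        nlinarith [sq_abs (w t x), sq_abs (wx t x), sq_nonneg (|w t x| - |wx t x|),
          sq_nonneg L]

theorem frequency_numerator_le (hw : PeriodicParabolicIneq c T L w wt wx wxx)
    (hc : 0 ≤ c) {t : ℝ} (ht : t ∈ Ioo 0 T) (hE : 0 < ∫ x in 0..c, w t x ^ 2) :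
    (-2 * ∫ x in 0..c, wt t x * wxx t x) * (∫ x in 0..c, w t x ^ 2) -
        (∫ x in 0..c, wx t x ^ 2) * (2 * ∫ x in 0..c, w t x * wt t x) ≤
      (2 + 2 * L ^ 2) * ((∫ x in 0..c, w t x ^ 2) + ∫ x in 0..c, wx t x ^ 2) *
        ∫ x in 0..c, w t x ^ 2 := by
  let W : C(ℝ, ℝ) := ⟨w t, hw.continuous (Ioo_subset_Icc_self ht)⟩
  let Wt : C(ℝ, ℝ) := ⟨wt t, hw.continuous_t ht⟩
  let Wxx : C(ℝ, ℝ) := ⟨wxx t, hw.continuous_xx ht⟩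
  have key := (intervalPairing 0 c).frequency_numerator_le (intervalPairing_self_nonneg hc)
    (intervalPairing_comm 0 c) (w := W) (by simpa [W, sq] using hE) Wxx Wt
  simp only [intervalPairing_apply, ContinuousMap.sub_apply, ContinuousMap.coe_mk, W, Wt, Wxx,
    ← sq, hw.integral_mul_xx ht] at key
  have hγ := mul_le_mul_of_nonneg_right (hw.integral_sq_sub_le hc ht) hE.le
  have hD : 0 ≤ ∫ x in 0..c, wx t x ^ 2 := integral_nonneg hc fun x _ => sq_nonneg _
  nlinarith [mul_nonneg (add_nonneg hE.le hD) hE.le]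

theorem neg_le_energy_deriv (hw : PeriodicParabolicIneq c T L w wt wx wxx) (hc : 0 ≤ c) {t : ℝ}
    (ht : t ∈ Ioo 0 T) :
    -(2 + 2 * L ^ 2) * ((∫ x in 0..c, w t x ^ 2) + ∫ x in 0..c, wx t x ^ 2) ≤
      2 * ∫ x in 0..c, w t x * wt t x := by
  let W : C(ℝ, ℝ) := ⟨w t, hw.continuous (Ioo_subset_Icc_self ht)⟩
  let Wt : C(ℝ, ℝ) := ⟨wt t, hw.continuous_t ht⟩
  let Wxx : C(ℝ, ℝ) := ⟨wxx t, hw.continuous_xx ht⟩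
  have key := (intervalPairing 0 c).neg_add_le_two_mul (intervalPairing_self_nonneg hc)
    (intervalPairing_comm 0 c) W (Wt - Wxx)
  rw [map_sub (intervalPairing 0 c W)] at key
  simp only [intervalPairing_apply, ContinuousMap.sub_apply, ContinuousMap.coe_mk, W, Wt, Wxx,
    ← sq, hw.integral_mul_xx ht] at key
  have hγ := hw.integral_sq_sub_le hc ht
  have hE : 0 ≤ ∫ x in 0..c, w t x ^ 2 := integral_nonneg hc fun x _ => sq_nonneg _
  have hD : 0 ≤ ∫ x in 0..c, wx t x ^ 2 := integral_nonneg hc fun x _ => sq_nonneg _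
  nlinarith

theorem energy_eq_zero (hw : PeriodicParabolicIneq c T L w wt wx wxx) (hc : 0 ≤ c) (hT : 0 < T)
    (hwT : ∫ x in 0..c, w T x ^ 2 = 0) : ∀ t ∈ Icc 0 T, ∫ x in 0..c, w t x ^ 2 = 0 := by
  have hEc : ContinuousOn (fun t => ∫ x in 0..c, w t x ^ 2) (Icc 0 T) :=
    continuousOn_intervalIntegral_of_continuousOn_prod_univ (hw.continuousOn.pow 2) 0 c
  have hE : ∀ t, 0 ≤ ∫ x in 0..c, w t x ^ 2 := fun t => integral_nonneg hc fun x _ => sq_nonneg _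
  have hIoo : EqOn (fun t => ∫ x in 0..c, w t x ^ 2) 0 (Ioo 0 T) := by
    intro t₀ ht₀
    by_contra hne
    refine (pos_of_forall_Ico_pos_imp ht₀.2.le (hEc.mono (Icc_subset_Icc_left ht₀.1.le))
      ((hE t₀).lt_of_ne' hne) fun b hb hEb => ?_).ne' hwT
    have hIco : Ico t₀ b ⊆ Ioo 0 T := fun s hs => ⟨ht₀.1.trans_le hs.1, hs.2.trans_le hb.2⟩
    exact pos_of_hasDerivAt_of_frequency_bound (E := fun t => ∫ x in 0..c, w t x ^ 2)
      (D := fun t => ∫ x in 0..c, wx t x ^ 2) hb.1 (by positivity)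
      (hEc.mono (Icc_subset_Icc ht₀.1.le hb.2)) hEb
      (fun s _ => integral_nonneg hc fun x _ => sq_nonneg _)
      (fun s hs => hw.hasDerivAt_energy (hIco hs))
      (fun s hs => hw.hasDerivAt_dirichlet (hIco hs))
      (fun s hs => hw.frequency_numerator_le hc (hIco hs) (hEb s hs))
      (fun s hs => hw.neg_le_energy_deriv hc (hIco hs))
  exact hIoo.of_subset_closure hEc continuousOn_const Ioo_subset_Icc_self
    (closure_Ioo hT.ne).ge

theorem eq_zero (hw : PeriodicParabolicIneq c T L w wt wx wxx) (hc : 0 < c) (hT : 0 < T)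
    (hwT : ∀ x, w T x = 0) : ∀ t ∈ Icc 0 T, ∀ x, w t x = 0 := by
  have hE := hw.energy_eq_zero hc.le hT (by simp [hwT])
  intro t ht x
  have hper : Periodic (fun x => w t x ^ 2) c := (hw.periodic t ht).comp (· ^ 2)
  have h := hper.eq_zero_of_integral_eq_zero hc ((hw.continuous ht).pow 2)
    (fun x => sq_nonneg (w t x)) (hE t ht)
  exact pow_eq_zero_iff two_ne_zero |>.1 (congrFun h x)

end PeriodicParabolicIneq

structure IsPeriodicSolution (f : ℝ → ℝ → ℝ → ℝ) (c T : ℝ) (u ut ux uxx : ℝ → ℝ → ℝ) :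
    Prop where
  periodic : ∀ t x : ℝ, t ∈ Icc 0 T → u t (x + c) = u t x
  continuousOn : ContinuousOn ↿u (Icc 0 T ×ˢ univ)
  continuousOn_x : ContinuousOn ↿ux (Icc 0 T ×ˢ univ)
  hasDerivAt_x : ∀ t x : ℝ, t ∈ Icc 0 T → HasDerivAt (u t) (ux t x) x
  hasDerivWithinAt_t : ∀ t x : ℝ, t ∈ Ioc 0 T → HasDerivWithinAt (u · x) (ut t x) (Icc 0 T) t
  hasDerivAt_xx : ∀ t x : ℝ, t ∈ Ioc 0 T → HasDerivAt (ux t) (uxx t x) x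
  continuousOn_t : ContinuousOn ↿ut (Ioc 0 T ×ˢ univ)
  continuousOn_xx : ContinuousOn ↿uxx (Ioc 0 T ×ˢ univ)
  eq : ∀ t x : ℝ, t ∈ Ioc 0 T → ut t x = uxx t x + f t (u t x) (ux t x)

namespace IsPeriodicSolution

variable {f : ℝ → ℝ → ℝ → ℝ} {c T : ℝ}

theorem exists_bound {u ut ux uxx : ℝ → ℝ → ℝ} (hu : IsPeriodicSolution f c T u ut ux uxx)
    (hc : 0 < c) : ∃ M, ∀ t ∈ Icc 0 T, ∀ x, |u t x| ≤ M ∧ |ux t x| ≤ M := by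
  have hper : ∀ t ∈ Icc 0 T, Periodic (u t) c := fun t ht x => hu.periodic t x ht
  obtain ⟨M₁, hM₁⟩ :=
    exists_abs_le_of_continuousOn_of_periodic hc isCompact_Icc hu.continuousOn hper
  obtain ⟨M₂, hM₂⟩ := exists_abs_le_of_continuousOn_of_periodic hc isCompact_Icc
    hu.continuousOn_x fun t ht => (hper t ht).periodic_of_hasDerivAt (hu.hasDerivAt_x t · ht)
  exact ⟨max M₁ M₂, fun t ht x =>
    ⟨(hM₁ t ht x).trans (le_max_left _ _), (hM₂ t ht x).trans (le_max_right _ _)⟩⟩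

theorem exists_periodicParabolicIneq_sub {u₁ u₁t u₁x u₁xx u₂ u₂t u₂x u₂xx : ℝ → ℝ → ℝ}
    (hu₁ : IsPeriodicSolution f c T u₁ u₁t u₁x u₁xx)
    (hu₂ : IsPeriodicSolution f c T u₂ u₂t u₂x u₂xx)
    (hf : ContDiff ℝ 1 fun p : ℝ × ℝ × ℝ => f p.1 p.2.1 p.2.2) (hc : 0 < c) :
    ∃ L, PeriodicParabolicIneq c T L (fun t x => u₁ t x - u₂ t x)
      (fun t x => u₁t t x - u₂t t x) (fun t x => u₁x t x - u₂x t x)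
      (fun t x => u₁xx t x - u₂xx t x) := by
  obtain ⟨M₁, hM₁⟩ := hu₁.exists_bound hc
  obtain ⟨M₂, hM₂⟩ := hu₂.exists_bound hc
  obtain ⟨L, hL⟩ := exists_abs_sub_le_of_contDiff hf (isCompact_Icc (a := 0) (b := T)) (max M₁ M₂)
  have hIoo : Ioo 0 T ⊆ Ioc 0 T := Ioo_subset_Ioc_self
  refine ⟨L,
    { periodic := fun t ht x => by simp only [hu₁.periodic t x ht, hu₂.periodic t x ht]
      continuousOn := hu₁.continuousOn.sub hu₂.continuousOn
      continuousOn_t :=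
        (hu₁.continuousOn_t.sub hu₂.continuousOn_t).mono (prod_mono hIoo subset_rfl)
      continuousOn_xx :=
        (hu₁.continuousOn_xx.sub hu₂.continuousOn_xx).mono (prod_mono hIoo subset_rfl)
      hasDerivAt_t := fun t ht x => ?_
      hasDerivAt_x := fun t ht x => (hu₁.hasDerivAt_x t x (Ioo_subset_Icc_self ht)).sub
        (hu₂.hasDerivAt_x t x (Ioo_subset_Icc_self ht))
      hasDerivAt_xx := fun t ht x =>
        (hu₁.hasDerivAt_xx t x (hIoo ht)).sub (hu₂.hasDerivAt_xx t x (hIoo ht))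
      abs_sub_le := fun t ht x => ?_ }⟩
  · have hnhds : Icc 0 T ∈ 𝓝 t := Icc_mem_nhds ht.1 ht.2
    exact ((hu₁.hasDerivWithinAt_t t x (hIoo ht)).hasDerivAt hnhds).sub
      ((hu₂.hasDerivWithinAt_t t x (hIoo ht)).hasDerivAt hnhds)
  · have htI := Ioo_subset_Icc_self ht
    rw [show u₁t t x - u₂t t x - (u₁xx t x - u₂xx t x) =
        f t (u₁ t x) (u₁x t x) - f t (u₂ t x) (u₂x t x) by
      rw [hu₁.eq t x (hIoo ht), hu₂.eq t x (hIoo ht)]; ring]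
    exact hL t htI _ _ _ _ ((hM₁ t htI x).1.trans (le_max_left _ _))
      ((hM₁ t htI x).2.trans (le_max_left _ _)) ((hM₂ t htI x).1.trans (le_max_right _ _))
      ((hM₂ t htI x).2.trans (le_max_right _ _))

end IsPeriodicSolution

/-- Backward uniqueness for the semilinear parabolic equation `u_t = u_xx + f(t,u,u_x)`
on the circle `S¹ = ℝ/2πℤ`: two classical solutions on `[0,T]` that agree at time `T`
agree on all of `[0,T]`.  This underlies the injectivity of the time-`T` Poincaré map. -/
theorem backward_uniqueness_semilinear
    (f : ℝ → ℝ → ℝ → ℝ)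
    (hf : ContDiff ℝ 2 fun p : ℝ × ℝ × ℝ => f p.1 p.2.1 p.2.2)
    (T : ℝ) (hT : 0 < T)
    (u₁ u₂ u₁t u₂t u₁x u₂x u₁xx u₂xx : ℝ → ℝ → ℝ)
    -- `u₁`, `u₂` are `2π`-periodic in `x`
    (hu₁P : ∀ t x : ℝ, t ∈ Set.Icc 0 T → u₁ t (x + 2 * π) = u₁ t x)
    (hu₂P : ∀ t x : ℝ, t ∈ Set.Icc 0 T → u₂ t (x + 2 * π) = u₂ t x)
    -- `uᵢ` and `∂ₓ uᵢ` are continuous on `[0,T] × ℝ`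
    (hu₁C : ContinuousOn (fun p : ℝ × ℝ => u₁ p.1 p.2) (Set.Icc 0 T ×ˢ Set.univ))
    (hu₂C : ContinuousOn (fun p : ℝ × ℝ => u₂ p.1 p.2) (Set.Icc 0 T ×ˢ Set.univ))
    (hu₁xC : ContinuousOn (fun p : ℝ × ℝ => u₁x p.1 p.2) (Set.Icc 0 T ×ˢ Set.univ))
    (hu₂xC : ContinuousOn (fun p : ℝ × ℝ => u₂x p.1 p.2) (Set.Icc 0 T ×ˢ Set.univ))
    -- the spatial derivatives exist on `[0,T] × ℝ`
    (hu₁x : ∀ t x : ℝ, t ∈ Set.Icc 0 T → HasDerivAt (fun y => u₁ t y) (u₁x t x) x)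
    (hu₂x : ∀ t x : ℝ, t ∈ Set.Icc 0 T → HasDerivAt (fun y => u₂ t y) (u₂x t x) x)
    -- the derivatives `∂ₜ uᵢ`, `∂ₓₓ uᵢ` exist on `(0,T] × ℝ`
    (hu₁t : ∀ t x : ℝ, t ∈ Set.Ioc 0 T →
      HasDerivWithinAt (fun s => u₁ s x) (u₁t t x) (Set.Icc 0 T) t)
    (hu₂t : ∀ t x : ℝ, t ∈ Set.Ioc 0 T →
      HasDerivWithinAt (fun s => u₂ s x) (u₂t t x) (Set.Icc 0 T) t)
    (hu₁xx : ∀ t x : ℝ, t ∈ Set.Ioc 0 T → HasDerivAt (fun y => u₁x t y) (u₁xx t x) x)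
    (hu₂xx : ∀ t x : ℝ, t ∈ Set.Ioc 0 T → HasDerivAt (fun y => u₂x t y) (u₂xx t x) x)
    -- and are continuous on `(0,T] × ℝ`
    (hu₁tC : ContinuousOn (fun p : ℝ × ℝ => u₁t p.1 p.2) (Set.Ioc 0 T ×ˢ Set.univ))
    (hu₂tC : ContinuousOn (fun p : ℝ × ℝ => u₂t p.1 p.2) (Set.Ioc 0 T ×ˢ Set.univ))
    (hu₁xxC : ContinuousOn (fun p : ℝ × ℝ => u₁xx p.1 p.2) (Set.Ioc 0 T ×ˢ Set.univ))
    (hu₂xxC : ContinuousOn (fun p : ℝ × ℝ => u₂xx p.1 p.2) (Set.Ioc 0 T ×ˢ Set.univ))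
    -- the equation holds on `(0,T] × ℝ`
    (heq₁ : ∀ t x : ℝ, t ∈ Set.Ioc 0 T → u₁t t x = u₁xx t x + f t (u₁ t x) (u₁x t x))
    (heq₂ : ∀ t x : ℝ, t ∈ Set.Ioc 0 T → u₂t t x = u₂xx t x + f t (u₂ t x) (u₂x t x))
    -- the solutions coincide at time `T`
    (hend : ∀ x : ℝ, u₁ T x = u₂ T x) :
    ∀ t x : ℝ, t ∈ Set.Icc 0 T → u₁ t x = u₂ t x := by
  have hu₁ : IsPeriodicSolution f (2 * π) T u₁ u₁t u₁x u₁xx :=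
    ⟨hu₁P, hu₁C, hu₁xC, hu₁x, hu₁t, hu₁xx, hu₁tC, hu₁xxC, heq₁⟩
  have hu₂ : IsPeriodicSolution f (2 * π) T u₂ u₂t u₂x u₂xx :=
    ⟨hu₂P, hu₂C, hu₂xC, hu₂x, hu₂t, hu₂xx, hu₂tC, hu₂xxC, heq₂⟩
  obtain ⟨L, hw⟩ := hu₁.exists_periodicParabolicIneq_sub hu₂ (hf.of_le one_le_two) two_pi_pos
  intro t x ht
  exact sub_eq_zero.1 (hw.eq_zero two_pi_pos hT (fun x => sub_eq_zero.2 (hend x)) t ht x)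
end

section
/- Let T > 0 and let c, d : [0,T] × ℝ → ℝ be bounded continuous functions that are 2π-periodic in their second argument. Let w : [0,T] × ℝ → ℝ be 2π-periodic in x, with w and ∂_x w continuous on [0,T] × ℝ and ∂_t w, ∂_xx w continuous on (0,T] × ℝ, and suppose w satisfies the linear parabolic equation w_t = w_xx + c(t,x)·w_x + d(t,x)·w on (0,T] × ℝ. If w(T,·) is identically zero, then w is identically zero on [0,T] × ℝ. (This is the backward uniqueness underlying the injectivity of the derivative of the Poincaré map.) -/
/-!
Let `H(t) = ∫ w²` and `D(t) = ∫ w_x²` over a period, and `g = c w_x + d w`. Integrating by parts,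
`H' = -2D + 2∫ w g` and `D' = -2∫ w_xx (w_xx + g)`. While `H > 0`, Cauchy–Schwarz bounds the
frequency `N = D / H` by `N' ≤ K (N + 1)`, so `N` stays bounded on bounded time intervals, and then
`H' ≥ -C H`. Hence an energy that is positive at some time stays positive up to time `T`. Since
`H(T) = 0`, `w` vanishes on `(0, T)`, and at `t = 0` by continuity.
-/

open Real Set Filter Topology MeasureTheory intervalIntegral Function
open scoped Interval

theorem Function.Periodic.periodic_of_hasDerivAt_s3 {f f' : ℝ → ℝ} {c : ℝ} (hf : Periodic f c)
    (hf' : ∀ x, HasDerivAt f (f' x) x) : Periodic f' c := fun x => by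
  have h := (hf' (x + c)).comp_add_const x c
  rw [hf.funext] at h
  exact h.unique (hf' x)

theorem integral_mul_deriv_eq_neg_of_periodic {u v u' v' : ℝ → ℝ} {L : ℝ} (hu : Periodic u L)
    (hv : Periodic v L) (hu' : ∀ x, HasDerivAt u (u' x) x) (hv' : ∀ x, HasDerivAt v (v' x) x)
    (hu'i : IntervalIntegrable u' volume 0 L) (hv'i : IntervalIntegrable v' volume 0 L) :
    ∫ x in 0..L, u x * v' x = -∫ x in 0..L, u' x * v x := by
  rw [integral_mul_deriv_eq_deriv_mul (fun x _ => hu' x) (fun x _ => hv' x) hu'i hv'i, hu.eq,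
    hv.eq]
  ring

theorem Function.Periodic.eq_zero_of_integral_sq_eq_zero {u : ℝ → ℝ} {L : ℝ} (hL : 0 < L)
    (hper : Periodic u L) (hu : Continuous u) (h : ∫ x in 0..L, u x ^ 2 = 0) : u = 0 := by
  have hIcc : ∀ y ∈ Icc 0 L, u y = 0 := by
    by_contra! ⟨y, hy, hne⟩
    exact (integral_pos hL (hu.pow 2).continuousOn (fun x _ => sq_nonneg _)
      ⟨y, hy, sq_pos_of_ne_zero hne⟩).ne' h
  funext x
  obtain ⟨y, hy, hxy⟩ := hper.exists_mem_Ico₀ hL x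
  exact hxy.trans (hIcc y (Ico_subset_Icc_self hy))

theorem sum_mul_integral_mul_nonneg {ι : Type*} (s : Finset ι) (a : ι → ℝ) {f : ι → ℝ → ℝ}
    (hf : ∀ i ∈ s, Continuous (f i)) {lo hi : ℝ} (h : lo ≤ hi) :
    0 ≤ ∑ i ∈ s, ∑ j ∈ s, a i * a j * ∫ x in lo..hi, f i x * f j x := by
  have hint : ∀ i ∈ s, ∀ j ∈ s, Continuous fun x => a i * a j * (f i x * f j x) :=
    fun i hi j hj => continuous_const.mul ((hf i hi).mul (hf j hj))
  calc (0 : ℝ) ≤ ∫ x in lo..hi, (∑ i ∈ s, a i * f i x) ^ 2 :=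
        integral_nonneg h fun x _ => sq_nonneg _
    _ = ∫ x in lo..hi, ∑ i ∈ s, ∑ j ∈ s, a i * a j * (f i x * f j x) := by
        refine integral_congr fun x _ => ?_
        simp only [sq, Finset.sum_mul_sum]
        exact Finset.sum_congr rfl fun i _ => Finset.sum_congr rfl fun j _ => by ring
    _ = ∑ i ∈ s, ∑ j ∈ s, a i * a j * ∫ x in lo..hi, f i x * f j x := by
        rw [integral_finsetSum fun i hi =>
          (continuous_finsetSum _ fun j hj => hint i hi j hj).intervalIntegrable _ _]
        refine Finset.sum_congr rfl fun i hi => ?_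
        rw [integral_finsetSum fun j hj => (hint i hi j hj).intervalIntegrable _ _]
        exact Finset.sum_congr rfl fun j _ => intervalIntegral.integral_const_mul _ _

theorem hasDerivAt_of_sub_eq_integral_mul_sub {G : ℝ → ℝ} {φ w wt : ℝ → ℝ → ℝ} {U : Set ℝ}
    {a b t₀ : ℝ} (hU : IsOpen U) (ht₀ : t₀ ∈ U) (hφ : ContinuousOn (uncurry φ) (U ×ˢ [[a, b]]))
    (hw : ContinuousOn (uncurry w) (U ×ˢ [[a, b]]))
    (hwt : ContinuousOn (uncurry wt) (U ×ˢ [[a, b]]))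
    (hderiv : ∀ s ∈ U, ∀ x ∈ [[a, b]], HasDerivAt (w · x) (wt s x) s)
    (hG : ∀ s ∈ U, G s - G t₀ = ∫ x in a..b, φ s x * (w s x - w t₀ x)) :
    HasDerivAt G (∫ x in a..b, φ t₀ x * wt t₀ x) t₀ := by
  obtain ⟨α, β, -, hαβ, hsub⟩ := exists_Icc_mem_subset_of_mem_nhds (hU.mem_nhds ht₀)
  have hK : IsCompact (Icc α β ×ˢ [[a, b]]) := isCompact_Icc.prod isCompact_uIcc
  obtain ⟨Mφ, hMφ⟩ := hK.exists_bound_of_continuousOn (hφ.mono (prod_mono hsub subset_rfl))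
  obtain ⟨Mt, hMt⟩ := hK.exists_bound_of_continuousOn (hwt.mono (prod_mono hsub subset_rfl))
  have hlip : ∀ s ∈ Icc α β, ∀ x ∈ [[a, b]], ‖w s x - w t₀ x‖ ≤ Mt * ‖s - t₀‖ := fun s hs x hx =>
    (convex_Icc α β).norm_image_sub_le_of_norm_hasDerivWithin_le
      (fun r hr => (hderiv r (hsub hr) x hx).hasDerivWithinAt) (fun r hr => hMt (r, x) ⟨hr, hx⟩)
      (mem_of_mem_nhds hαβ) hs
  have hslope : ∀ᶠ s in 𝓝[≠] t₀, slope G t₀ s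
      = ∫ x in a..b, φ s x * ((w s x - w t₀ x) / (s - t₀)) := by
    filter_upwards [nhdsWithin_le_nhds (hU.mem_nhds ht₀)] with s hs
    simp_rw [slope_def_field, hG s hs, mul_div_assoc', intervalIntegral.integral_div]
  rw [hasDerivAt_iff_tendsto_slope]
  refine Tendsto.congr' (EventuallyEq.symm hslope)
    (tendsto_integral_filter_of_dominated_convergence (fun _ => Mφ * Mt) ?_ ?_
      intervalIntegrable_const (ae_of_all _ fun x hx => ?_))
  · filter_upwards [nhdsWithin_le_nhds (hU.mem_nhds ht₀)] with s hs
    refine ContinuousOn.aestronglyMeasurable ?_ measurableSet_uIoc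
    exact ((hφ.uncurry_left s hs).mul (((hw.uncurry_left s hs).sub
      (hw.uncurry_left t₀ ht₀)).div_const _)).mono uIoc_subset_uIcc
  · filter_upwards [nhdsWithin_le_nhds hαβ, self_mem_nhdsWithin] with s hs hne
    refine ae_of_all _ fun x hx => ?_
    have hx' := uIoc_subset_uIcc hx
    have hst : 0 < ‖s - t₀‖ := norm_pos_iff.mpr (sub_ne_zero.mpr hne)
    rw [norm_mul, norm_div]
    gcongr
    · exact (norm_nonneg _).trans (hMφ (s, x) ⟨hs, hx'⟩)
    · exact hMφ (s, x) ⟨hs, hx'⟩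
    · exact (div_le_iff₀ hst).mpr (hlip s hs x hx')
  · have hx' := uIoc_subset_uIcc hx
    refine Tendsto.mul ?_ ?_
    · exact ((hφ.uncurry_right x hx').continuousAt (hU.mem_nhds ht₀)).tendsto.mono_left
        nhdsWithin_le_nhds
    · exact (hasDerivAt_iff_tendsto_slope.mp (hderiv t₀ ht₀ x hx')).congr fun s =>
        slope_def_field _ _ _

theorem le_mul_exp_of_hasDerivAt_le {f f' : ℝ → ℝ} {K a b : ℝ} (hf : ContinuousOn f (Icc a b))
    (hf' : ∀ t ∈ Ico a b, HasDerivAt f (f' t) t) (hle : ∀ t ∈ Ico a b, f' t ≤ K * f t) :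
    ∀ t ∈ Icc a b, f t ≤ f a * exp (K * (t - a)) := fun t ht => by
  simpa only [gronwallBound_ε0] using le_gronwallBound_of_liminf_deriv_right_le (ε := 0) hf
    (fun x hx _ hr => (hf' x hx).hasDerivWithinAt.liminf_right_slope_le hr) le_rfl
    (fun x hx => by simpa using hle x hx) t ht

/-- Agmon–Nirenberg: `D / H + 1` grows at most exponentially, which makes `H' ≥ -C H`. -/
theorem pos_of_frequency_le {H D H' D' : ℝ → ℝ} {a b K : ℝ} (hab : a < b) (hK : 0 ≤ K)
    (hHc : ContinuousOn H (Icc a b)) (hH : ∀ t ∈ Ico a b, HasDerivAt H (H' t) t)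
    (hD : ∀ t ∈ Ico a b, HasDerivAt D (D' t) t) (hpos : ∀ t ∈ Ico a b, 0 < H t)
    (hfreq : ∀ t ∈ Ico a b, D' t * H t - D t * H' t ≤ K * (D t + H t) * H t)
    (hH' : ∀ t ∈ Ico a b, -K * (D t + H t) ≤ H' t) : 0 < H b := by
  set N : ℝ → ℝ := fun t => D t / H t + 1
  have hNH : ∀ t ∈ Ico a b, D t + H t = N t * H t := fun t ht => by
    rw [add_mul, div_mul_cancel₀ _ (hpos t ht).ne', one_mul]
  have hN : ∀ t ∈ Ico a b, HasDerivAt N ((D' t * H t - D t * H' t) / H t ^ 2) t := fun t ht =>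
    ((hD t ht).div (hH t ht) (hpos t ht).ne').add_const 1
  have hN' : ∀ t ∈ Ico a b, (D' t * H t - D t * H' t) / H t ^ 2 ≤ K * N t := fun t ht => by
    have := hfreq t ht
    rw [hNH t ht] at this
    rw [div_le_iff₀ (pow_pos (hpos t ht) 2)]
    linarith
  set B := |N a| * exp (K * (b - a))
  have hNB : ∀ t ∈ Ico a b, N t ≤ B := fun t ht => by
    have hsub : Icc a t ⊆ Ico a b := fun r hr => ⟨hr.1, hr.2.trans_lt ht.2⟩
    calc N t ≤ N a * exp (K * (t - a)) :=
          le_mul_exp_of_hasDerivAt_le (fun r hr => (hN r (hsub hr)).continuousAt.continuousWithinAt)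
            (fun r hr => hN r (hsub (Ico_subset_Icc_self hr)))
            (fun r hr => hN' r (hsub (Ico_subset_Icc_self hr))) t ⟨ht.1, le_rfl⟩
      _ ≤ B := mul_le_mul (le_abs_self _) (exp_le_exp.mpr
          (mul_le_mul_of_nonneg_left (by linarith [ht.2]) hK)) (exp_pos _).le (abs_nonneg _)
  have hH'B : ∀ t ∈ Ico a b, -H' t ≤ -(K * B) * -H t := fun t ht => by
    have := hH' t ht
    rw [hNH t ht] at this
    nlinarith [mul_le_mul_of_nonneg_left (mul_le_mul_of_nonneg_right (hNB t ht) (hpos t ht).le) hK]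
  have hHb := le_mul_exp_of_hasDerivAt_le (f := fun t => -H t) hHc.neg (fun t ht => (hH t ht).neg)
    hH'B b ⟨hab.le, le_rfl⟩
  have : 0 < H a * exp (-(K * B) * (b - a)) := by have := hpos a ⟨le_rfl, hab⟩; positivity
  linarith

theorem exists_first_zero {f : ℝ → ℝ} {a b : ℝ} (hab : a ≤ b) (hf : ContinuousOn f (Icc a b))
    (ha : f a ≠ 0) (hb : f b = 0) : ∃ c ∈ Ioc a b, f c = 0 ∧ ∀ t ∈ Ico a c, f t ≠ 0 := by
  set Z := Icc a b ∩ f ⁻¹' {0}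
  have hZ : IsClosed Z := hf.preimage_isClosed_of_isClosed isClosed_Icc isClosed_singleton
  have hbdd : BddBelow Z := bddBelow_Icc.mono inter_subset_left
  obtain ⟨⟨hac, hcb⟩, hc⟩ := hZ.csInf_mem ⟨b, ⟨hab, le_rfl⟩, hb⟩ hbdd
  exact ⟨sInf Z, ⟨hac.lt_of_ne fun h => ha (h ▸ hc), hcb⟩, hc, fun t ht htz =>
    (csInf_le hbdd ⟨⟨ht.1, ht.2.le.trans hcb⟩, htz⟩).not_gt ht.2⟩

noncomputable def circlePairing (u v : ℝ → ℝ) : ℝ := ∫ x in 0..2 * π, u x * v x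

namespace circlePairing

theorem comm (u v : ℝ → ℝ) : circlePairing u v = circlePairing v u := by
  simp only [circlePairing, mul_comm]

theorem add_right {u v z : ℝ → ℝ} (hu : Continuous u) (hv : Continuous v) (hz : Continuous z) :
    circlePairing u (v + z) = circlePairing u v + circlePairing u z := by
  simp only [circlePairing, Pi.add_apply, mul_add]
  exact integral_add ((hu.mul hv).intervalIntegrable _ _) ((hu.mul hz).intervalIntegrable _ _)

theorem self_nonneg (u : ℝ → ℝ) : 0 ≤ circlePairing u u :=
  integral_nonneg two_pi_pos.le fun _ _ => mul_self_nonneg _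

theorem sum_mul_nonneg {ι : Type*} (s : Finset ι) (a : ι → ℝ) {f : ι → ℝ → ℝ}
    (hf : ∀ i ∈ s, Continuous (f i)) :
    0 ≤ ∑ i ∈ s, ∑ j ∈ s, a i * a j * circlePairing (f i) (f j) :=
  sum_mul_integral_mul_nonneg s a hf two_pi_pos.le

theorem neg_le_two_mul {u g : ℝ → ℝ} (hu : Continuous u) (hg : Continuous g) :
    -(circlePairing u u + circlePairing g g) ≤ 2 * circlePairing u g := by
  have := sum_mul_nonneg Finset.univ ![1, 1] (f := ![u, g])
    (fun i _ => by fin_cases i <;> assumption)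
  simp only [Fin.sum_univ_two, Matrix.cons_val_zero, Matrix.cons_val_one] at this
  rw [comm g u] at this
  linarith

theorem frequency_le {u v g : ℝ → ℝ} {D : ℝ} (hu : Continuous u) (hv : Continuous v)
    (hg : Continuous g) (hvu : circlePairing v u = -D) (hH : 0 < circlePairing u u) :
    -2 * (circlePairing v v + circlePairing v g) * circlePairing u u
        - D * (2 * (circlePairing u v + circlePairing u g))
      ≤ circlePairing u u * circlePairing g g / 2 := by
  -- `0 ≤ ⟨H v + D u + H g / 2, H v + D u + H g / 2⟩` with `H = ⟨u, u⟩`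
  have := sum_mul_nonneg Finset.univ ![circlePairing u u, D, circlePairing u u / 2]
    (f := ![v, u, g]) (fun i _ => by fin_cases i <;> assumption)
  simp only [Fin.sum_univ_three, Matrix.cons_val_zero, Matrix.cons_val_one,
    Matrix.cons_val] at this
  rw [comm u v, comm g v, comm g u, hvu] at this
  rw [comm u v, hvu]
  refine le_of_mul_le_mul_left ?_ hH
  linarith

theorem self_mul_add_mul_le {c d u u' : ℝ → ℝ} {Mc Md : ℝ} (hc : Continuous c)
    (hd : Continuous d) (hu : Continuous u) (hu' : Continuous u') (hcM : ∀ x, |c x| ≤ Mc)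
    (hdM : ∀ x, |d x| ≤ Md) :
    circlePairing (c * u' + d * u) (c * u' + d * u)
      ≤ 2 * Mc ^ 2 * circlePairing u' u' + 2 * Md ^ 2 * circlePairing u u := by
  have hpt : ∀ x, (c x * u' x + d x * u x) * (c x * u' x + d x * u x)
      ≤ 2 * Mc ^ 2 * (u' x * u' x) + 2 * Md ^ 2 * (u x * u x) := fun x => by
    have hc2 : c x ^ 2 ≤ Mc ^ 2 := sq_le_sq' (abs_le.mp (hcM x)).1 (abs_le.mp (hcM x)).2
    have hd2 : d x ^ 2 ≤ Md ^ 2 := sq_le_sq' (abs_le.mp (hdM x)).1 (abs_le.mp (hdM x)).2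
    nlinarith [sq_nonneg (c x * u' x - d x * u x), mul_le_mul_of_nonneg_right hc2
      (mul_self_nonneg (u' x)), mul_le_mul_of_nonneg_right hd2 (mul_self_nonneg (u x))]
  have hint : ∀ {f : ℝ → ℝ}, Continuous f → IntervalIntegrable f volume 0 (2 * π) :=
    fun hf => hf.intervalIntegrable _ _
  rw [circlePairing, circlePairing, circlePairing, ← intervalIntegral.integral_const_mul,
    ← intervalIntegral.integral_const_mul, ← integral_add (hint (by fun_prop)) (hint (by fun_prop))]
  exact integral_mono_on two_pi_pos.le (hint (by fun_prop)) (hint (by fun_prop)) fun x _ => hpt x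

end circlePairing

noncomputable def energy (w : ℝ → ℝ → ℝ) (t : ℝ) : ℝ := circlePairing (w t) (w t)

theorem ContinuousOn.continuous_of_prod_univ {f : ℝ → ℝ → ℝ} {s : Set ℝ}
    (h : ContinuousOn (uncurry f) (s ×ˢ univ)) {t : ℝ} (ht : t ∈ s) : Continuous (f t) :=
  continuousOn_univ.mp (h.uncurry_left t ht)

structure IsClassicalOnCircle (T : ℝ) (w wt wx wxx : ℝ → ℝ → ℝ) : Prop where
  periodic : ∀ t x : ℝ, t ∈ Icc 0 T → w t (x + 2 * π) = w t x
  continuousOn : ContinuousOn (uncurry w) (Icc 0 T ×ˢ univ)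
  continuousOn_dx : ContinuousOn (uncurry wx) (Icc 0 T ×ˢ univ)
  hasDerivAt_dx : ∀ t x : ℝ, t ∈ Icc 0 T → HasDerivAt (w t) (wx t x) x
  hasDerivWithinAt_dt : ∀ t x : ℝ, t ∈ Ioc 0 T → HasDerivWithinAt (w · x) (wt t x) (Icc 0 T) t
  hasDerivAt_dxx : ∀ t x : ℝ, t ∈ Ioc 0 T → HasDerivAt (wx t) (wxx t x) x
  continuousOn_dt : ContinuousOn (uncurry wt) (Ioc 0 T ×ˢ univ)
  continuousOn_dxx : ContinuousOn (uncurry wxx) (Ioc 0 T ×ˢ univ)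

namespace IsClassicalOnCircle

variable {T : ℝ} {w wt wx wxx : ℝ → ℝ → ℝ}

theorem periodic_dx (hw : IsClassicalOnCircle T w wt wx wxx) {t : ℝ} (ht : t ∈ Icc 0 T) :
    Periodic (wx t) (2 * π) :=
  Periodic.periodic_of_hasDerivAt_s3 (fun x => hw.periodic t x ht) (fun x => hw.hasDerivAt_dx t x ht)

theorem circlePairing_dx_dx (hw : IsClassicalOnCircle T w wt wx wxx) {t s : ℝ} (ht : t ∈ Ioc 0 T)
    (hs : s ∈ Icc 0 T) :
    circlePairing (wx t) (wx s) = -circlePairing (wxx t) (w s) :=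
  integral_mul_deriv_eq_neg_of_periodic (hw.periodic_dx (Ioc_subset_Icc_self ht))
    (fun x => hw.periodic s x hs) (fun x => hw.hasDerivAt_dxx t x ht)
    (fun x => hw.hasDerivAt_dx s x hs)
    ((hw.continuousOn_dxx.continuous_of_prod_univ ht).intervalIntegrable _ _)
    ((hw.continuousOn_dx.continuous_of_prod_univ hs).intervalIntegrable _ _)

theorem continuousOn_energy (hw : IsClassicalOnCircle T w wt wx wxx) :
    ContinuousOn (energy w) (Icc 0 T) := by
  rw [continuousOn_iff_continuous_domRestrict]
  have : Continuous fun p : Icc 0 T × ℝ => w p.1 p.2 :=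
    hw.continuousOn.comp_continuous (f := fun p : Icc 0 T × ℝ => ((p.1 : ℝ), p.2)) (by fun_prop)
      fun p => ⟨p.1.2, trivial⟩
  exact continuous_parametric_intervalIntegral_of_continuous'
    (f := fun (t : Icc 0 T) x => w t x * w t x) (this.mul this) _ _

theorem hasDerivAt_dt (hw : IsClassicalOnCircle T w wt wx wxx) {t : ℝ} (ht : t ∈ Ioo 0 T) (x : ℝ) :
    HasDerivAt (w · x) (wt t x) t :=
  (hw.hasDerivWithinAt_dt t x (Ioo_subset_Ioc_self ht)).hasDerivAt (Icc_mem_nhds ht.1 ht.2)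

theorem hasDerivAt_energy (hw : IsClassicalOnCircle T w wt wx wxx) {t₀ : ℝ}
    (ht₀ : t₀ ∈ Ioo 0 T) : HasDerivAt (energy w) (2 * circlePairing (w t₀) (wt t₀)) t₀ := by
  have hwc : ContinuousOn (uncurry w) (Ioo 0 T ×ˢ [[0, 2 * π]]) :=
    hw.continuousOn.mono (prod_mono Ioo_subset_Icc_self (subset_univ _))
  have hw₀ := hw.continuousOn.continuous_of_prod_univ (Ioo_subset_Icc_self ht₀)
  have := hasDerivAt_of_sub_eq_integral_mul_sub (G := energy w)
    (φ := fun s x => w s x + w t₀ x) isOpen_Ioo ht₀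
    (hwc.add (hw₀.comp continuous_snd).continuousOn) hwc
    (hw.continuousOn_dt.mono (prod_mono Ioo_subset_Ioc_self (subset_univ _)))
    (fun s hs x _ => hw.hasDerivAt_dt hs x) fun s hs => by
      have hws := hw.continuousOn.continuous_of_prod_univ (Ioo_subset_Icc_self hs)
      simp only [energy, circlePairing]
      rw [← integral_sub (Continuous.intervalIntegrable (by fun_prop) _ _)
        (Continuous.intervalIntegrable (by fun_prop) _ _)]
      exact integral_congr fun x _ => by ring
  convert this using 1
  simp only [circlePairing, ← intervalIntegral.integral_const_mul]
  exact integral_congr fun x _ => by ring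

/-- `∂ₜ wx` need not exist; integrating by parts gives
`energy wx s - energy wx t₀ = -∫ (wxx s + wxx t₀) (w s - w t₀)`, which only involves `∂ₜ w`. -/
theorem hasDerivAt_energy_dx (hw : IsClassicalOnCircle T w wt wx wxx) {t₀ : ℝ}
    (ht₀ : t₀ ∈ Ioo 0 T) : HasDerivAt (energy wx) (-2 * circlePairing (wxx t₀) (wt t₀)) t₀ := by
  have hwxx : ContinuousOn (uncurry wxx) (Ioo 0 T ×ˢ [[0, 2 * π]]) :=
    hw.continuousOn_dxx.mono (prod_mono Ioo_subset_Ioc_self (subset_univ _))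
  have hw₀ := hw.continuousOn.continuous_of_prod_univ (Ioo_subset_Icc_self ht₀)
  have hwxx₀ := hw.continuousOn_dxx.continuous_of_prod_univ (Ioo_subset_Ioc_self ht₀)
  have := hasDerivAt_of_sub_eq_integral_mul_sub (G := energy wx)
    (φ := fun s x => -(wxx s x + wxx t₀ x)) isOpen_Ioo ht₀
    (hwxx.add (hwxx₀.comp continuous_snd).continuousOn).neg
    (hw.continuousOn.mono (prod_mono Ioo_subset_Icc_self (subset_univ _)))
    (hw.continuousOn_dt.mono (prod_mono Ioo_subset_Ioc_self (subset_univ _)))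
    (fun s hs x _ => hw.hasDerivAt_dt hs x) fun s hs => by
      have hws := hw.continuousOn.continuous_of_prod_univ (Ioo_subset_Icc_self hs)
      have hwxxs := hw.continuousOn_dxx.continuous_of_prod_univ (Ioo_subset_Ioc_self hs)
      have hexpand : ∫ x in 0..2 * π, -(wxx s x + wxx t₀ x) * (w s x - w t₀ x)
          = (circlePairing (wxx s) (w t₀) - circlePairing (wxx s) (w s))
            + (circlePairing (wxx t₀) (w t₀) - circlePairing (wxx t₀) (w s)) := by
        simp only [circlePairing]
        rw [← intervalIntegral.integral_sub, ← intervalIntegral.integral_sub,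
          ← intervalIntegral.integral_add]
        · exact integral_congr fun x _ => by ring
        all_goals exact Continuous.intervalIntegrable (by fun_prop) _ _
      have hs' := Ioo_subset_Ioc_self hs
      have ht₀' := Ioo_subset_Ioc_self ht₀
      rw [energy, energy, hexpand, hw.circlePairing_dx_dx hs' (Ioc_subset_Icc_self hs'),
        hw.circlePairing_dx_dx ht₀' (Ioc_subset_Icc_self ht₀')]
      linarith [hw.circlePairing_dx_dx hs' (Ioc_subset_Icc_self ht₀'),
        hw.circlePairing_dx_dx ht₀' (Ioc_subset_Icc_self hs'), circlePairing.comm (wx s) (wx t₀)]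
  convert this using 1
  simp only [circlePairing, ← intervalIntegral.integral_const_mul]
  exact integral_congr fun x _ => by ring

theorem energy_deriv_bounds (hw : IsClassicalOnCircle T w wt wx wxx) {c d : ℝ → ℝ → ℝ}
    {Mc Md : ℝ} (hc : ContinuousOn (uncurry c) (Icc 0 T ×ˢ univ))
    (hd : ContinuousOn (uncurry d) (Icc 0 T ×ˢ univ)) (hcM : ∀ t x, t ∈ Icc 0 T → |c t x| ≤ Mc)
    (hdM : ∀ t x, t ∈ Icc 0 T → |d t x| ≤ Md)
    (heq : ∀ t x, t ∈ Ioo 0 T → wt t x = wxx t x + c t x * wx t x + d t x * w t x) {s : ℝ}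
    (hs : s ∈ Ioo 0 T) (hH : 0 < energy w s) :
    -2 * circlePairing (wxx s) (wt s) * energy w s - energy wx s * (2 * circlePairing (w s) (wt s))
        ≤ (2 + 2 * Mc ^ 2 + 2 * Md ^ 2) * (energy wx s + energy w s) * energy w s ∧
      -(2 + 2 * Mc ^ 2 + 2 * Md ^ 2) * (energy wx s + energy w s)
        ≤ 2 * circlePairing (w s) (wt s) := by
  have hsI := Ioo_subset_Icc_self hs
  have hsI' := Ioo_subset_Ioc_self hs
  have hu := hw.continuousOn.continuous_of_prod_univ hsI
  have hux := hw.continuousOn_dx.continuous_of_prod_univ hsI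
  have huxx := hw.continuousOn_dxx.continuous_of_prod_univ hsI'
  have hcs := hc.continuous_of_prod_univ hsI
  have hds := hd.continuous_of_prod_univ hsI
  have hg : Continuous (c s * wx s + d s * w s) := by fun_prop
  have hwt : wt s = wxx s + (c s * wx s + d s * w s) := funext fun x => by
    simp only [Pi.add_apply, Pi.mul_apply, heq s x hs, add_assoc]
  have hgreen := hw.circlePairing_dx_dx hsI' hsI
  have hD := circlePairing.self_nonneg (wx s)
  have hE := circlePairing.self_mul_add_mul_le hcs hds hu hux (hcM s · hsI) (hdM s · hsI)
  have hS := circlePairing.neg_le_two_mul hu hg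
  have hfreq := circlePairing.frequency_le hu huxx hg (neg_eq_iff_eq_neg.mp hgreen.symm) hH
  simp only [energy, hwt, circlePairing.add_right hu huxx hg,
    circlePairing.add_right huxx huxx hg] at hH ⊢
  constructor
  · nlinarith [mul_le_mul_of_nonneg_left hE hH.le, mul_nonneg hD hH.le, mul_nonneg hH.le hH.le,
      mul_nonneg (sq_nonneg Mc) (mul_nonneg hD hH.le),
      mul_nonneg (sq_nonneg Md) (mul_nonneg hH.le hH.le)]
  · rw [circlePairing.comm (w s) (wxx s)]
    nlinarith [mul_nonneg (sq_nonneg Mc) hD, mul_nonneg (sq_nonneg Md) hH.le,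
      mul_nonneg (sq_nonneg Mc) hH.le, mul_nonneg (sq_nonneg Md) hD]

theorem energy_eq_zero (hw : IsClassicalOnCircle T w wt wx wxx) {c d : ℝ → ℝ → ℝ}
    {Mc Md : ℝ} (hc : ContinuousOn (uncurry c) (Icc 0 T ×ˢ univ))
    (hd : ContinuousOn (uncurry d) (Icc 0 T ×ˢ univ)) (hcM : ∀ t x, t ∈ Icc 0 T → |c t x| ≤ Mc)
    (hdM : ∀ t x, t ∈ Icc 0 T → |d t x| ≤ Md)
    (heq : ∀ t x, t ∈ Ioo 0 T → wt t x = wxx t x + c t x * wx t x + d t x * w t x)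
    (hT : energy w T = 0) {t : ℝ} (ht : t ∈ Ioo 0 T) : energy w t = 0 := by
  by_contra hne
  obtain ⟨t₂, ht₂, hzero, hne'⟩ := exists_first_zero ht.2.le
    (hw.continuousOn_energy.mono (Icc_subset_Icc ht.1.le le_rfl)) hne hT
  have hmem : ∀ s ∈ Ico t t₂, s ∈ Ioo 0 T := fun s hs => ⟨ht.1.trans_le hs.1, hs.2.trans_le ht₂.2⟩
  have hpos : ∀ s ∈ Ico t t₂, 0 < energy w s := fun s hs =>
    (circlePairing.self_nonneg _).lt_of_ne' (hne' s hs)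
  have hbounds := fun s hs =>
    hw.energy_deriv_bounds hc hd hcM hdM heq (hmem s hs) (hpos s hs)
  exact (pos_of_frequency_le ht₂.1 (by positivity)
    (hw.continuousOn_energy.mono (Icc_subset_Icc ht.1.le ht₂.2))
    (fun s hs => hw.hasDerivAt_energy (hmem s hs)) (fun s hs => hw.hasDerivAt_energy_dx (hmem s hs))
    hpos (fun s hs => (hbounds s hs).1) (fun s hs => (hbounds s hs).2)).ne' hzero

end IsClassicalOnCircle

theorem backward_uniqueness_linear_general
    (T : ℝ)
    (c d w wt wx wxx : ℝ → ℝ → ℝ)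
    -- `c`, `d` are bounded continuous on `[0,T] × ℝ`, `2π`-periodic in `x`
    (hcC : ContinuousOn (fun p : ℝ × ℝ => c p.1 p.2) (Set.Icc 0 T ×ˢ Set.univ))
    (hdC : ContinuousOn (fun p : ℝ × ℝ => d p.1 p.2) (Set.Icc 0 T ×ˢ Set.univ))
    (hcB : ∃ M : ℝ, ∀ t x : ℝ, t ∈ Set.Icc 0 T → |c t x| ≤ M)
    (hdB : ∃ M : ℝ, ∀ t x : ℝ, t ∈ Set.Icc 0 T → |d t x| ≤ M)
    -- `w` is `2π`-periodic in `x`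
    (hwP : ∀ t x : ℝ, t ∈ Set.Icc 0 T → w t (x + 2 * π) = w t x)
    -- `w` and `∂ₓ w` are continuous on `[0,T] × ℝ`
    (hwC : ContinuousOn (fun p : ℝ × ℝ => w p.1 p.2) (Set.Icc 0 T ×ˢ Set.univ))
    (hwxC : ContinuousOn (fun p : ℝ × ℝ => wx p.1 p.2) (Set.Icc 0 T ×ˢ Set.univ))
    -- the spatial derivative exists on `[0,T] × ℝ`
    (hwx : ∀ t x : ℝ, t ∈ Set.Icc 0 T → HasDerivAt (fun y => w t y) (wx t x) x)
    -- `∂ₜ w`, `∂ₓₓ w` exist on `(0,T] × ℝ`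
    (hwt : ∀ t x : ℝ, t ∈ Set.Ioc 0 T →
      HasDerivWithinAt (fun s => w s x) (wt t x) (Set.Icc 0 T) t)
    (hwxx : ∀ t x : ℝ, t ∈ Set.Ioc 0 T → HasDerivAt (fun y => wx t y) (wxx t x) x)
    -- and are continuous on `(0,T] × ℝ`
    (hwtC : ContinuousOn (fun p : ℝ × ℝ => wt p.1 p.2) (Set.Ioc 0 T ×ˢ Set.univ))
    (hwxxC : ContinuousOn (fun p : ℝ × ℝ => wxx p.1 p.2) (Set.Ioc 0 T ×ˢ Set.univ))
    -- the equation holds on `(0,T] × ℝ`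
    (heq : ∀ t x : ℝ, t ∈ Set.Ioc 0 T →
      wt t x = wxx t x + c t x * wx t x + d t x * w t x)
    -- `w(T,·)` vanishes identically
    (hend : ∀ x : ℝ, w T x = 0) :
    ∀ t x : ℝ, t ∈ Set.Icc 0 T → w t x = 0 := by
  obtain ⟨Mc, hMc⟩ := hcB
  obtain ⟨Md, hMd⟩ := hdB
  have hw : IsClassicalOnCircle T w wt wx wxx := ⟨hwP, hwC, hwxC, hwx, hwt, hwxx, hwtC, hwxxC⟩
  have hinterior : ∀ t ∈ Ioo 0 T, w t = 0 := fun t ht =>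
    Periodic.eq_zero_of_integral_sq_eq_zero two_pi_pos (hwP t · (Ioo_subset_Icc_self ht))
      (hwC.continuous_of_prod_univ (Ioo_subset_Icc_self ht)) <| by
        simpa only [energy, circlePairing, sq] using hw.energy_eq_zero hcC hdC hMc hMd
          (fun t x ht => heq t x (Ioo_subset_Ioc_self ht))
          (by simp [energy, circlePairing, hend]) ht
  intro t x ht
  rcases ht.2.eq_or_lt with rfl | htT
  · exact hend x
  · refine EqOn.of_subset_closure (fun s hs => congrFun (hinterior s hs) x)
      (hwC.uncurry_right x (mem_univ x)) continuousOn_const Ioo_subset_Icc_self ?_ ht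
    rw [closure_Ioo (ht.1.trans_lt htT).ne]

/-- Backward uniqueness for a linear parabolic equation `w_t = w_xx + c w_x + d w`
on the circle `S¹ = ℝ/2πℤ`: a classical solution on `[0,T]` vanishing identically at
time `T` vanishes identically on `[0,T]`.  This underlies the injectivity of the
derivative of the Poincaré map. -/
theorem backward_uniqueness_linear
    (T : ℝ) (hT : 0 < T)
    (c d w wt wx wxx : ℝ → ℝ → ℝ)
    -- `c`, `d` are bounded continuous on `[0,T] × ℝ`, `2π`-periodic in `x`
    (hcC : ContinuousOn (fun p : ℝ × ℝ => c p.1 p.2) (Set.Icc 0 T ×ˢ Set.univ))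
    (hdC : ContinuousOn (fun p : ℝ × ℝ => d p.1 p.2) (Set.Icc 0 T ×ˢ Set.univ))
    (hcB : ∃ M : ℝ, ∀ t x : ℝ, t ∈ Set.Icc 0 T → |c t x| ≤ M)
    (hdB : ∃ M : ℝ, ∀ t x : ℝ, t ∈ Set.Icc 0 T → |d t x| ≤ M)
    (hcP : ∀ t x : ℝ, t ∈ Set.Icc 0 T → c t (x + 2 * π) = c t x)
    (hdP : ∀ t x : ℝ, t ∈ Set.Icc 0 T → d t (x + 2 * π) = d t x)
    -- `w` is `2π`-periodic in `x`
    (hwP : ∀ t x : ℝ, t ∈ Set.Icc 0 T → w t (x + 2 * π) = w t x)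
    -- `w` and `∂ₓ w` are continuous on `[0,T] × ℝ`
    (hwC : ContinuousOn (fun p : ℝ × ℝ => w p.1 p.2) (Set.Icc 0 T ×ˢ Set.univ))
    (hwxC : ContinuousOn (fun p : ℝ × ℝ => wx p.1 p.2) (Set.Icc 0 T ×ˢ Set.univ))
    -- the spatial derivative exists on `[0,T] × ℝ`
    (hwx : ∀ t x : ℝ, t ∈ Set.Icc 0 T → HasDerivAt (fun y => w t y) (wx t x) x)
    -- `∂ₜ w`, `∂ₓₓ w` exist on `(0,T] × ℝ`
    (hwt : ∀ t x : ℝ, t ∈ Set.Ioc 0 T →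
      HasDerivWithinAt (fun s => w s x) (wt t x) (Set.Icc 0 T) t)
    (hwxx : ∀ t x : ℝ, t ∈ Set.Ioc 0 T → HasDerivAt (fun y => wx t y) (wxx t x) x)
    -- and are continuous on `(0,T] × ℝ`
    (hwtC : ContinuousOn (fun p : ℝ × ℝ => wt p.1 p.2) (Set.Ioc 0 T ×ˢ Set.univ))
    (hwxxC : ContinuousOn (fun p : ℝ × ℝ => wxx p.1 p.2) (Set.Ioc 0 T ×ˢ Set.univ))
    -- the equation holds on `(0,T] × ℝ`
    (heq : ∀ t x : ℝ, t ∈ Set.Ioc 0 T →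
      wt t x = wxx t x + c t x * wx t x + d t x * w t x)
    -- `w(T,·)` vanishes identically
    (hend : ∀ x : ℝ, w T x = 0) :
    ∀ t x : ℝ, t ∈ Set.Icc 0 T → w t x = 0 :=
  backward_uniqueness_linear_general T c d w wt wx wxx hcC hdC hcB hdB hwP hwC hwxC hwx hwt hwxx
    hwtC hwxxC heq hend
end

section
/- Let T > 0 and let f : ℝ × ℝ × ℝ → ℝ be of class C² with f(t+T, y, z) = f(t, y, z) for all (t,y,z), and suppose there exists δ > 0 such that y·f(t, y, 0) < 0 for all t ∈ ℝ and all y with |y| ≥ δ. Then for every R ≥ 0 there exists a constant ζ > 0 (depending only on f, δ and R) with the following property: for every τ ∈ (0,∞] and every classical solution u of u_t = u_xx + f(t, u, u_x) on [0,τ) × ℝ that is 2π-periodic in x (u continuous on [0,τ) × ℝ, with u_t, u_x, u_xx continuous on (0,τ) × ℝ and satisfying the equation there), if sup_x |u(0,x)| ≤ δ + R then sup_x |u(t,x)| ≤ δ + R·e^{−ζt} for all t ∈ [0,τ). -/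
open Real Set ENNReal Filter Topology Function

/-! The barrier `w(t) = δ + ε + R e^{-ζt}` is a strict supersolution as soon as `ζ R < m`, where
`m > 0` bounds `-f(t, y, 0)` from below for `δ ≤ y ≤ δ + R + 1` (compactness in `y`, periodicity
in `t`). At the first time `u` touches `w`, at a spatial maximum, `u_x = 0`, `u_xx ≤ 0` and
`u_t ≥ w'`, so the equation forces `w' ≤ f(t, w, 0)`, a contradiction; let `ε → 0`. The lower
bound is the upper bound for `-u`, which solves the equation for `-f(t, -y, -z)`. -/

structure IsSolutionOn (f : ℝ → ℝ → ℝ → ℝ) (t₁ : ℝ) (u ut ux uxx : ℝ → ℝ → ℝ) : Prop where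
  continuousOn : ContinuousOn (uncurry u) (Icc 0 t₁ ×ˢ univ)
  hasDerivAt_t : ∀ t ∈ Ioc 0 t₁, ∀ x, HasDerivAt (u · x) (ut t x) t
  hasDerivAt_x : ∀ t ∈ Ioc 0 t₁, ∀ x, HasDerivAt (u t) (ux t x) x
  hasDerivAt_xx : ∀ t ∈ Ioc 0 t₁, ∀ x, HasDerivAt (ux t) (uxx t x) x
  eq : ∀ t ∈ Ioc 0 t₁, ∀ x, ut t x = uxx t x + f t (u t x) (ux t x)

theorem IsSolutionOn.neg {f : ℝ → ℝ → ℝ → ℝ} {t₁ : ℝ} {u ut ux uxx : ℝ → ℝ → ℝ}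
    (hsol : IsSolutionOn f t₁ u ut ux uxx) :
    IsSolutionOn (fun t y z => -f t (-y) (-z)) t₁ (-u) (-ut) (-ux) (-uxx) where
  continuousOn := hsol.continuousOn.neg
  hasDerivAt_t t ht x := (hsol.hasDerivAt_t t ht x).neg
  hasDerivAt_x t ht x := (hsol.hasDerivAt_x t ht x).neg
  hasDerivAt_xx t ht x := (hsol.hasDerivAt_xx t ht x).neg
  eq t ht x := by simp only [Pi.neg_apply, neg_neg, hsol.eq t ht x]; ring

theorem exists_pos_forall_le_neg_of_periodic {g : ℝ → ℝ → ℝ} {T : ℝ} {s : Set ℝ}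
    (hg : Continuous (uncurry g)) (hT : 0 < T) (hper : ∀ y, Periodic (g · y) T)
    (hs : IsCompact s) (hneg : ∀ t, ∀ y ∈ s, g t y < 0) :
    ∃ m > 0, ∀ t, ∀ y ∈ s, g t y ≤ -m := by
  rcases s.eq_empty_or_nonempty with rfl | ⟨y₀, hy₀⟩
  · exact ⟨1, one_pos, by simp⟩
  obtain ⟨⟨t', y'⟩, ⟨-, hy'⟩, hmax⟩ := (isCompact_Icc (a := 0) (b := T)).prod hs |>.exists_isMaxOn
    ⟨(0, y₀), ⟨left_mem_Icc.2 hT.le, hy₀⟩⟩ hg.continuousOn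
  refine ⟨-g t' y', neg_pos.2 (hneg t' y' hy'), fun t y hy => ?_⟩
  obtain ⟨t'', ht'', hteq⟩ := (hper y).exists_mem_Ico₀ hT t
  rw [neg_neg, hteq]
  exact isMaxOn_iff.1 hmax (t'', y) ⟨Ico_subset_Icc_self ht'', hy⟩

theorem Function.Periodic.exists_mem_Icc_forall_ge {g : ℝ → ℝ} {p : ℝ} (hg : Periodic g p)
    (hp : 0 < p) (hc : Continuous g) : ∃ x ∈ Icc 0 p, ∀ y, g y ≤ g x := by
  obtain ⟨x, hx, hmax⟩ := isCompact_Icc.exists_isMaxOn (nonempty_Icc.2 hp.le) hc.continuousOn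
  refine ⟨x, hx, fun y => ?_⟩
  obtain ⟨y', hy', hyeq⟩ := hg.exists_mem_Ico₀ hp y
  exact hyeq ▸ isMaxOn_iff.1 hmax y' (Ico_subset_Icc_self hy')

theorem IsLocalMax.nonpos_of_hasDerivAt {g g' : ℝ → ℝ} {a g'' : ℝ} (hmax : IsLocalMax g a)
    (hg : ∀ x, HasDerivAt g (g' x) x) (hg' : HasDerivAt g' g'' a) : g'' ≤ 0 := by
  by_contra! hpos
  have hderiv : deriv g = g' := funext fun x => (hg x).deriv
  have hmin : IsLocalMin g a := isLocalMin_of_deriv_deriv_pos (by rwa [hderiv, hg'.deriv])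
    (by rw [hderiv]; exact hmax.hasDerivAt_eq_zero (hg a)) (hg a).continuousAt
  have hconst : g =ᶠ[𝓝 a] fun _ => g a := (hmin.and hmax).mono fun x hx => le_antisymm hx.2 hx.1
  have hg'_zero : g' =ᶠ[𝓝 a] fun _ => 0 := hconst.eventuallyEq_nhds.mono fun x hx =>
    (hg x).unique ((hasDerivAt_const x (g a)).congr_of_eventuallyEq hx)
  exact hpos.ne' (hg'.unique ((hasDerivAt_const a 0).congr_of_eventuallyEq hg'_zero))

theorem HasDerivAt.nonneg_of_eventually_le_left {h : ℝ → ℝ} {h' a : ℝ} (hd : HasDerivAt h h' a)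
    (hle : ∀ᶠ s in 𝓝[<] a, h s ≤ h a) : 0 ≤ h' := by
  refine ge_of_tendsto ((hasDerivAt_iff_tendsto_slope.1 hd).mono_left (nhdsLT_le_nhdsNE a)) ?_
  filter_upwards [hle, self_mem_nhdsWithin] with s hs hsa
  rw [slope_def_field]
  exact div_nonneg_of_nonpos (sub_nonpos.2 hs) (sub_nonpos.2 hsa.le)

theorem exists_first_touching_point {u : ℝ → ℝ → ℝ} {w : ℝ → ℝ} {t₁ p : ℝ} (ht₁ : 0 ≤ t₁)
    (hp : 0 < p) (hu : ContinuousOn (uncurry u) (Icc 0 t₁ ×ˢ univ))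
    (hper : ∀ t ∈ Icc 0 t₁, Periodic (u t) p) (hw : Continuous w) (h0 : ∀ x, u 0 x < w 0)
    {x₁ : ℝ} (h₁ : w t₁ ≤ u t₁ x₁) :
    ∃ t₀ ∈ Ioc 0 t₁, ∃ x₀, u t₀ x₀ = w t₀ ∧ (∀ y, u t₀ y ≤ u t₀ x₀) ∧
      ∀ s ∈ Ico 0 t₀, u s x₀ < w s := by
  have hK : IsCompact (Icc 0 t₁ ×ˢ Icc 0 p) := isCompact_Icc.prod isCompact_Icc
  have hS : IsCompact {q ∈ Icc 0 t₁ ×ˢ Icc 0 p | w q.1 ≤ uncurry u q} :=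
    hK.of_isClosed_subset (hK.isClosed.isClosed_le (hw.comp continuous_fst).continuousOn
      (hu.mono (prod_mono subset_rfl (subset_univ _)))) (sep_subset _ _)
  obtain ⟨x₁', hx₁', hx₁eq⟩ := (hper t₁ ⟨ht₁, le_rfl⟩).exists_mem_Ico₀ hp x₁
  obtain ⟨⟨t₀, x₀'⟩, ⟨⟨ht₀, hx₀'⟩, hreach⟩, hmin⟩ := hS.exists_isMinOn
    ⟨(t₁, x₁'), ⟨⟨⟨ht₁, le_rfl⟩, Ico_subset_Icc_self hx₁'⟩,
      show w t₁ ≤ u t₁ x₁' from hx₁eq ▸ h₁⟩⟩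
    continuous_fst.continuousOn
  have ht₀pos : 0 < t₀ := ht₀.1.lt_of_ne (by rintro rfl; exact (h0 x₀').not_ge hreach)
  obtain ⟨x₀, hx₀, hmax⟩ := (hper t₀ ht₀).exists_mem_Icc_forall_ge hp
    (hu.comp_continuous (continuous_const.prodMk continuous_id) fun y => ⟨ht₀, trivial⟩)
  have hbefore : ∀ s ∈ Ico 0 t₀, u s x₀ < w s := fun s hs => lt_of_not_ge fun hs' =>
    hs.2.not_ge (isMinOn_iff.1 hmin (s, x₀) ⟨⟨⟨hs.1, hs.2.le.trans ht₀.2⟩, hx₀⟩, hs'⟩)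
  have hu_x₀ : ContinuousOn (u · x₀) (Icc 0 t₁) :=
    hu.comp (continuous_id.prodMk continuous_const).continuousOn fun s hs => ⟨hs, trivial⟩
  have hle : u t₀ x₀ ≤ w t₀ := ContinuousWithinAt.closure_le
    (by rw [closure_Ico ht₀pos.ne]; exact right_mem_Icc.2 ht₀pos.le)
    ((hu_x₀ t₀ ht₀).mono (Ico_subset_Icc_self.trans (Icc_subset_Icc_right ht₀.2)))
    hw.continuousWithinAt fun s hs => (hbefore s hs).le
  exact ⟨t₀, ⟨ht₀pos, ht₀.2⟩, x₀, le_antisymm hle (hreach.trans (hmax x₀')), hmax, hbefore⟩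

namespace IsSolutionOn

variable {f : ℝ → ℝ → ℝ → ℝ} {t₁ p : ℝ} {u ut ux uxx : ℝ → ℝ → ℝ}

theorem lt_of_strictSupersolution (hsol : IsSolutionOn f t₁ u ut ux uxx) (hp : 0 < p)
    (hper : ∀ t ∈ Icc 0 t₁, Periodic (u t) p) {w w' : ℝ → ℝ} (hwc : Continuous w)
    (hw : ∀ t ∈ Ioc 0 t₁, HasDerivAt w (w' t) t) (hsuper : ∀ t ∈ Ioc 0 t₁, f t (w t) 0 < w' t)
    (h0 : ∀ x, u 0 x < w 0) (ht₁ : 0 ≤ t₁) (x : ℝ) : u t₁ x < w t₁ := by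
  by_contra! h
  obtain ⟨t₀, ht₀, x₀, htouch, hmax, hbefore⟩ :=
    exists_first_touching_point ht₁ hp hsol.continuousOn hper hwc h0 h
  have hmax' : IsLocalMax (u t₀) x₀ := Eventually.of_forall hmax
  have hux : ux t₀ x₀ = 0 := hmax'.hasDerivAt_eq_zero (hsol.hasDerivAt_x t₀ ht₀ x₀)
  have huxx : uxx t₀ x₀ ≤ 0 :=
    hmax'.nonpos_of_hasDerivAt (hsol.hasDerivAt_x t₀ ht₀) (hsol.hasDerivAt_xx t₀ ht₀ x₀)
  have hut : w' t₀ ≤ ut t₀ x₀ := by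
    refine sub_nonneg.1 <|
      ((hsol.hasDerivAt_t t₀ ht₀ x₀).sub (hw t₀ ht₀)).nonneg_of_eventually_le_left ?_
    filter_upwards [Ioo_mem_nhdsLT ht₀.1] with s hs
    simpa [htouch] using (hbefore s ⟨hs.1.le, hs.2⟩).le
  have heq := hsol.eq t₀ ht₀ x₀
  rw [hux, htouch] at heq
  linarith [hsuper t₀ ht₀]

theorem le_add_mul_exp (hsol : IsSolutionOn f t₁ u ut ux uxx) (hp : 0 < p)
    (hper : ∀ t ∈ Icc 0 t₁, Periodic (u t) p) {δ R m ζ : ℝ} (hR : 0 ≤ R) (hζ : 0 ≤ ζ)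
    (hζm : ζ * R < m) (hf : ∀ t, ∀ y ∈ Icc δ (δ + R + 1), f t y 0 ≤ -m)
    (h0 : ∀ x, u 0 x ≤ δ + R) (ht₁ : 0 ≤ t₁) (x : ℝ) : u t₁ x ≤ δ + R * exp (-ζ * t₁) := by
  refine le_of_forall_pos_lt_add fun ε hε => ?_
  obtain ⟨η, hη, hηε, hη1⟩ : ∃ η, 0 < η ∧ η ≤ ε ∧ η ≤ 1 :=
    ⟨min ε 1, lt_min hε one_pos, min_le_left _ _, min_le_right _ _⟩
  have hw : ∀ t, HasDerivAt (fun t => δ + η + R * exp (-ζ * t)) (-(ζ * R) * exp (-ζ * t)) t := by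
    intro t
    exact ((((hasDerivAt_id' t).const_mul (-ζ)).exp.const_mul R).const_add (δ + η)).congr_deriv
      (by ring)
  have hsuper : ∀ t ∈ Ioc 0 t₁,
      f t (δ + η + R * exp (-ζ * t)) 0 < -(ζ * R) * exp (-ζ * t) := by
    intro t ht
    have hexp : exp (-ζ * t) ≤ 1 := exp_le_one_iff.2 (by nlinarith [ht.1])
    have hRexp : 0 ≤ R * exp (-ζ * t) := by positivity
    calc f t (δ + η + R * exp (-ζ * t)) 0 ≤ -m :=
          hf t _ ⟨by linarith, by nlinarith⟩
      _ < -(ζ * R) := by linarith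
      _ ≤ -(ζ * R) * exp (-ζ * t) := by nlinarith [mul_nonneg hζ hR]
  have hlt := hsol.lt_of_strictSupersolution hp hper (by fun_prop) (fun t _ => hw t) hsuper
    (fun y => by simp only [mul_zero, exp_zero, mul_one]; linarith [h0 y]) ht₁ x
  linarith

end IsSolutionOn

theorem exists_pos_forall_le_neg_of_sign_condition {f : ℝ → ℝ → ℝ → ℝ} {T δ : ℝ}
    (hf : Continuous fun q : ℝ × ℝ => f q.1 q.2 0) (hT : 0 < T)
    (hfper : ∀ t y z : ℝ, f (t + T) y z = f t y z) (hδ : 0 < δ)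
    (hsign : ∀ t y : ℝ, δ ≤ |y| → y * f t y 0 < 0) (M : ℝ) :
    ∃ m > 0, ∀ t, ∀ y ∈ Icc δ M, f t y 0 ≤ -m ∧ m ≤ f t (-y) 0 := by
  obtain ⟨m₁, hm₁, hf₁⟩ := exists_pos_forall_le_neg_of_periodic
    (g := fun t y => f t y 0) (s := Icc δ M) hf hT
    (fun y t => hfper t y 0) isCompact_Icc fun t y hy =>
      neg_of_mul_neg_right (hsign t y (hy.1.trans (le_abs_self y))) (hδ.le.trans hy.1)
  obtain ⟨m₂, hm₂, hf₂⟩ := exists_pos_forall_le_neg_of_periodic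
    (g := fun t y => -f t (-y) 0) (s := Icc δ M)
    (hf.comp (continuous_fst.prodMk continuous_snd.neg)).neg hT
    (fun y t => by simp only [hfper]) isCompact_Icc fun t y hy =>
      have hy' : δ ≤ |-y| := by rw [abs_neg]; exact hy.1.trans (le_abs_self y)
      neg_neg_of_pos (pos_of_mul_neg_right (hsign t (-y) hy') (by linarith [hy.1]))
  refine ⟨min m₁ m₂, lt_min hm₁ hm₂, fun t y hy => ⟨?_, ?_⟩⟩
  · linarith [hf₁ t y hy, min_le_left m₁ m₂]
  · linarith [hf₂ t y hy, min_le_right m₁ m₂]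

/-- Uniform dissipativity estimate for the time-periodic semilinear parabolic equation
`u_t = u_xx + f(t,u,u_x)` on the circle `S¹ = ℝ/2πℤ`: under the sign condition
`y·f(t,y,0) < 0` for `|y| ≥ δ`, every classical solution on `[0,τ)` with
`sup_x |u(0,x)| ≤ δ + R` satisfies `sup_x |u(t,x)| ≤ δ + R e^{-ζ t}` for all `t ∈ [0,τ)`,
with `ζ > 0` depending only on `f`, `δ` and `R`.  The maximal time `τ ∈ (0,∞]` is
modeled as an element of `ℝ≥0∞`, the time domain `[0,τ)` being
`{t : ℝ | 0 ≤ t ∧ ENNReal.ofReal t < τ}`. -/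
theorem dissipativity_estimate
    (T : ℝ) (hT : 0 < T)
    (f : ℝ → ℝ → ℝ → ℝ)
    (hf : ContDiff ℝ 2 fun p : ℝ × ℝ × ℝ => f p.1 p.2.1 p.2.2)
    (hfper : ∀ t y z : ℝ, f (t + T) y z = f t y z)
    (δ : ℝ) (hδ : 0 < δ)
    (hsign : ∀ t y : ℝ, δ ≤ |y| → y * f t y 0 < 0) :
    ∀ R : ℝ, 0 ≤ R → ∃ ζ : ℝ, 0 < ζ ∧
      ∀ (τ : ℝ≥0∞), 0 < τ →
      ∀ u ut ux uxx : ℝ → ℝ → ℝ,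
      -- `u` is `2π`-periodic in `x` on the time domain `[0,τ)`
      (∀ t x : ℝ, 0 ≤ t → ENNReal.ofReal t < τ → u t (x + 2 * π) = u t x) →
      -- `u` is continuous on `[0,τ) × ℝ`
      ContinuousOn (fun p : ℝ × ℝ => u p.1 p.2)
        ({t : ℝ | 0 ≤ t ∧ ENNReal.ofReal t < τ} ×ˢ Set.univ) →
      -- `u_t`, `u_x`, `u_xx` exist on `(0,τ) × ℝ`
      (∀ t x : ℝ, 0 < t → ENNReal.ofReal t < τ →
        HasDerivAt (fun s => u s x) (ut t x) t ∧
        HasDerivAt (fun y => u t y) (ux t x) x ∧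
        HasDerivAt (fun y => ux t y) (uxx t x) x) →
      -- and are continuous on `(0,τ) × ℝ`
      ContinuousOn (fun p : ℝ × ℝ => ut p.1 p.2)
        ({t : ℝ | 0 < t ∧ ENNReal.ofReal t < τ} ×ˢ Set.univ) →
      ContinuousOn (fun p : ℝ × ℝ => ux p.1 p.2)
        ({t : ℝ | 0 < t ∧ ENNReal.ofReal t < τ} ×ˢ Set.univ) →
      ContinuousOn (fun p : ℝ × ℝ => uxx p.1 p.2)
        ({t : ℝ | 0 < t ∧ ENNReal.ofReal t < τ} ×ˢ Set.univ) →
      -- the equation holds on `(0,τ) × ℝ`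
      (∀ t x : ℝ, 0 < t → ENNReal.ofReal t < τ →
        ut t x = uxx t x + f t (u t x) (ux t x)) →
      -- initial bound
      (∀ x : ℝ, |u 0 x| ≤ δ + R) →
      -- conclusion: exponential decay towards the ball of radius `δ`
      ∀ t x : ℝ, 0 ≤ t → ENNReal.ofReal t < τ →
        |u t x| ≤ δ + R * Real.exp (-ζ * t) := by
  intro R hR
  obtain ⟨m, hm, hfm⟩ := exists_pos_forall_le_neg_of_sign_condition
    (hf.continuous.comp (by fun_prop : Continuous fun q : ℝ × ℝ => (q.1, q.2, (0 : ℝ))))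
    hT hfper hδ hsign (δ + R + 1)
  have hζm : m / (2 * (R + 1)) * R < m := by
    rw [div_mul_eq_mul_div, div_lt_iff₀ (by positivity)]
    nlinarith
  refine ⟨m / (2 * (R + 1)), by positivity, ?_⟩
  intro τ _ u ut ux uxx hper hcont hderiv _ _ _ heqn hinit t x ht hτt
  have hdom : ∀ s ∈ Icc 0 t, 0 ≤ s ∧ ENNReal.ofReal s < τ :=
    fun s hs => ⟨hs.1, (ENNReal.ofReal_le_ofReal hs.2).trans_lt hτt⟩
  have hsol : IsSolutionOn f t u ut ux uxx :=
    { continuousOn := hcont.mono (prod_mono (fun s hs => hdom s hs) subset_rfl)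
      hasDerivAt_t := fun s hs y => (hderiv s y hs.1 (hdom s (Ioc_subset_Icc_self hs)).2).1
      hasDerivAt_x := fun s hs y => (hderiv s y hs.1 (hdom s (Ioc_subset_Icc_self hs)).2).2.1
      hasDerivAt_xx := fun s hs y => (hderiv s y hs.1 (hdom s (Ioc_subset_Icc_self hs)).2).2.2
      eq := fun s hs y => heqn s y hs.1 (hdom s (Ioc_subset_Icc_self hs)).2 }
  have hper' : ∀ s ∈ Icc 0 t, Periodic (u s) (2 * π) :=
    fun s hs y => hper s y (hdom s hs).1 (hdom s hs).2
  have hlower := hsol.neg.le_add_mul_exp two_pi_pos (fun s hs => (hper' s hs).comp Neg.neg) hR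
    (by positivity) hζm (fun s y hy => by simpa using (hfm s y hy).2)
    (fun y => by simp only [Pi.neg_apply]; linarith [(abs_le.1 (hinit y)).1]) ht x
  have hupper := hsol.le_add_mul_exp two_pi_pos hper' hR (by positivity) hζm
    (fun s y hy => (hfm s y hy).1) (fun y => (abs_le.1 (hinit y)).2) ht x
  exact abs_le.2 ⟨by linarith [show -u t x ≤ _ from hlower], hupper⟩
end

section
/- Let X be a complex Banach space, S_p : X → X a bounded linear operator, and let v : ℕ → X satisfy v(n) ≠ 0 for all n and ‖v(n+1) − S_p v(n)‖ / ‖v(n)‖ → 0 as n → ∞. Let 0 ≤ a ≤ b and let P be a bounded linear projection on X commuting with S_p such that the spectrum of the restriction V of S_p to ker P is contained in {z ∈ ℂ : |z| < a} and the spectrum of the restriction U of S_p to ran P is contained in {z ∈ ℂ : |z| > b}. Write Q := I − P. Then one of the following two alternatives holds: (i) ‖P v(n)‖ / ‖Q v(n)‖ → ∞ as n → ∞ (with the convention that the ratio is ∞ when Q v(n) = 0) and liminf_{n→∞} ‖v(n)‖^{1/n} ≥ b; or (ii) ‖P v(n)‖ / ‖Q v(n)‖ → 0 as n → ∞ and limsup_{n→∞}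 ‖v(n)‖^{1/n} ≤ a. -/
/-!
On `ran P` and `ker P` there are seminorms equivalent to the norm in which `S` expands by some
`β > b` and contracts by some `ρ < a` (Gelfand's formula, applied to `U⁻¹` and to `V`). Measured
in them, the two components `α n`, `γ n` of `v n` satisfy `α (n+1) ≥ β α n - δ n (α n + γ n)` and
`γ (n+1) ≤ ρ γ n + δ n (α n + γ n)` with `δ n → 0`. If a cone `γ ≤ M α` is entered late enough,
it is never left and `γ / α` contracts to `0` inside it; otherwise `α = o(γ)`. In the first case
`α`, hence `‖v n‖`, grows faster than `r ^ n` for every `r < β`; in the second `γ`, hence `‖v n‖`,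
is `O(a ^ n)`.
-/

open Filter Topology Asymptotics

theorem tendsto_zero_of_le_mul_add {r u : ℕ → ℝ} {κ : ℝ} (hκ0 : 0 ≤ κ) (hκ1 : κ < 1)
    (hr : ∀ n, 0 ≤ r n) (hu : Tendsto u atTop (𝓝 0))
    (h : ∀ᶠ n in atTop, r (n + 1) ≤ κ * r n + u n) : Tendsto r atTop (𝓝 0) := by
  refine tendsto_order.2 ⟨fun c hc => .of_forall fun n => hc.trans_le (hr n), fun ε hε => ?_⟩
  obtain ⟨N, hN⟩ := eventually_atTop.1 <|
    h.and (hu.eventually (eventually_le_nhds (by nlinarith : 0 < (1 - κ) * (ε / 2))))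
  -- `r - ε / 2` decays geometrically from `N` on, as long as `u ≤ (1 - κ) ε / 2`
  have hgeom : ∀ k, r (N + k) - ε / 2 ≤ κ ^ k * (r N - ε / 2) := fun k =>
    le_geom (u := fun k => r (N + k) - ε / 2) hκ0 k fun j _ => by
      have := hN (N + j) (by omega)
      rw [← add_assoc]
      nlinarith
  have hpow : ∀ᶠ n in atTop, κ ^ (n - N) * (r N - ε / 2) < ε / 2 := by
    have := ((tendsto_pow_atTop_nhds_zero_of_lt_one hκ0 hκ1).comp
      (tendsto_sub_atTop_nat N)).mul_const (r N - ε / 2)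
    rw [zero_mul] at this
    exact this.eventually (gt_mem_nhds (half_pos hε))
  filter_upwards [hpow, eventually_ge_atTop N] with n hn hNn
  have := hgeom (n - N)
  rw [Nat.add_sub_cancel' hNn] at this
  linarith

theorem isBigO_pow_of_eventually_mul_le_succ {x : ℕ → ℝ} {r : ℝ} (hr : 0 < r)
    (hx : ∀ᶠ n in atTop, 0 < x n) (h : ∀ᶠ n in atTop, r * x n ≤ x (n + 1)) :
    (fun n => r ^ n) =O[atTop] x := by
  obtain ⟨N, hN⟩ := eventually_atTop.1 (hx.and h)
  refine IsBigO.of_bound (r ^ N / x N) (eventually_atTop.2 ⟨N, fun n hn => ?_⟩)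
  have hgeom := geom_le (u := fun k => x (N + k)) hr.le (n - N) fun k _ =>
    (hN (N + k) (by omega)).2
  simp only [Nat.add_sub_cancel' hn, add_zero] at hgeom
  rw [Real.norm_of_nonneg (by positivity), Real.norm_of_nonneg (hN n hn).1.le,
    div_mul_eq_mul_div, le_div_iff₀ (hN N le_rfl).1]
  calc r ^ n * x N = r ^ N * (r ^ (n - N) * x N) := by
        rw [← mul_assoc, ← pow_add, Nat.add_sub_cancel' hn]
    _ ≤ r ^ N * x n := by gcongr

theorem isBigO_pow_of_eventually_succ_le_mul {x : ℕ → ℝ} {r : ℝ}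
    (hx : ∀ᶠ n in atTop, 0 < x n) (h : ∀ᶠ n in atTop, x (n + 1) ≤ r * x n) :
    x =O[atTop] (fun n => r ^ n) := by
  obtain ⟨N, hN⟩ := eventually_atTop.1 (hx.and h)
  have hr : 0 < r := by
    have h1 := (hN (N + 1) (by omega)).1
    have h2 := hN N le_rfl
    by_contra! hr
    nlinarith
  refine IsBigO.of_bound (x N / r ^ N) (eventually_atTop.2 ⟨N, fun n hn => ?_⟩)
  have hgeom := le_geom (u := fun k => x (N + k)) hr.le (n - N) fun k _ =>
    (hN (N + k) (by omega)).2
  simp only [Nat.add_sub_cancel' hn, add_zero] at hgeom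
  rw [Real.norm_of_nonneg (hN n hn).1.le, Real.norm_of_nonneg (by positivity),
    div_mul_eq_mul_div, le_div_iff₀ (by positivity)]
  calc x n * r ^ N ≤ r ^ (n - N) * x N * r ^ N := by gcongr
    _ = x N * r ^ n := by rw [mul_right_comm, ← pow_add, Nat.sub_add_cancel hn, mul_comm]

theorem tendsto_rpow_one_div_natCast {c : ℝ} (hc : 0 < c) :
    Tendsto (fun n : ℕ => c ^ (1 / (n : ℝ))) atTop (𝓝 1) := by
  simpa [Function.comp_def] using (Real.continuousAt_const_rpow hc.ne').tendsto.comp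
    (tendsto_one_div_atTop_nhds_zero_nat (𝕜 := ℝ))

theorem mul_pow_rpow_one_div {c r : ℝ} (hc : 0 ≤ c) (hr : 0 ≤ r) {n : ℕ} (hn : n ≠ 0) :
    (c * r ^ n) ^ (1 / (n : ℝ)) = c ^ (1 / (n : ℝ)) * r := by
  rw [Real.mul_rpow hc (by positivity), one_div, Real.pow_rpow_inv_natCast hr hn]

theorem ofReal_le_liminf_norm_rpow_of_isBigO {E : Type*} [SeminormedAddCommGroup E]
    {y : ℕ → E} {r : ℝ} (hr : 0 ≤ r) (h : (fun n => r ^ n) =O[atTop] y) :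
    ENNReal.ofReal r ≤ atTop.liminf fun n : ℕ => ENNReal.ofReal (‖y n‖ ^ (1 / (n : ℝ))) := by
  obtain ⟨c, hc, hcy⟩ := h.exists_pos
  have hlim : Tendsto (fun n : ℕ => ENNReal.ofReal (c⁻¹ ^ (1 / (n : ℝ)) * r)) atTop
      (𝓝 (ENNReal.ofReal r)) := by
    simpa using ENNReal.tendsto_ofReal ((tendsto_rpow_one_div_natCast (inv_pos.2 hc)).mul_const r)
  rw [← hlim.liminf_eq]
  refine liminf_le_liminf ?_
  filter_upwards [hcy.bound, eventually_ne_atTop 0] with n hn hn0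
  rw [Real.norm_of_nonneg (by positivity)] at hn
  rw [← mul_pow_rpow_one_div (inv_nonneg.2 hc.le) hr hn0]
  gcongr
  rwa [inv_mul_le_iff₀ hc]

theorem limsup_norm_rpow_le_of_isBigO {E : Type*} [SeminormedAddCommGroup E]
    {y : ℕ → E} {r : ℝ} (hr : 0 ≤ r) (h : y =O[atTop] fun n => r ^ n) :
    (atTop.limsup fun n : ℕ => ENNReal.ofReal (‖y n‖ ^ (1 / (n : ℝ)))) ≤ ENNReal.ofReal r := by
  obtain ⟨c, hc, hcy⟩ := h.exists_pos
  have hlim : Tendsto (fun n : ℕ => ENNReal.ofReal (c ^ (1 / (n : ℝ)) * r)) atTop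
      (𝓝 (ENNReal.ofReal r)) := by
    simpa using ENNReal.tendsto_ofReal ((tendsto_rpow_one_div_natCast hc).mul_const r)
  rw [← hlim.limsup_eq]
  refine limsup_le_limsup ?_
  filter_upwards [hcy.bound, eventually_ne_atTop 0] with n hn hn0
  rw [Real.norm_of_nonneg (by positivity)] at hn
  rw [← mul_pow_rpow_one_div hc.le hr hn0]
  gcongr

theorem eventually_pos_of_isLittleO {ι : Type*} {l : Filter ι} {f g : ι → ℝ} (h : f =o[l] g)
    (hfg : ∀ᶠ x in l, 0 < f x + g x) : ∀ᶠ x in l, 0 < g x := by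
  filter_upwards [h.bound one_half_pos, hfg] with x hx hpos
  rw [Real.norm_eq_abs, Real.norm_eq_abs] at hx
  by_contra! hg
  rw [abs_of_nonpos hg] at hx
  linarith [le_abs_self (f x)]

theorem eventually_mul_norm_le_of_isLittleO {ι E F : Type*} [SeminormedAddGroup E]
    [SeminormedAddGroup F] {l : Filter ι} {f : ι → E} {g : ι → F} (h : f =o[l] g) (C : ℝ) : ∀ᶠ x in l, C * ‖f x‖ ≤ ‖g x‖ := by
  rcases le_or_gt C 0 with hC | hC
  · exact .of_forall fun x => (mul_nonpos_of_nonpos_of_nonneg hC (norm_nonneg _)).trans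
      (norm_nonneg _)
  · filter_upwards [h.bound (inv_pos.2 hC)] with x hx
    exact (le_inv_mul_iff₀ hC).1 hx

/-- `α` and `γ` are the sizes of the expanding and contracting components of an orbit, expanded
at rate `β` and contracted at rate `ρ` up to the relative error `δ`. -/
structure IsPerturbedHyperbolic (β ρ : ℝ) (δ α γ : ℕ → ℝ) : Prop where
  left_nonneg : ∀ n, 0 ≤ α n
  right_nonneg : ∀ n, 0 ≤ γ n
  add_pos : ∀ n, 0 < α n + γ n
  δ_nonneg : ∀ n, 0 ≤ δ n
  tendsto_δ : Tendsto δ atTop (𝓝 0)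
  expand : ∀ n, β * α n - δ n * (α n + γ n) ≤ α (n + 1)
  contract : ∀ n, γ (n + 1) ≤ ρ * γ n + δ n * (α n + γ n)

namespace IsPerturbedHyperbolic

variable {β ρ : ℝ} {δ α γ : ℕ → ℝ}

theorem mono (h : IsPerturbedHyperbolic β ρ δ α γ) {ρ' : ℝ} (hρ : ρ ≤ ρ') :
    IsPerturbedHyperbolic β ρ' δ α γ :=
  { h with
    contract := fun n => (h.contract n).trans <| by gcongr; exact h.right_nonneg n }

theorem expand_of_le_mul (h : IsPerturbedHyperbolic β ρ δ α γ) {M : ℝ} {n : ℕ}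
    (hn : γ n ≤ M * α n) : (β - (1 + M) * δ n) * α n ≤ α (n + 1) := by
  nlinarith [h.expand n, h.δ_nonneg n]

theorem contract_of_le_mul (h : IsPerturbedHyperbolic β ρ δ α γ) {M : ℝ} {n : ℕ}
    (hn : γ n ≤ M * α n) : γ (n + 1) ≤ ρ * γ n + (1 + M) * δ n * α n := by
  nlinarith [h.contract n, h.δ_nonneg n]

theorem le_mul_succ (h : IsPerturbedHyperbolic β ρ δ α γ) (hρ : 0 ≤ ρ) {M : ℝ} {n : ℕ}
    (hM : 0 ≤ M) (hδ : (1 + M) ^ 2 * δ n ≤ M * (β - ρ)) (hn : γ n ≤ M * α n) :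
    γ (n + 1) ≤ M * α (n + 1) :=
  calc γ (n + 1) ≤ ρ * γ n + (1 + M) * δ n * α n := h.contract_of_le_mul hn
    _ ≤ M * ((β - (1 + M) * δ n) * α n) := by nlinarith [h.left_nonneg n]
    _ ≤ M * α (n + 1) := mul_le_mul_of_nonneg_left (h.expand_of_le_mul hn) hM

theorem div_succ_le (h : IsPerturbedHyperbolic β ρ δ α γ) (hρ : 0 ≤ ρ) (hρβ : ρ < β)
    {M : ℝ} {n : ℕ} (hδ : 2 * (1 + M) * δ n ≤ β - ρ) (hn : γ n ≤ M * α n) (hα : 0 < α n) :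
    γ (n + 1) / α (n + 1) ≤ 2 * ρ / (β + ρ) * (γ n / α n) + 2 * (1 + M) / (β + ρ) * δ n := by
  have hα' : (β + ρ) / 2 * α n ≤ α (n + 1) :=
    le_trans (by nlinarith) (h.expand_of_le_mul hn)
  calc γ (n + 1) / α (n + 1)
      ≤ (ρ * γ n + (1 + M) * δ n * α n) / ((β + ρ) / 2 * α n) :=
        div_le_div₀ ((h.right_nonneg _).trans (h.contract_of_le_mul hn))
          (h.contract_of_le_mul hn) (by nlinarith) hα'
    _ = _ := by field_simp

/-- Once the cone `γ ≤ M α` is entered late enough it is never left, and inside it the ratio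
`γ / α` contracts at rate `2ρ / (β + ρ) < 1`. -/
theorem isLittleO_of_frequently_le_mul (h : IsPerturbedHyperbolic β ρ δ α γ) (hρ : 0 ≤ ρ)
    (hρβ : ρ < β) {M : ℝ} (hM : 0 < M) (hfreq : ∃ᶠ n in atTop, γ n ≤ M * α n) :
    γ =o[atTop] α := by
  have hδ : ∀ c > 0, ∀ᶠ n in atTop, δ n ≤ c := fun c hc =>
    h.tendsto_δ.eventually (eventually_le_nhds hc)
  obtain ⟨N, hN⟩ := eventually_atTop.1 <|
    (hδ (M * (β - ρ) / (1 + M) ^ 2) (by have := sub_pos.2 hρβ; positivity)).and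
      (hδ ((β - ρ) / (2 * (1 + M))) (by have := sub_pos.2 hρβ; positivity))
  obtain ⟨n₀, hn₀N, hn₀⟩ := frequently_atTop.1 hfreq N
  have hcone : ∀ n ≥ n₀, γ n ≤ M * α n := fun n hn => by
    induction n, hn using Nat.le_induction with
    | base => exact hn₀
    | succ n hn ih =>
      exact h.le_mul_succ hρ hM.le ((le_div_iff₀' (by positivity)).1 (hN n (by omega)).1) ih
  have hpos : ∀ n ≥ n₀, 0 < α n := fun n hn => by
    nlinarith [h.add_pos n, hcone n hn, h.left_nonneg n]
  rw [isLittleO_iff_tendsto' (eventually_atTop.2 ⟨n₀, fun n hn h0 => absurd h0 (hpos n hn).ne'⟩)]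
  refine tendsto_zero_of_le_mul_add (u := fun n => 2 * (1 + M) / (β + ρ) * δ n)
    (div_nonneg (by linarith) (by linarith)) ((div_lt_one (by linarith)).2 (by linarith))
    (fun n => div_nonneg (h.right_nonneg n) (h.left_nonneg n))
    (by simpa using h.tendsto_δ.const_mul (2 * (1 + M) / (β + ρ)))
    (eventually_atTop.2 ⟨n₀, fun n hn => h.div_succ_le hρ hρβ ?_ (hcone n hn) (hpos n hn)⟩)
  rw [mul_comm, ← le_div_iff₀ (by positivity)]
  exact (hN n (by omega)).2

theorem isLittleO_or_isLittleO (h : IsPerturbedHyperbolic β ρ δ α γ) (hρ : 0 ≤ ρ)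
    (hρβ : ρ < β) : γ =o[atTop] α ∨ α =o[atTop] γ := by
  refine or_iff_not_imp_right.2 fun hαγ => ?_
  rw [isLittleO_iff] at hαγ
  push Not at hαγ
  obtain ⟨c, hc, hfreq⟩ := hαγ
  refine h.isLittleO_of_frequently_le_mul hρ hρβ (inv_pos.2 hc) (hfreq.mono fun n hn => ?_)
  rw [Real.norm_of_nonneg (h.left_nonneg n), Real.norm_of_nonneg (h.right_nonneg n)] at hn
  exact (le_inv_mul_iff₀ hc).2 hn.le

theorem isBigO_pow_left (h : IsPerturbedHyperbolic β ρ δ α γ) (hγα : γ =o[atTop] α) {r : ℝ}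
    (hr : 0 < r) (hrβ : r < β) : (fun n => r ^ n) =O[atTop] α := by
  refine isBigO_pow_of_eventually_mul_le_succ hr
    (eventually_pos_of_isLittleO hγα (.of_forall fun n => add_comm (α n) (γ n) ▸ h.add_pos n)) ?_
  filter_upwards [hγα.bound one_pos,
    h.tendsto_δ.eventually (eventually_le_nhds (by linarith : 0 < (β - r) / 2))] with n hn hδ
  rw [Real.norm_of_nonneg (h.right_nonneg n), Real.norm_of_nonneg (h.left_nonneg n)] at hn
  calc r * α n ≤ (β - (1 + 1) * δ n) * α n := by nlinarith [h.left_nonneg n]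
    _ ≤ α (n + 1) := h.expand_of_le_mul hn

theorem isBigO_pow_right (h : IsPerturbedHyperbolic β ρ δ α γ) (hαγ : α =o[atTop] γ) {r : ℝ}
    (hρr : ρ < r) : γ =O[atTop] fun n => r ^ n := by
  refine isBigO_pow_of_eventually_succ_le_mul
    (eventually_pos_of_isLittleO hαγ (.of_forall h.add_pos)) ?_
  filter_upwards [hαγ.bound one_pos,
    h.tendsto_δ.eventually (eventually_le_nhds (by linarith : 0 < (r - ρ) / 2))] with n hn hδ
  rw [Real.norm_of_nonneg (h.left_nonneg n), Real.norm_of_nonneg (h.right_nonneg n)] at hn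
  nlinarith [h.contract n, h.δ_nonneg n, h.right_nonneg n]

end IsPerturbedHyperbolic

theorem exists_pow_norm_lt_pow_of_spectralRadius_lt {A : Type*} [NormedRing A] [NormedAlgebra ℂ A]
    [CompleteSpace A] (a : A) {θ : ℝ} (h : spectralRadius ℂ a < ENNReal.ofReal θ) :
    ∃ m, 0 < m ∧ ‖a ^ m‖ < θ ^ m := by
  obtain ⟨m, hlt, hm⟩ := ((spectrum.pow_nnnorm_pow_one_div_tendsto_nhds_spectralRadius a
    |>.eventually_lt_const h).and (eventually_gt_atTop 0)).exists
  refine ⟨m, hm, ?_⟩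
  have hθ : 0 < θ := ENNReal.ofReal_pos.1 (h.trans_le' bot_le)
  have hm' : (m : ℝ) ≠ 0 := by positivity
  have := ENNReal.rpow_lt_rpow hlt (by positivity : (0 : ℝ) < m)
  rwa [← ENNReal.rpow_mul, one_div_mul_cancel hm', ENNReal.rpow_one, ENNReal.rpow_natCast,
    ← ENNReal.ofReal_pow hθ.le, ← ENNReal.ofReal_coe_nnreal, coe_nnnorm,
    ENNReal.ofReal_lt_ofReal_iff (by positivity)] at this

noncomputable def orbitSeminorm {𝕜 E : Type*} [NontriviallyNormedField 𝕜] [SeminormedAddCommGroup E]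
    [NormedSpace 𝕜 E] (T : E →L[𝕜] E) (m : ℕ) : Seminorm 𝕜 E :=
  Seminorm.of (fun x => ∑ k ∈ Finset.range m, ‖(T ^ k) x‖)
    (fun x y => by
      simp only [map_add, ← Finset.sum_add_distrib]
      exact Finset.sum_le_sum fun k _ => norm_add_le _ _)
    (fun c x => by simp only [map_smul, norm_smul, Finset.mul_sum])

section orbitSeminorm

variable {𝕜 E : Type*} [NontriviallyNormedField 𝕜] [SeminormedAddCommGroup E] [NormedSpace 𝕜 E]
  (T : E →L[𝕜] E) {m : ℕ}

theorem orbitSeminorm_apply (x : E) : orbitSeminorm T m x = ∑ k ∈ Finset.range m, ‖(T ^ k) x‖ :=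
  rfl

theorem norm_le_orbitSeminorm (hm : 0 < m) (x : E) : ‖x‖ ≤ orbitSeminorm T m x := by
  rw [orbitSeminorm_apply]
  simpa using Finset.single_le_sum (f := fun k => ‖(T ^ k) x‖) (fun _ _ => norm_nonneg _)
    (Finset.mem_range.2 hm)

theorem orbitSeminorm_le (x : E) :
    orbitSeminorm T m x ≤ (∑ k ∈ Finset.range m, ‖T ^ k‖) * ‖x‖ := by
  rw [orbitSeminorm_apply, Finset.sum_mul]
  exact Finset.sum_le_sum fun k _ => (T ^ k).le_opNorm x

theorem orbitSeminorm_apply_le (h : ‖T ^ m‖ ≤ 1) (x : E) :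
    orbitSeminorm T m (T x) ≤ orbitSeminorm T m x := by
  have hshift : ∀ k, (T ^ k) (T x) = (T ^ (k + 1)) x := fun k => by
    rw [pow_succ, mul_apply_eq_comp]
  have hm : ‖(T ^ m) x‖ ≤ ‖(T ^ 0) x‖ := by
    simpa using ((T ^ m).le_opNorm x).trans (mul_le_of_le_one_left (norm_nonneg x) h)
  simp only [orbitSeminorm_apply, hshift]
  linarith [Finset.sum_range_succ' (fun k => ‖(T ^ k) x‖) m,
    Finset.sum_range_succ (fun k => ‖(T ^ k) x‖) m]

end orbitSeminorm

theorem exists_seminorm_map_le_mul_of_spectralRadius_lt {E : Type*} [NormedAddCommGroup E]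
    [NormedSpace ℂ E] [CompleteSpace E] (T : E →L[ℂ] E) {θ : ℝ}
    (h : spectralRadius ℂ T < ENNReal.ofReal θ) :
    ∃ N : Seminorm ℂ E, ∃ C ≥ 0, (∀ x, ‖x‖ ≤ N x) ∧ (∀ x, N x ≤ C * ‖x‖) ∧
      ∀ x, N (T x) ≤ θ * N x := by
  have hθ : 0 < θ := ENNReal.ofReal_pos.1 (h.trans_le' bot_le)
  obtain ⟨m, hm, hTm⟩ := exists_pow_norm_lt_pow_of_spectralRadius_lt T h
  set T' := (θ⁻¹ : ℂ) • T
  have hT' : ‖T' ^ m‖ ≤ 1 := by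
    rw [smul_pow, norm_smul, norm_pow, norm_inv, Complex.norm_real, Real.norm_of_nonneg hθ.le,
      inv_pow, inv_mul_le_one₀ (by positivity)]
    exact hTm.le
  refine ⟨orbitSeminorm T' m, _, by positivity, norm_le_orbitSeminorm T' hm,
    orbitSeminorm_le T', fun x => ?_⟩
  have hTx : T x = (θ : ℂ) • T' x := by
    simp [T', smul_smul, mul_inv_cancel₀ (Complex.ofReal_ne_zero.2 hθ.ne')]
  rw [hTx, map_smul_eq_mul, Complex.norm_real, Real.norm_of_nonneg hθ.le]
  exact mul_le_mul_of_nonneg_left (orbitSeminorm_apply_le T' hT' x) hθ.le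

theorem exists_seminorm_map_le_mul_of_spectrum_subset {E : Type*} [NormedAddCommGroup E]
    [NormedSpace ℂ E] [CompleteSpace E] (T : E →L[ℂ] E) {a : ℝ}
    (hσ : spectrum ℂ T ⊆ {z | ‖z‖ < a}) :
    ∃ ρ < a, ∃ N : Seminorm ℂ E, ∃ C ≥ 0, (∀ x, ‖x‖ ≤ N x) ∧ (∀ x, N x ≤ C * ‖x‖) ∧
      ∀ x, N (T x) ≤ ρ * N x := by
  cases subsingleton_or_nontrivial E with
  | inl _ =>
    exact ⟨a - 1, by linarith, normSeminorm ℂ E, 1, zero_le_one, fun _ => le_rfl,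
      fun x => by simp, fun x => by simp [Subsingleton.elim x 0]⟩
  | inr _ =>
    obtain ⟨z, hz, hzr⟩ := spectrum.exists_nnnorm_eq_spectralRadius_of_nonempty
      (spectrum.nonempty T)
    have hza : ‖z‖ < a := hσ hz
    refine ⟨(‖z‖ + a) / 2, by linarith, exists_seminorm_map_le_mul_of_spectralRadius_lt T ?_⟩
    rw [← hzr, ← ENNReal.ofReal_coe_nnreal, coe_nnnorm,
      ENNReal.ofReal_lt_ofReal_iff (by linarith [norm_nonneg z])]
    linarith

theorem exists_seminorm_mul_le_map_of_spectrum_subset {E : Type*} [NormedAddCommGroup E]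
    [NormedSpace ℂ E] [CompleteSpace E] (T : E →L[ℂ] E) {b : ℝ} (hb : 0 ≤ b)
    (hσ : spectrum ℂ T ⊆ {z | b < ‖z‖}) :
    ∃ β > b, ∃ N : Seminorm ℂ E, ∃ C ≥ 0, (∀ x, ‖x‖ ≤ N x) ∧ (∀ x, N x ≤ C * ‖x‖) ∧
      ∀ x, β * N x ≤ N (T x) := by
  cases subsingleton_or_nontrivial E with
  | inl _ =>
    exact ⟨b + 1, by linarith, normSeminorm ℂ E, 1, zero_le_one, fun _ => le_rfl,
      fun x => by simp, fun x => by simp [Subsingleton.elim x 0]⟩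
  | inr _ =>
    obtain ⟨z, hz, hzmin⟩ := (spectrum.isCompact T).exists_isMinOn (spectrum.nonempty T)
      continuous_norm.continuousOn
    have hbz : b < ‖z‖ := hσ hz
    obtain ⟨β, hbβ, hβz⟩ := exists_between hbz
    have hβ : 0 < β := hb.trans_lt hbβ
    have hT : IsUnit T := spectrum.isUnit_of_zero_notMem ℂ fun h0 => by
      simpa using hb.trans_lt (hσ h0)
    have hσinv : spectrum ℂ (↑hT.unit⁻¹ : E →L[ℂ] E) ⊆ {w | ‖w‖ < β⁻¹} := by
      intro w hw
      rw [← spectrum.map_inv, Set.mem_inv, IsUnit.unit_spec] at hw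
      have hzw : ‖z‖ ≤ ‖w‖⁻¹ := norm_inv w ▸ hzmin hw
      rcases eq_or_ne w 0 with rfl | hw0
      · simpa using hβ
      · exact (lt_inv_comm₀ hβ (norm_pos_iff.2 hw0)).1 (hβz.trans_le hzw)
    obtain ⟨ρ, hρ, N, C, hC, hle, hleC, hN⟩ :=
      exists_seminorm_map_le_mul_of_spectrum_subset _ hσinv
    refine ⟨β, hbβ, N, C, hC, hle, hleC, fun x => ?_⟩
    have hx := hN (T x)
    rw [← mul_apply_eq_comp, hT.val_inv_mul, one_apply_eq_self] at hx
    calc β * N x ≤ β * (β⁻¹ * N (T x)) := by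
          gcongr
          exact hx.trans (mul_le_mul_of_nonneg_right hρ.le (apply_nonneg _ _))
      _ = N (T x) := by field_simp

structure AdaptedSeminorms {X : Type*} [NormedAddCommGroup X] [NormedSpace ℂ X]
    (S P : X →L[ℂ] X) (β ρ : ℝ) where
  expanding : Seminorm ℂ X
  contracting : Seminorm ℂ X
  C : ℝ
  C_nonneg : 0 ≤ C
  norm_apply_le_expanding : ∀ x, ‖P x‖ ≤ expanding x
  expanding_le : ∀ x, expanding x ≤ C * ‖P x‖
  norm_sub_apply_le_contracting : ∀ x, ‖x - P x‖ ≤ contracting x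
  contracting_le : ∀ x, contracting x ≤ C * ‖x - P x‖
  mul_expanding_le_apply : ∀ x, β * expanding x ≤ expanding (S x)
  contracting_apply_le_mul : ∀ x, contracting (S x) ≤ ρ * contracting x

theorem exists_adaptedSeminorms {X : Type*} [NormedAddCommGroup X] [NormedSpace ℂ X]
    [CompleteSpace X] (S P : X →L[ℂ] X) (hproj : P ∘L P = P) (hcomm : S ∘L P = P ∘L S)
    {a b : ℝ} (hb : 0 ≤ b)
    (V : LinearMap.ker (P : X →ₗ[ℂ] X) →L[ℂ] LinearMap.ker (P : X →ₗ[ℂ] X))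
    (hV : ∀ x : LinearMap.ker (P : X →ₗ[ℂ] X), (V x : X) = S x)
    (hσV : spectrum ℂ V ⊆ {z : ℂ | ‖z‖ < a})
    (U : LinearMap.range (P : X →ₗ[ℂ] X) →L[ℂ] LinearMap.range (P : X →ₗ[ℂ] X))
    (hU : ∀ x : LinearMap.range (P : X →ₗ[ℂ] X), (U x : X) = S x)
    (hσU : spectrum ℂ U ⊆ {z : ℂ | b < ‖z‖}) :
    ∃ β > b, ∃ ρ < a, Nonempty (AdaptedSeminorms S P β ρ) := by
  have hPP : ∀ x, P (P x) = P x := DFunLike.congr_fun hproj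
  have hSP : ∀ x, S (P x) = P (S x) := DFunLike.congr_fun hcomm
  have : CompleteSpace (LinearMap.ker (P : X →ₗ[ℂ] X)) := P.isClosed_ker.completeSpace_coe
  have : CompleteSpace (LinearMap.range (P : X →ₗ[ℂ] X)) :=
    (ContinuousLinearMap.IsIdempotentElem.isClosed_range hproj).completeSpace_coe
  obtain ⟨β, hbβ, Nu, Cu, hCu, hNu, hNuC, hNuU⟩ :=
    exists_seminorm_mul_le_map_of_spectrum_subset U hb hσU
  obtain ⟨ρ, hρa, Ns, Cs, hCs, hNs, hNsC, hNsV⟩ :=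
    exists_seminorm_map_le_mul_of_spectrum_subset V hσV
  let πu : X →ₗ[ℂ] LinearMap.range (P : X →ₗ[ℂ] X) := (P : X →ₗ[ℂ] X).rangeRestrict
  let πs : X →ₗ[ℂ] LinearMap.ker (P : X →ₗ[ℂ] X) :=
    (LinearMap.id - (P : X →ₗ[ℂ] X)).codRestrict _ fun x => by simp [hPP]
  have hπu : ∀ x, U (πu x) = πu (S x) := fun x => Subtype.ext <| by simp [πu, hU, hSP]
  have hπs : ∀ x, V (πs x) = πs (S x) := fun x => Subtype.ext <| by simp [πs, hV, hSP]
  refine ⟨β, hbβ, ρ, hρa, ⟨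
    { expanding := Nu.comp πu
      contracting := Ns.comp πs
      C := max Cu Cs
      C_nonneg := hCu.trans (le_max_left _ _)
      norm_apply_le_expanding := fun x => hNu (πu x)
      expanding_le := fun x => (hNuC (πu x)).trans <|
        mul_le_mul_of_nonneg_right (le_max_left _ _) (norm_nonneg _)
      norm_sub_apply_le_contracting := fun x => hNs (πs x)
      contracting_le := fun x => (hNsC (πs x)).trans <|
        mul_le_mul_of_nonneg_right (le_max_right _ _) (norm_nonneg _)
      mul_expanding_le_apply := fun x => by simpa [← hπu] using hNuU (πu x)
      contracting_apply_le_mul := fun x => by simpa [← hπs] using hNsV (πs x) }⟩⟩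

namespace AdaptedSeminorms

variable {X : Type*} [NormedAddCommGroup X] [NormedSpace ℂ X] {S P : X →L[ℂ] X} {β ρ : ℝ}
  (A : AdaptedSeminorms S P β ρ)

theorem norm_le_add (x : X) : ‖x‖ ≤ A.expanding x + A.contracting x :=
  calc ‖x‖ = ‖P x + (x - P x)‖ := by rw [add_sub_cancel]
    _ ≤ A.expanding x + A.contracting x := (norm_add_le _ _).trans <|
      add_le_add (A.norm_apply_le_expanding x) (A.norm_sub_apply_le_contracting x)

theorem add_le (x : X) : A.expanding x + A.contracting x ≤ A.C * (1 + 2 * ‖P‖) * ‖x‖ := by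
  have hP := P.le_opNorm x
  have hQ : ‖x - P x‖ ≤ ‖x‖ + ‖P‖ * ‖x‖ := (norm_sub_le _ _).trans (by gcongr)
  nlinarith [A.expanding_le x, A.contracting_le x, A.C_nonneg]

theorem isPerturbedHyperbolic {v : ℕ → X} (hvne : ∀ n, v n ≠ 0)
    (hv : Tendsto (fun n => ‖v (n + 1) - S (v n)‖ / ‖v n‖) atTop (𝓝 0)) :
    IsPerturbedHyperbolic β ρ
      (fun n => A.C * (1 + 2 * ‖P‖) * (‖v (n + 1) - S (v n)‖ / ‖v n‖))
      (fun n => A.expanding (v n)) (fun n => A.contracting (v n)) := by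
  have hK : 0 ≤ A.C * (1 + 2 * ‖P‖) := mul_nonneg A.C_nonneg (by positivity)
  have herr : ∀ n, A.expanding (v (n + 1) - S (v n)) + A.contracting (v (n + 1) - S (v n)) ≤
      A.C * (1 + 2 * ‖P‖) * (‖v (n + 1) - S (v n)‖ / ‖v n‖) *
        (A.expanding (v n) + A.contracting (v n)) := fun n => by
    calc _ ≤ A.C * (1 + 2 * ‖P‖) * ‖v (n + 1) - S (v n)‖ := A.add_le _
      _ = A.C * (1 + 2 * ‖P‖) * (‖v (n + 1) - S (v n)‖ / ‖v n‖) * ‖v n‖ := by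
        rw [mul_assoc _ (_ / _), div_mul_cancel₀ _ (norm_ne_zero_iff.2 (hvne n))]
      _ ≤ _ := mul_le_mul_of_nonneg_left (A.norm_le_add (v n)) (mul_nonneg hK (by positivity))
  refine
    { left_nonneg := fun n => apply_nonneg _ _
      right_nonneg := fun n => apply_nonneg _ _
      add_pos := fun n => (norm_pos_iff.2 (hvne n)).trans_le (A.norm_le_add (v n))
      δ_nonneg := fun n => mul_nonneg hK (by positivity)
      tendsto_δ := by simpa using hv.const_mul (A.C * (1 + 2 * ‖P‖))
      expand := fun n => ?_
      contract := fun n => ?_ }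
  · have := map_sub_le_add A.expanding (v (n + 1)) (v (n + 1) - S (v n))
    rw [_root_.sub_sub_cancel] at this
    linarith [A.mul_expanding_le_apply (v n), herr n, apply_nonneg A.contracting (v (n + 1) - S (v n))]
  · have := map_add_le_add A.contracting (S (v n)) (v (n + 1) - S (v n))
    rw [add_sub_cancel] at this
    linarith [A.contracting_apply_le_mul (v n), herr n, apply_nonneg A.expanding (v (n + 1) - S (v n))]

variable {ι : Type*} {l : Filter ι} {v : ι → X}

theorem isBigO_expanding : (fun i => A.expanding (v i)) =O[l] v :=
  isBigO_of_le' (c := A.C * ‖P‖) l fun i => by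
    rw [Real.norm_of_nonneg (apply_nonneg _ _), mul_assoc]
    exact (A.expanding_le _).trans (mul_le_mul_of_nonneg_left (P.le_opNorm _) A.C_nonneg)

theorem isBigO_add : v =O[l] fun i => A.expanding (v i) + A.contracting (v i) :=
  isBigO_of_le l fun i => (A.norm_le_add (v i)).trans (le_abs_self _)

theorem isLittleO_sub_apply
    (h : (fun i => A.contracting (v i)) =o[l] fun i => A.expanding (v i)) :
    (fun i => v i - P (v i)) =o[l] fun i => P (v i) :=
  (isBigO_of_le l fun i =>
    (A.norm_sub_apply_le_contracting _).trans (le_abs_self _)).trans_isLittleO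
    (h.trans_isBigO (isBigO_of_le' l fun i => by
      rw [Real.norm_of_nonneg (apply_nonneg _ _)]; exact A.expanding_le _))

theorem isLittleO_apply
    (h : (fun i => A.expanding (v i)) =o[l] fun i => A.contracting (v i)) :
    (fun i => P (v i)) =o[l] fun i => v i - P (v i) :=
  (isBigO_of_le l fun i => (A.norm_apply_le_expanding _).trans (le_abs_self _)).trans_isLittleO
    (h.trans_isBigO (isBigO_of_le' l fun i => by
      rw [Real.norm_of_nonneg (apply_nonneg _ _)]; exact A.contracting_le _))

end AdaptedSeminorms

/-- Dichotomy for asymptotically linear sequences (forward version):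
if `‖v(n+1) - S_p v(n)‖/‖v(n)‖ → 0` and the spectrum of `S_p` splits into a part of
modulus `> b` (on `ran P`) and a part of modulus `< a` (on `ker P`), then either the
`P`-component dominates and `liminf ‖v(n)‖^{1/n} ≥ b`, or the `Q`-component dominates
and `limsup ‖v(n)‖^{1/n} ≤ a`. -/
theorem forward_dichotomy
    {X : Type*} [NormedAddCommGroup X] [NormedSpace ℂ X] [CompleteSpace X]
    (S P : X →L[ℂ] X)
    (hproj : P ∘L P = P) (hcomm : S ∘L P = P ∘L S)
    (a b : ℝ) (ha : 0 ≤ a) (hab : a ≤ b)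
    -- `V`, the restriction of `S` to `ker P`, has spectrum in `{|z| < a}`
    (V : LinearMap.ker (P : X →ₗ[ℂ] X) →L[ℂ] LinearMap.ker (P : X →ₗ[ℂ] X))
    (hV : ∀ x : LinearMap.ker (P : X →ₗ[ℂ] X), (V x : X) = S x)
    (hσV : spectrum ℂ V ⊆ {z : ℂ | ‖z‖ < a})
    -- `U`, the restriction of `S` to `ran P`, has spectrum in `{|z| > b}`
    (U : LinearMap.range (P : X →ₗ[ℂ] X) →L[ℂ] LinearMap.range (P : X →ₗ[ℂ] X))
    (hU : ∀ x : LinearMap.range (P : X →ₗ[ℂ] X), (U x : X) = S x)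
    (hσU : spectrum ℂ U ⊆ {z : ℂ | b < ‖z‖})
    (v : ℕ → X) (hvne : ∀ n, v n ≠ 0)
    (hv : Tendsto (fun n => ‖v (n + 1) - S (v n)‖ / ‖v n‖) atTop (𝓝 0)) :
    -- alternative (i): `‖P v(n)‖/‖Q v(n)‖ → ∞` and `liminf ‖v(n)‖^{1/n} ≥ b`
    ((∀ C : ℝ, ∀ᶠ n in atTop, C * ‖v n - P (v n)‖ ≤ ‖P (v n)‖) ∧
      ENNReal.ofReal b ≤ atTop.liminf fun n : ℕ =>
        ENNReal.ofReal (‖v n‖ ^ (1 / (n : ℝ)))) ∨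
    -- alternative (ii): `‖P v(n)‖/‖Q v(n)‖ → 0` and `limsup ‖v(n)‖^{1/n} ≤ a`
    ((∀ ε : ℝ, 0 < ε → ∀ᶠ n in atTop, ‖P (v n)‖ ≤ ε * ‖v n - P (v n)‖) ∧
      (atTop.limsup fun n : ℕ => ENNReal.ofReal (‖v n‖ ^ (1 / (n : ℝ)))) ≤
        ENNReal.ofReal a) := by
  obtain ⟨β, hbβ, ρ, hρa, ⟨A⟩⟩ :=
    exists_adaptedSeminorms S P hproj hcomm (ha.trans hab) V hV hσV U hU hσU
  have h := A.isPerturbedHyperbolic hvne hv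
  rcases (h.mono (le_max_left ρ 0)).isLittleO_or_isLittleO (le_max_right ρ 0)
    (max_lt (by linarith) (by linarith)) with hγα | hαγ
  · obtain ⟨r, hbr, hrβ⟩ := exists_between hbβ
    refine Or.inl ⟨eventually_mul_norm_le_of_isLittleO (A.isLittleO_sub_apply hγα), ?_⟩
    calc ENNReal.ofReal b ≤ ENNReal.ofReal r := ENNReal.ofReal_le_ofReal hbr.le
      _ ≤ _ := ofReal_le_liminf_norm_rpow_of_isBigO (by linarith)
          ((h.isBigO_pow_left hγα (by linarith) hrβ).trans A.isBigO_expanding)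
  · refine Or.inr ⟨fun ε hε => by simpa using (A.isLittleO_apply hαγ).bound hε, ?_⟩
    exact limsup_norm_rpow_le_of_isBigO ha (A.isBigO_add.trans
      ((hαγ.isBigO.add (isBigO_refl _ _)).trans (h.isBigO_pow_right hαγ hρa)))
end

section
/- Let X be a complex Banach space, S_p : X → X a bounded linear operator, and let v : ℕ → X satisfy v(n) ≠ 0 for all n and ‖v(n+1) − S_p v(n)‖ / ‖v(n)‖ → 0 as n → ∞. Let 0 < α < β and let P_α, P_β be bounded linear projections on X, each commuting with S_p, satisfying P_α ∘ P_β = P_β ∘ P_α = P_β, such that: the spectrum of the restriction of S_p to ker P_α lies in {|z| < α} and to ran P_α lies in {|z| > α}; the spectrum of the restriction of S_p to ker P_β lies in {|z| < β} and to ran P_β lies in {|z| > β}; and P_* := P_α − P_β has finite-dimensional range. Assume ‖P_α v(n)‖ / ‖(I − P_α) v(n)‖ → ∞ and ‖P_β v(n)‖ / ‖(I − P_β) v(n)‖ → 0 as n → ∞ (with the convention that a ratio with vanishing denominator is ∞). Then the normalized sequence v̂(n) := v(n)/‖v(n)‖ is relatively compact in X, and its ω-limit set ⋂_{n≥0} closure{v̂(m)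 : m ≥ n} is a nonempty compact subset of {x ∈ ran P_* : ‖x‖ = 1}. -/
/-!
Since `‖(I - P_α) v n‖ = o(‖v n‖)` and `‖P_β v n‖ = o(‖v n‖)`, the normalized vectors `v̂ n` are
asymptotic to `P_* v̂ n`, which stay in a bounded subset of the finite-dimensional space `ran P_*`.
Hence `range v̂` is totally bounded, and its cluster points, which form the ω-limit set, lie in the
closed subspace `ran P_*` and on the unit sphere.
-/

open Filter Topology Asymptotics Metric Set

section ClusterPoints

variable {X : Type*}

theorem iInter_closure_image_tail_eq_setOf_mapClusterPt [TopologicalSpace X] (u : ℕ → X) :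
    ⋂ n, closure (u '' {m | n ≤ m}) = {x | MapClusterPt x atTop u} := by
  ext x
  simp only [mem_iInter, mem_ofPred_eq, mapClusterPt_atTop_iff_forall_mem_closure]
  rfl

theorem MapClusterPt.of_tendsto_dist [PseudoMetricSpace X] {ι : Type*} {l : Filter ι}
    {u w : ι → X} {x : X} (hx : MapClusterPt x l u)
    (huw : Tendsto (fun n => dist (u n) (w n)) l (𝓝 0)) : MapClusterPt x l w := by
  refine mapClusterPt_iff_frequently.2 fun s hs => ?_
  obtain ⟨ε, hε, hεs⟩ := Metric.mem_nhds_iff.1 hs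
  refine ((hx.frequently (ball_mem_nhds x (half_pos hε))).and_eventually
    ((tendsto_order.1 huw).2 _ (half_pos hε))).mono fun n ⟨hun, hdist⟩ => hεs ?_
  calc dist (w n) x ≤ dist (u n) (w n) + dist (u n) x := dist_triangle_left _ _ _
    _ < ε / 2 + ε / 2 := add_lt_add hdist hun
    _ = ε := add_halves ε

theorem totallyBounded_range_of_tendsto_dist [PseudoMetricSpace X] {u w : ℕ → X}
    (hw : TotallyBounded (range w)) (huw : Tendsto (fun n => dist (u n) (w n)) atTop (𝓝 0)) :
    TotallyBounded (range u) := by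
  refine Metric.totallyBounded_iff.2 fun ε hε => ?_
  obtain ⟨t, ht, hwt⟩ := Metric.totallyBounded_iff.1 hw (ε / 2) (half_pos hε)
  obtain ⟨N, hN⟩ := eventually_atTop.1 ((tendsto_order.1 huw).2 _ (half_pos hε))
  refine ⟨t ∪ u '' Iio N, ht.union ((finite_Iio N).image u), ?_⟩
  rintro _ ⟨n, rfl⟩
  rcases lt_or_ge n N with hn | hn
  · exact mem_biUnion (mem_union_right _ (mem_image_of_mem u hn)) (mem_ball_self hε)
  · obtain ⟨y, hy, hwy⟩ := mem_iUnion₂.1 (hwt (mem_range_self n))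
    refine mem_biUnion (mem_union_left _ hy) ?_
    calc dist (u n) y ≤ dist (u n) (w n) + dist (w n) y := dist_triangle _ _ _
      _ < ε / 2 + ε / 2 := add_lt_add (hN n hn) hwy
      _ = ε := add_halves ε

theorem totallyBounded_map_of_totallyBounded_range [UniformSpace X] {ι : Type*} {l : Filter ι}
    {u : ι → X} (hu : TotallyBounded (range u)) : (map u l).TotallyBounded :=
  (totallyBounded_principal_iff.2 hu).mono (tendsto_principal.2 (.of_forall mem_range_self))

end ClusterPoints

theorem isLittleO_of_forall_mul_norm_le {α E F : Type*} [Norm E] [Norm F] {l : Filter α}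
    {f : α → E} {g : α → F} (h : ∀ C : ℝ, ∀ᶠ x in l, C * ‖f x‖ ≤ ‖g x‖) : f =o[l] g :=
  IsLittleO.of_bound fun c hc => (h c⁻¹).mono fun x hx => by rwa [inv_mul_le_iff₀ hc] at hx

theorem tendsto_inv_norm_smul_of_isLittleO {α E F : Type*} [SeminormedAddCommGroup E]
    [NormedSpace ℝ E] [SeminormedAddCommGroup F] {l : Filter α} {f : α → E} {g : α → F}
    (h : f =o[l] g) : Tendsto (fun x => ‖g x‖⁻¹ • f x) l (𝓝 0) := by
  refine tendsto_zero_iff_norm_tendsto_zero.2 ?_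
  simpa [norm_smul, div_eq_inv_mul] using h.norm_norm.tendsto_div_nhds_zero

theorem isLittleO_sub_sub_apply {𝕜 X ι : Type*} [NontriviallyNormedField 𝕜]
    [SeminormedAddCommGroup X] [NormedSpace 𝕜 X] {l : Filter ι} {P R : X →L[𝕜] X} {v : ι → X}
    (hP : ∀ C : ℝ, ∀ᶠ n in l, C * ‖v n - P (v n)‖ ≤ ‖P (v n)‖)
    (hR : ∀ ε : ℝ, 0 < ε → ∀ᶠ n in l, ‖R (v n)‖ ≤ ε * ‖v n - R (v n)‖) :
    (fun n => v n - (P - R) (v n)) =o[l] v := by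
  have hPv : (fun n => v n - P (v n)) =o[l] v :=
    (isLittleO_of_forall_mul_norm_le hP).trans_isBigO (P.isBigO_comp v l)
  have hRv : (fun n => R (v n)) =o[l] v :=
    (IsLittleO.of_bound hR).trans_isBigO ((isBigO_refl v l).sub (R.isBigO_comp v l))
  refine (hPv.add hRv).congr_left fun n => ?_
  simp only [sub_apply]
  abel

theorem Submodule.totallyBounded_of_isBounded {𝕜 X : Type*} [NontriviallyNormedField 𝕜]
    [LocallyCompactSpace 𝕜] [NormedAddCommGroup X] [NormedSpace 𝕜 X] (E : Submodule 𝕜 X)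
    [FiniteDimensional 𝕜 E] {s : Set X} (hs : Bornology.IsBounded s) (hsE : s ⊆ E) :
    TotallyBounded s := by
  have := FiniteDimensional.proper 𝕜 E
  obtain ⟨r, hr⟩ := hs.subset_closedBall 0
  refine ((isCompact_closedBall (0 : E) r).image continuous_subtype_val).totallyBounded.subset ?_
  intro x hx
  exact ⟨⟨x, hsE hx⟩, by simpa using hr hx, rfl⟩

theorem omega_limit_in_finite_dimensional_eigenspace_general
    {X : Type*} [NormedAddCommGroup X] [NormedSpace ℂ X] [CompleteSpace X]
    (Pa Pb : X →L[ℂ] X)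
    -- `P_* = P_α - P_β` has finite-dimensional range
    (hfin : FiniteDimensional ℂ (LinearMap.range ((Pa - Pb : X →L[ℂ] X) : X →ₗ[ℂ] X)))
    (v : ℕ → X) (hvne : ∀ n, v n ≠ 0)
    -- `‖P_α v(n)‖/‖(I-P_α) v(n)‖ → ∞`
    (hXa : ∀ C : ℝ, ∀ᶠ n in atTop, C * ‖v n - Pa (v n)‖ ≤ ‖Pa (v n)‖)
    -- `‖P_β v(n)‖/‖(I-P_β) v(n)‖ → 0`
    (hXb : ∀ ε : ℝ, 0 < ε → ∀ᶠ n in atTop, ‖Pb (v n)‖ ≤ ε * ‖v n - Pb (v n)‖) :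
    IsCompact (closure (Set.range fun n : ℕ => ‖v n‖⁻¹ • v n)) ∧
    (⋂ n : ℕ, closure ((fun m : ℕ => ‖v m‖⁻¹ • v m) '' {m | n ≤ m})).Nonempty ∧
    IsCompact (⋂ n : ℕ, closure ((fun m : ℕ => ‖v m‖⁻¹ • v m) '' {m | n ≤ m})) ∧
    (⋂ n : ℕ, closure ((fun m : ℕ => ‖v m‖⁻¹ • v m) '' {m | n ≤ m})) ⊆
      {x : X | x ∈ LinearMap.range ((Pa - Pb : X →L[ℂ] X) : X →ₗ[ℂ] X) ∧ ‖x‖ = 1} := by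
  set f : ℕ → X := fun m => ‖v m‖⁻¹ • v m
  set Q : X →L[ℂ] X := Pa - Pb
  set E := LinearMap.range (Q : X →ₗ[ℂ] X)
  have hf_sphere : ∀ n, f n ∈ sphere (0 : X) 1 := fun n => by simp [f, norm_smul, hvne n]
  have hfQf : Tendsto (fun n => dist (f n) (Q (f n))) atTop (𝓝 0) := by
    have := tendsto_inv_norm_smul_of_isLittleO (isLittleO_sub_sub_apply hXa hXb)
    simpa [dist_eq_norm, f, smul_sub, Q] using tendsto_zero_iff_norm_tendsto_zero.1 this
  have hQf : TotallyBounded (range fun n => Q (f n)) :=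
    E.totallyBounded_of_isBounded
      ((Q.lipschitz.isBounded_image isBounded_sphere).subset
        (range_subset_iff.2 fun n => mem_image_of_mem Q (hf_sphere n)))
      (range_subset_iff.2 fun n => LinearMap.mem_range_self _ _)
  have hf := totallyBounded_range_of_tendsto_dist hQf hfQf
  have hmap := totallyBounded_map_of_totallyBounded_range (l := atTop) hf
  rw [iInter_closure_image_tail_eq_setOf_mapClusterPt]
  refine ⟨hf.closure.isCompact_of_isClosed isClosed_closure, hmap.exists_clusterPt,
    hmap.isCompact_setOfPred_clusterPt, fun x hx => ⟨?_, ?_⟩⟩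
  · exact E.closed_of_finiteDimensional.mem_of_mapClusterPt (hx.of_tendsto_dist hfQf)
      (.of_forall fun n => LinearMap.mem_range_self _ _)
  · simpa using isClosed_sphere.mem_of_mapClusterPt hx (.of_forall hf_sphere)

/-- Compactness of the normalized sequence and localization of its ω-limit set in the
unit sphere of the finite-dimensional spectral subspace `ran (P_α - P_β)` (forward
version). -/
theorem omega_limit_in_finite_dimensional_eigenspace
    {X : Type*} [NormedAddCommGroup X] [NormedSpace ℂ X] [CompleteSpace X]
    (S Pa Pb : X →L[ℂ] X)
    (hPa : Pa ∘L Pa = Pa) (hPb : Pb ∘L Pb = Pb)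
    (hSa : S ∘L Pa = Pa ∘L S) (hSb : S ∘L Pb = Pb ∘L S)
    (hab : Pa ∘L Pb = Pb) (hba : Pb ∘L Pa = Pb)
    (α β : ℝ) (hα : 0 < α) (hαβ : α < β)
    -- spectral splitting of `S` by `Pa` at modulus `α`
    (Va : LinearMap.ker (Pa : X →ₗ[ℂ] X) →L[ℂ] LinearMap.ker (Pa : X →ₗ[ℂ] X))
    (hVa : ∀ x : LinearMap.ker (Pa : X →ₗ[ℂ] X), (Va x : X) = S x)
    (hσVa : spectrum ℂ Va ⊆ {z : ℂ | ‖z‖ < α})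
    (Ua : LinearMap.range (Pa : X →ₗ[ℂ] X) →L[ℂ] LinearMap.range (Pa : X →ₗ[ℂ] X))
    (hUa : ∀ x : LinearMap.range (Pa : X →ₗ[ℂ] X), (Ua x : X) = S x)
    (hσUa : spectrum ℂ Ua ⊆ {z : ℂ | α < ‖z‖})
    -- spectral splitting of `S` by `Pb` at modulus `β`
    (Vb : LinearMap.ker (Pb : X →ₗ[ℂ] X) →L[ℂ] LinearMap.ker (Pb : X →ₗ[ℂ] X))
    (hVb : ∀ x : LinearMap.ker (Pb : X →ₗ[ℂ] X), (Vb x : X) = S x)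
    (hσVb : spectrum ℂ Vb ⊆ {z : ℂ | ‖z‖ < β})
    (Ub : LinearMap.range (Pb : X →ₗ[ℂ] X) →L[ℂ] LinearMap.range (Pb : X →ₗ[ℂ] X))
    (hUb : ∀ x : LinearMap.range (Pb : X →ₗ[ℂ] X), (Ub x : X) = S x)
    (hσUb : spectrum ℂ Ub ⊆ {z : ℂ | β < ‖z‖})
    -- `P_* = P_α - P_β` has finite-dimensional range
    (hfin : FiniteDimensional ℂ (LinearMap.range ((Pa - Pb : X →L[ℂ] X) : X →ₗ[ℂ] X)))
    (v : ℕ → X) (hvne : ∀ n, v n ≠ 0)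
    (hv : Tendsto (fun n => ‖v (n + 1) - S (v n)‖ / ‖v n‖) atTop (𝓝 0))
    -- `‖P_α v(n)‖/‖(I-P_α) v(n)‖ → ∞`
    (hXa : ∀ C : ℝ, ∀ᶠ n in atTop, C * ‖v n - Pa (v n)‖ ≤ ‖Pa (v n)‖)
    -- `‖P_β v(n)‖/‖(I-P_β) v(n)‖ → 0`
    (hXb : ∀ ε : ℝ, 0 < ε → ∀ᶠ n in atTop, ‖Pb (v n)‖ ≤ ε * ‖v n - Pb (v n)‖) :
    IsCompact (closure (Set.range fun n : ℕ => ‖v n‖⁻¹ • v n)) ∧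
    (⋂ n : ℕ, closure ((fun m : ℕ => ‖v m‖⁻¹ • v m) '' {m | n ≤ m})).Nonempty ∧
    IsCompact (⋂ n : ℕ, closure ((fun m : ℕ => ‖v m‖⁻¹ • v m) '' {m | n ≤ m})) ∧
    (⋂ n : ℕ, closure ((fun m : ℕ => ‖v m‖⁻¹ • v m) '' {m | n ≤ m})) ⊆
      {x : X | x ∈ LinearMap.range ((Pa - Pb : X →L[ℂ] X) : X →ₗ[ℂ] X) ∧ ‖x‖ = 1} :=
  omega_limit_in_finite_dimensional_eigenspace_general Pa Pb hfin v hvne hXa hXb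
end

section
/- Let X be a complex Banach space and S_p : X → X a bounded linear operator. Let 0 ≤ a < b and let P be a bounded linear projection on X commuting with S_p such that the spectrum of V := S_p restricted to ker P lies in {z : |z| ≤ a}, and U := S_p restricted to ran P is invertible with spectrum in {z : |z| ≥ b}; write Q := I − P and U^{−m} := (U^{−1})^m. For a bounded sequence (R_n)_{n≥0} of bounded linear operators on X, λ ∈ (a,b) and n ≥ 0, set δ_n(λ,R) := Σ_{k=1}^{n} λ^{k−n−1} ‖V^{n−k} ∘ Q ∘ R_{k−1}‖ + Σ_{k=n+1}^{∞} λ^{k−n−1} ‖U^{n−k} ∘ P ∘ R_{k−1}‖. Then for every λ ∈ (a,b) there exists a constant M(λ) > 0, depending only on λ, S_p, P, a, b (and not on the sequence (R_n)), such that sup_{n≥0} δ_n(λ,R) ≤ M(λ) · sup_{n≥0} ‖R_n‖ for every bounded sequence (R_n)_{n≥0}. In particular, for each fixed λ ∈ (a,b), δ(λ,R) := sup_{n≥0} δ_n(λ,R) < 1 whenever sup_{n≥0} ‖R_n‖ is sufficiently small. -/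
/-!
By Gelfand's formula, `σ(V) ⊆ {|z| ≤ a}` and `σ(U⁻¹) ⊆ {|z| ≤ b⁻¹}` make the series
`∑ ‖V^m‖ λ^{-m}` and `∑ ‖U^{-m}‖ λ^m` converge for `a < λ < b`. Bounding every `‖R_k‖` by
`C = sup ‖R_k‖` and using that `S^m` acts as `V^m` on `ker P`, the first sum of `δ_n(λ,R)` is
bounded by a partial sum of the first series and the second by the second series, each times `C`
and a constant depending only on `λ, P, U⁻¹`.
-/

open Filter Topology

section SpectralBounds

variable {𝕜 A : Type*} [NormedField 𝕜] [NormedRing A] [NormedAlgebra 𝕜 A]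

lemma spectralRadius_le_ofReal_of_forall_norm_le {a : A} {r : ℝ}
    (h : ∀ z ∈ spectrum 𝕜 a, ‖z‖ ≤ r) : spectralRadius 𝕜 a ≤ ENNReal.ofReal r :=
  iSup₂_le fun z hz => (ofReal_norm z).symm.trans_le (ENNReal.ofReal_le_ofReal (h z hz))

lemma norm_le_inv_of_mem_spectrum_of_mul_eq_one {x y : A} (hxy : x * y = 1) (hyx : y * x = 1)
    {b : ℝ} (hb : 0 < b) (h : ∀ z ∈ spectrum 𝕜 x, b ≤ ‖z‖) : ∀ z ∈ spectrum 𝕜 y, ‖z‖ ≤ b⁻¹ := by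
  intro z hz
  rw [show y = ↑(⟨x, y, hxy, hyx⟩ : Aˣ)⁻¹ from rfl, ← spectrum.map_inv, Set.mem_inv] at hz
  have hb_le : b ≤ ‖z‖⁻¹ := norm_inv z ▸ h _ hz
  exact (le_inv_comm₀ hb (inv_pos.mp (hb.trans_le hb_le))).mp hb_le

end SpectralBounds

section Gelfand

variable {A : Type*} [NormedRing A] [NormedAlgebra ℂ A] [CompleteSpace A]

lemma eventually_norm_pow_le_of_spectralRadius_lt {a : A} {ρ : ℝ}
    (h : spectralRadius ℂ a < ENNReal.ofReal ρ) : ∀ᶠ n in atTop, ‖a ^ n‖ ≤ ρ ^ n := by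
  filter_upwards [(spectrum.pow_norm_pow_one_div_tendsto_nhds_spectralRadius a).eventually_lt_const h,
    eventually_ne_atTop 0] with n hn hn0
  have hρ : ‖a ^ n‖ ^ (1 / n : ℝ) < ρ := (ENNReal.ofReal_lt_ofReal_iff'.mp hn).1
  rw [one_div] at hρ
  calc ‖a ^ n‖ = (‖a ^ n‖ ^ (n⁻¹ : ℝ)) ^ n := (Real.rpow_inv_natCast_pow (norm_nonneg _) hn0).symm
    _ ≤ ρ ^ n := pow_le_pow_left₀ (by positivity) hρ.le n

lemma summable_norm_pow_mul_pow (a : A) {r c : ℝ} (hσ : ∀ z ∈ spectrum ℂ a, ‖z‖ ≤ r)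
    (hc : 0 < c) (hrc : r * c < 1) : Summable fun n => ‖a ^ n‖ * c ^ n := by
  obtain ⟨ρ, hrρ, hρc⟩ : ∃ ρ, max r 0 < ρ ∧ ρ < 1 / c :=
    exists_between (max_lt ((lt_div_iff₀ hc).mpr hrc) (by positivity))
  have hρ0 : 0 < ρ := (le_max_right r 0).trans_lt hrρ
  have hradius : spectralRadius ℂ a < ENNReal.ofReal ρ :=
    (spectralRadius_le_ofReal_of_forall_norm_le hσ).trans_lt
      ((ENNReal.ofReal_lt_ofReal_iff hρ0).mpr ((le_max_left r 0).trans_lt hrρ))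
  refine (summable_geometric_of_lt_one (by positivity) ((lt_div_iff₀ hc).mp hρc)
    ).of_norm_bounded_eventually_nat ?_
  filter_upwards [eventually_norm_pow_le_of_spectralRadius_lt hradius] with n hn
  rw [Real.norm_of_nonneg (by positivity), mul_pow]
  gcongr

end Gelfand

lemma zpow_natCast_sub_natCast_sub_one {G : Type*} [GroupWithZero G] (x : G) {k n : ℕ}
    (hkn : k ≤ n) : x ^ ((k : ℤ) - n - 1) = x⁻¹ * x⁻¹ ^ (n - k) := by
  rw [← pow_succ', inv_pow, ← zpow_natCast, ← zpow_neg]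
  congr 1
  push_cast [Nat.cast_sub hkn]
  ring

lemma sum_Icc_sub_le_tsum {f : ℕ → ℝ} (hf : Summable f) (hf0 : ∀ m, 0 ≤ f m) (n : ℕ) :
    ∑ k ∈ Finset.Icc 1 n, f (n - k) ≤ ∑' m, f m := by
  rw [← Finset.sum_image (g := fun k => n - k) fun k hk l hl h => by
    simp only [Finset.coe_Icc, Set.mem_Icc] at hk hl h; omega]
  exact hf.sum_le_tsum _ fun m _ => hf0 m

section OperatorBounds

variable {𝕜 X Y : Type*} [NontriviallyNormedField 𝕜] [NormedAddCommGroup X] [NormedSpace 𝕜 X]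
  [NormedAddCommGroup Y] [NormedSpace 𝕜 Y] {p : Submodule 𝕜 X}

lemma coe_pow_apply_of_forall_coe_apply {S : X →L[𝕜] X} {V : p →L[𝕜] p}
    (hV : ∀ x : p, (V x : X) = S x) (m : ℕ) (x : p) : ((V ^ m) x : X) = (S ^ m) x := by
  induction m generalizing x with
  | zero => rfl
  | succ m ih => simp only [pow_succ, mul_apply_eq_comp, ih, hV]

lemma norm_pow_comp_le_of_forall_mem {S : X →L[𝕜] X} {V : p →L[𝕜] p}
    (hV : ∀ x : p, (V x : X) = S x) (m : ℕ) (T : Y →L[𝕜] X) (hT : ∀ y, T y ∈ p) :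
    ‖(S ^ m) ∘L T‖ ≤ ‖V ^ m‖ * ‖T‖ := by
  refine ContinuousLinearMap.opNorm_le_bound _ (by positivity) fun y => ?_
  calc ‖(S ^ m) (T y)‖ = ‖(V ^ m) ⟨T y, hT y⟩‖ := by
        rw [← coe_pow_apply_of_forall_coe_apply hV m ⟨T y, hT y⟩, Submodule.coe_norm]
    _ ≤ ‖V ^ m‖ * ‖T y‖ := (V ^ m).le_opNorm _
    _ ≤ ‖V ^ m‖ * (‖T‖ * ‖y‖) := by gcongr; exact T.le_opNorm y
    _ = ‖V ^ m‖ * ‖T‖ * ‖y‖ := by ring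

variable {R : ℕ → Y →L[𝕜] X} {C : ℝ}

lemma sum_Icc_zpow_mul_norm_pow_comp_le {S : X →L[𝕜] X} {V : p →L[𝕜] p}
    (hV : ∀ x : p, (V x : X) = S x) (Q : X →L[𝕜] X) (hQ : ∀ x, Q x ∈ p) {lam : ℝ} (hlam : 0 < lam)
    (hsum : Summable fun m => ‖V ^ m‖ * lam⁻¹ ^ m) (hR : ∀ n, ‖R n‖ ≤ C) (n : ℕ) :
    ∑ k ∈ Finset.Icc 1 n, lam ^ ((k : ℤ) - n - 1) * ‖(S ^ (n - k)) ∘L Q ∘L R (k - 1)‖ ≤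
      lam⁻¹ * ‖Q‖ * C * ∑' m, ‖V ^ m‖ * lam⁻¹ ^ m := by
  have hterm : ∀ k ∈ Finset.Icc 1 n, lam ^ ((k : ℤ) - n - 1) * ‖(S ^ (n - k)) ∘L Q ∘L R (k - 1)‖ ≤
      lam⁻¹ * ‖Q‖ * C * (‖V ^ (n - k)‖ * lam⁻¹ ^ (n - k)) := fun k hk => by
    have hQR : ‖Q ∘L R (k - 1)‖ ≤ ‖Q‖ * C :=
      (Q.opNorm_comp_le _).trans (by gcongr; exact hR _)
    rw [zpow_natCast_sub_natCast_sub_one _ (Finset.mem_Icc.mp hk).2]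
    calc lam⁻¹ * lam⁻¹ ^ (n - k) * ‖(S ^ (n - k)) ∘L Q ∘L R (k - 1)‖
        ≤ lam⁻¹ * lam⁻¹ ^ (n - k) * (‖V ^ (n - k)‖ * (‖Q‖ * C)) := by
          gcongr
          exact (norm_pow_comp_le_of_forall_mem hV _ (Q ∘L R (k - 1)) fun _ => hQ _).trans
            (mul_le_mul_of_nonneg_left hQR (norm_nonneg _))
      _ = _ := by ring
  calc _ ≤ ∑ k ∈ Finset.Icc 1 n, lam⁻¹ * ‖Q‖ * C * (‖V ^ (n - k)‖ * lam⁻¹ ^ (n - k)) :=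
        Finset.sum_le_sum hterm
    _ = lam⁻¹ * ‖Q‖ * C * ∑ k ∈ Finset.Icc 1 n, ‖V ^ (n - k)‖ * lam⁻¹ ^ (n - k) :=
        (Finset.mul_sum _ _ _).symm
    _ ≤ _ := by
        have hC : 0 ≤ C := (norm_nonneg _).trans (hR 0)
        gcongr
        exact sum_Icc_sub_le_tsum hsum (fun m => by positivity) n

lemma tsum_pow_mul_norm_subtypeL_comp_pow_succ_comp_le (W : p →L[𝕜] p) (Pc : X →L[𝕜] p)
    {lam : ℝ} (hlam : 0 ≤ lam) (hsum : Summable fun m => ‖W ^ m‖ * lam ^ m)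
    (hR : ∀ n, ‖R n‖ ≤ C) (n : ℕ) :
    ∑' j, lam ^ j * ‖p.subtypeL ∘L (W ^ (j + 1)) ∘L Pc ∘L R (n + j)‖ ≤
      ‖W‖ * ‖Pc‖ * C * ∑' m, ‖W ^ m‖ * lam ^ m := by
  have hC : 0 ≤ C := (norm_nonneg _).trans (hR 0)
  have hterm : ∀ j, lam ^ j * ‖p.subtypeL ∘L (W ^ (j + 1)) ∘L Pc ∘L R (n + j)‖ ≤
      ‖W‖ * ‖Pc‖ * C * (‖W ^ j‖ * lam ^ j) := fun j => by
    have hnorm : ‖p.subtypeL ∘L (W ^ (j + 1)) ∘L Pc ∘L R (n + j)‖ ≤ ‖W‖ * ‖W ^ j‖ * (‖Pc‖ * C) :=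
      calc _ ≤ ‖(W ^ (j + 1)) ∘L Pc ∘L R (n + j)‖ := (p.subtypeL.opNorm_comp_le _).trans
            (mul_le_of_le_one_left (norm_nonneg _) p.norm_subtypeL_le)
        _ ≤ ‖W ^ (j + 1)‖ * (‖Pc‖ * ‖R (n + j)‖) :=
            ((W ^ (j + 1)).opNorm_comp_le _).trans (by gcongr; exact Pc.opNorm_comp_le _)
        _ ≤ ‖W‖ * ‖W ^ j‖ * (‖Pc‖ * C) := by
            gcongr
            · rw [pow_succ']; exact norm_mul_le _ _
            · exact hR _
    calc _ ≤ lam ^ j * (‖W‖ * ‖W ^ j‖ * (‖Pc‖ * C)) := by gcongr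
      _ = _ := by ring
  have hmajor := hsum.mul_left (‖W‖ * ‖Pc‖ * C)
  calc _ ≤ ∑' j, ‖W‖ * ‖Pc‖ * C * (‖W ^ j‖ * lam ^ j) :=
        (hmajor.of_nonneg_of_le (fun j => by positivity) hterm).tsum_le_tsum hterm hmajor
    _ = _ := tsum_mul_left

end OperatorBounds

theorem forward_delta_linear_bound_general
    {X : Type*} [NormedAddCommGroup X] [NormedSpace ℂ X] [CompleteSpace X]
    (S P : X →L[ℂ] X)
    (hproj : P ∘L P = P)
    (a b : ℝ) (ha : 0 ≤ a)
    (V : LinearMap.ker (P : X →ₗ[ℂ] X) →L[ℂ] LinearMap.ker (P : X →ₗ[ℂ] X))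
    (hV : ∀ x : LinearMap.ker (P : X →ₗ[ℂ] X), (V x : X) = S x)
    (hσV : spectrum ℂ V ⊆ {z : ℂ | ‖z‖ ≤ a})
    (U Ui : LinearMap.range (P : X →ₗ[ℂ] X) →L[ℂ] LinearMap.range (P : X →ₗ[ℂ] X))
    (hUUi : U ∘L Ui = 1) (hUiU : Ui ∘L U = 1)
    (hσU : spectrum ℂ U ⊆ {z : ℂ | b ≤ ‖z‖})
    (lam : ℝ) (hlam : lam ∈ Set.Ioo a b) :
    -- `δ R n` is the quantity `δ_n(λ,R)` of the paper
    let δ : (ℕ → X →L[ℂ] X) → ℕ → ℝ := fun R n =>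
      (∑ k ∈ Finset.Icc 1 n,
          lam ^ ((k : ℤ) - (n : ℤ) - 1) * ‖(S ^ (n - k)) ∘L (1 - P) ∘L R (k - 1)‖) +
        ∑' j : ℕ, lam ^ j *
          ‖(LinearMap.range (P : X →ₗ[ℂ] X)).subtypeL ∘L (Ui ^ (j + 1)) ∘L
              (P.codRestrict (LinearMap.range (P : X →ₗ[ℂ] X)) fun x => LinearMap.mem_range_self (P : X →ₗ[ℂ] X) x) ∘L
            R (n + j)‖
    ∃ M : ℝ, 0 < M ∧
      (∀ (R : ℕ → X →L[ℂ] X) (C : ℝ), (∀ n : ℕ, ‖R n‖ ≤ C) →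
        ∀ n : ℕ, δ R n ≤ M * C) ∧
      (∃ ε : ℝ, 0 < ε ∧ ∀ R : ℕ → X →L[ℂ] X, (∀ n : ℕ, ‖R n‖ ≤ ε) →
        ∀ n : ℕ, δ R n < 1) := by
  intro δ
  obtain ⟨hal, hlb⟩ := hlam
  have hlam0 : 0 < lam := ha.trans_lt hal
  have hb0 : 0 < b := hlam0.trans hlb
  have := (ContinuousLinearMap.IsIdempotentElem.isClosed_range (p := P) hproj).completeSpace_coe
  have hsumV : Summable fun m => ‖V ^ m‖ * lam⁻¹ ^ m :=
    summable_norm_pow_mul_pow V (fun z hz => hσV hz) (inv_pos.mpr hlam0)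
      (by rwa [← div_eq_mul_inv, div_lt_one hlam0])
  have hσUi : ∀ z ∈ spectrum ℂ Ui, ‖z‖ ≤ b⁻¹ :=
    norm_le_inv_of_mem_spectrum_of_mul_eq_one (𝕜 := ℂ) (x := U) (y := Ui) hUUi hUiU hb0
      fun z hz => hσU hz
  have hsumUi : Summable fun m => ‖Ui ^ m‖ * lam ^ m :=
    summable_norm_pow_mul_pow Ui hσUi hlam0 (by rwa [inv_mul_lt_iff₀ hb0, mul_one])
  set M := lam⁻¹ * ‖1 - P‖ * (∑' m, ‖V ^ m‖ * lam⁻¹ ^ m) +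
    ‖Ui‖ * ‖P.codRestrict (LinearMap.range (P : X →ₗ[ℂ] X)) (LinearMap.mem_range_self _)‖ *
      (∑' m, ‖Ui ^ m‖ * lam ^ m) + 1 with hM
  have hM0 : 0 < M := by positivity
  have hδ : ∀ (R : ℕ → X →L[ℂ] X) (C : ℝ), (∀ n, ‖R n‖ ≤ C) → ∀ n, δ R n ≤ M * C := by
    intro R C hR n
    have hC : 0 ≤ C := (norm_nonneg _).trans (hR 0)
    refine (add_le_add (sum_Icc_zpow_mul_norm_pow_comp_le hV (1 - P)
      (fun x => by simp [← ContinuousLinearMap.comp_apply, hproj]) hlam0 hsumV hR n)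
      (tsum_pow_mul_norm_subtypeL_comp_pow_succ_comp_le Ui _ hlam0.le hsumUi hR n)).trans ?_
    rw [hM]
    linarith
  refine ⟨M, hM0, hδ, (2 * M)⁻¹, by positivity, fun R hR n => (hδ R _ hR n).trans_lt ?_⟩
  field_simp
  norm_num

/-- The smallness quantity `δ(λ,R) = sup_n δ_n(λ,R)` is controlled linearly by
`sup_n ‖R_n‖`, with a constant depending only on `λ`, `S_p`, `P`, `a`, `b`; in
particular it is `< 1` when `sup_n ‖R_n‖` is small enough (forward version). -/
theorem forward_delta_linear_bound
    {X : Type*} [NormedAddCommGroup X] [NormedSpace ℂ X] [CompleteSpace X]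
    (S P : X →L[ℂ] X)
    (hproj : P ∘L P = P) (hcomm : S ∘L P = P ∘L S)
    (a b : ℝ) (ha : 0 ≤ a) (hab : a < b)
    (V : LinearMap.ker (P : X →ₗ[ℂ] X) →L[ℂ] LinearMap.ker (P : X →ₗ[ℂ] X))
    (hV : ∀ x : LinearMap.ker (P : X →ₗ[ℂ] X), (V x : X) = S x)
    (hσV : spectrum ℂ V ⊆ {z : ℂ | ‖z‖ ≤ a})
    (U Ui : LinearMap.range (P : X →ₗ[ℂ] X) →L[ℂ] LinearMap.range (P : X →ₗ[ℂ] X))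
    (hU : ∀ x : LinearMap.range (P : X →ₗ[ℂ] X), (U x : X) = S x)
    (hUUi : U ∘L Ui = 1) (hUiU : Ui ∘L U = 1)
    (hσU : spectrum ℂ U ⊆ {z : ℂ | b ≤ ‖z‖})
    (lam : ℝ) (hlam : lam ∈ Set.Ioo a b) :
    -- `δ R n` is the quantity `δ_n(λ,R)` of the paper
    let δ : (ℕ → X →L[ℂ] X) → ℕ → ℝ := fun R n =>
      (∑ k ∈ Finset.Icc 1 n,
          lam ^ ((k : ℤ) - (n : ℤ) - 1) * ‖(S ^ (n - k)) ∘L (1 - P) ∘L R (k - 1)‖) +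
        ∑' j : ℕ, lam ^ j *
          ‖(LinearMap.range (P : X →ₗ[ℂ] X)).subtypeL ∘L (Ui ^ (j + 1)) ∘L
              (P.codRestrict (LinearMap.range (P : X →ₗ[ℂ] X)) fun x => LinearMap.mem_range_self (P : X →ₗ[ℂ] X) x) ∘L
            R (n + j)‖
    ∃ M : ℝ, 0 < M ∧
      (∀ (R : ℕ → X →L[ℂ] X) (C : ℝ), (∀ n : ℕ, ‖R n‖ ≤ C) →
        ∀ n : ℕ, δ R n ≤ M * C) ∧
      (∃ ε : ℝ, 0 < ε ∧ ∀ R : ℕ → X →L[ℂ] X, (∀ n : ℕ, ‖R n‖ ≤ ε) →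
        ∀ n : ℕ, δ R n < 1) :=
  forward_delta_linear_bound_general S P hproj a b ha V hV hσV U Ui hUUi hUiU hσU lam hlam
end

section
/- Let X be a complex Banach space, S_p : X → X a bounded linear operator, and let v : {n ∈ ℤ : n ≤ 0} → X satisfy v(n) ≠ 0 for all n ≤ 0 and ‖v(n+1) − S_p v(n)‖ / ‖v(n)‖ → 0 as n → −∞. Let 0 < α < β and let P_α, P_β be bounded linear projections on X, each commuting with S_p, satisfying P_α ∘ P_β = P_β ∘ P_α = P_β, such that: the spectrum of the restriction of S_p to ker P_α lies in {|z| < α} and to ran P_α lies in {|z| > α}; the spectrum of the restriction of S_p to ker P_β lies in {|z| < β} and to ran P_β lies in {|z| > β}; and P_* := P_α − P_β has finite-dimensional range. Assume ‖P_α v(n)‖ / ‖(I − P_α) v(n)‖ → ∞ and ‖P_β v(n)‖ / ‖(I − P_β) v(n)‖ → 0 as n → −∞ (with the convention that a ratio with vanishing denominator is ∞). Then the normalized sequence v̂(n) := v(n)/‖v(n)‖, n ≤ 0, is relatively compact in X, and its α-limit set ⋂_{n≤0} closure{v̂(m) : m ≤ n} is a nonempty compact subset of {x ∈ ran P_* :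 ‖x‖ = 1}. -/
/-!
Both hypotheses on `v` say that a complementary component is negligible:
`‖(I - P_α) v(n)‖ = o(‖P_α v(n)‖)` and `‖P_β v(n)‖ = o(‖(I - P_β) v(n)‖)`, hence both are
`o(‖v(n)‖)`, and the normalized vectors satisfy `v̂(n) - P_* v̂(n) → 0` as `n → -∞`.
Since `P_*` has finite rank, `P_*` maps the unit sphere into a compact set `K`, so the tail of
`v̂` lies in `K + L`, with `L` the null sequence `v̂ - P_* v̂` together with its limit `0`.
The α-limit set is the set of cluster points of `v̂` at `-∞`; each of them is a unit vector,
and it is fixed by `P_*` because `v̂ - P_* v̂ → 0`.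
-/

open Filter Topology Asymptotics Set

theorem MapClusterPt.eq_of_tendsto {X ι : Type*} [TopologicalSpace X] [T2Space X]
    {l : Filter ι} {u : ι → X} {x y : X} (h : MapClusterPt x l u) (h' : Tendsto u l (𝓝 y)) :
    x = y := by
  by_contra hne
  exact clusterPt_iff_not_disjoint.1 (ClusterPt.mono h h') (disjoint_nhds_nhds.2 hne)

theorem mapClusterPt_atBot_iff_forall_le_mem_closure {X ι : Type*} [TopologicalSpace X]
    [Preorder ι] [IsCodirectedOrder ι] [Nonempty ι] {u : ι → X} {x : X} (a : ι) :
    MapClusterPt x atBot u ↔ ∀ n ≤ a, x ∈ closure (u '' Iic n) := by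
  have hbasis : (atBot : Filter ι).HasBasis (fun n => True ∧ n ≤ a) Iic :=
    atBot_basis.restrict fun n _ =>
      let ⟨m, hmn, hma⟩ := exists_le_le n a
      ⟨m, trivial, hma, Iic_subset_Iic.2 hmn⟩
  simp [MapClusterPt, (hbasis.map u).clusterPt_iff_forall_mem_closure]

theorem ContinuousLinearMap.isCompactOperator_of_finiteDimensional_range
    {𝕜 E F : Type*} [NontriviallyNormedField 𝕜] [LocallyCompactSpace 𝕜]
    [NormedAddCommGroup E] [NormedSpace 𝕜 E] [NormedAddCommGroup F] [NormedSpace 𝕜 F]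
    (Q : E →L[𝕜] F) [FiniteDimensional 𝕜 (LinearMap.range (Q : E →ₗ[𝕜] F))] :
    IsCompactOperator Q := by
  have := FiniteDimensional.proper 𝕜 (LinearMap.range (Q : E →ₗ[𝕜] F))
  exact (isCompactOperator_of_locallyCompactSpace_dom Q.rangeRestrict).continuous_comp
    continuous_subtype_val

section

variable {𝕜 E : Type*} [NontriviallyNormedField 𝕜] [NormedAddCommGroup E] [NormedSpace 𝕜 E]

theorem isLittleO_sub_apply_sub {ι : Type*} {l : Filter ι} {P R : E →L[𝕜] E} {v : ι → E}
    (hP : (fun n => v n - P (v n)) =o[l] fun n => P (v n))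
    (hR : (fun n => R (v n)) =o[l] fun n => v n - R (v n)) :
    (fun n => v n - (P - R) (v n)) =o[l] v := by
  have hP' := hP.trans_isBigO (P.isBigO_comp v l)
  have hR' := hR.trans_isBigO ((ContinuousLinearMap.id 𝕜 E - R).isBigO_comp v l)
  refine (hP'.add hR').congr_left fun n => ?_
  simp only [sub_apply]
  abel

theorem isCompact_closure_image_Iic_of_tendsto_sub_apply {Q : E →L[𝕜] E}
    (hQ : IsCompactOperator Q) {u : ℤ → E} {n : ℤ} (hbdd : Bornology.IsBounded (u '' Iic n))
    (hlim : Tendsto (fun m => u m - Q (u m)) atBot (𝓝 0)) :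
    IsCompact (closure (u '' Iic n)) := by
  obtain ⟨K, hK, hQK⟩ := hQ.image_subset_compact_of_bounded hbdd
  have hL : IsCompact (insert 0 (range fun k : ℕ => u (n - k) - Q (u (n - k)))) :=
    (hlim.comp (tendsto_atBot_add_const_left atTop n
      (tendsto_neg_atTop_atBot.comp tendsto_natCast_atTop_atTop))).isCompact_insert_range
  refine (hK.add hL).closure_of_subset ?_
  rintro _ ⟨m, hm, rfl⟩
  refine ⟨Q (u m), hQK (mem_image_of_mem Q (mem_image_of_mem u hm)), u m - Q (u m), ?_,
    add_sub_cancel _ _⟩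
  refine mem_insert_of_mem _ ⟨(n - m).toNat, ?_⟩
  simp only [Int.toNat_of_nonneg (sub_nonneg.2 hm), sub_sub_cancel]

end

theorem alpha_limit_in_finite_dimensional_eigenspace_general
    {X : Type*} [NormedAddCommGroup X] [NormedSpace ℂ X]
    (Pa Pb : X →L[ℂ] X)
    -- `P_* = P_α - P_β` has finite-dimensional range
    (hfin : FiniteDimensional ℂ (LinearMap.range ((Pa - Pb : X →L[ℂ] X) : X →ₗ[ℂ] X)))
    (v : ℤ → X) (hvne : ∀ n : ℤ, n ≤ 0 → v n ≠ 0)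
    -- `‖P_α v(n)‖/‖(I-P_α) v(n)‖ → ∞` as `n → -∞`
    (hXa : ∀ C : ℝ, ∀ᶠ n in atBot, C * ‖v n - Pa (v n)‖ ≤ ‖Pa (v n)‖)
    -- `‖P_β v(n)‖/‖(I-P_β) v(n)‖ → 0` as `n → -∞`
    (hXb : ∀ ε : ℝ, 0 < ε → ∀ᶠ n in atBot, ‖Pb (v n)‖ ≤ ε * ‖v n - Pb (v n)‖) :
    IsCompact (closure ((fun n : ℤ => ‖v n‖⁻¹ • v n) '' {n : ℤ | n ≤ 0})) ∧
    (⋂ n : ℤ, ⋂ _ : n ≤ 0,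
      closure ((fun m : ℤ => ‖v m‖⁻¹ • v m) '' {m : ℤ | m ≤ n})).Nonempty ∧
    IsCompact (⋂ n : ℤ, ⋂ _ : n ≤ 0,
      closure ((fun m : ℤ => ‖v m‖⁻¹ • v m) '' {m : ℤ | m ≤ n})) ∧
    (⋂ n : ℤ, ⋂ _ : n ≤ 0,
      closure ((fun m : ℤ => ‖v m‖⁻¹ • v m) '' {m : ℤ | m ≤ n})) ⊆
      {x : X | x ∈ LinearMap.range ((Pa - Pb : X →L[ℂ] X) : X →ₗ[ℂ] X) ∧ ‖x‖ = 1} := by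
  set u : ℤ → X := fun n => ‖v n‖⁻¹ • v n
  have hsphere : ∀ m ≤ 0, u m ∈ Metric.sphere (0 : X) 1 := fun m hm =>
    mem_sphere_zero_iff_norm.2 (norm_smul_inv_norm (hvne m hm))
  have hlim : Tendsto (fun m => u m - (Pa - Pb) (u m)) atBot (𝓝 0) := by
    refine (isLittleO_sub_apply_sub (isLittleO_iff_nat_mul_le.2 fun k => hXa k)
      (isLittleO_iff.2 hXb)).norm_right.tendsto_inv_smul_nhds_zero.congr fun m => ?_
    simp only [u, smul_sub, ContinuousLinearMap.map_smul_of_tower]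
  have := hfin
  have hK : IsCompact (closure (u '' Iic 0)) :=
    isCompact_closure_image_Iic_of_tendsto_sub_apply
      (Pa - Pb).isCompactOperator_of_finiteDimensional_range
      (Metric.isBounded_sphere.subset (image_subset_iff.2 hsphere)) hlim
  have hA : ∀ x, x ∈ (⋂ n : ℤ, ⋂ _ : n ≤ 0, closure (u '' {m | m ≤ n})) ↔
      MapClusterPt x atBot u := fun x => by
    simp only [mem_iInter]
    exact (mapClusterPt_atBot_iff_forall_le_mem_closure 0).symm
  refine ⟨hK, ?_, ?_, fun x hx => ?_⟩
  · have hev : ∀ᶠ m in atBot, u m ∈ closure (u '' Iic 0) :=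
      (eventually_le_atBot 0).mono fun m hm => subset_closure (mem_image_of_mem u hm)
    obtain ⟨x, -, hx⟩ := hK.exists_mapClusterPt_of_frequently hev.frequently
    exact ⟨x, (hA x).2 hx⟩
  · exact hK.of_isClosed_subset (isClosed_iInter fun _ => isClosed_iInter fun _ => isClosed_closure)
      fun x hx => mem_iInter₂.1 hx 0 le_rfl
  · have hx := (hA x).1 hx
    have hfix : x - (Pa - Pb) x = 0 :=
      (hx.continuousAt_comp (continuous_id.sub (Pa - Pb).continuous).continuousAt).eq_of_tendsto
        hlim
    exact ⟨⟨x, (sub_eq_zero.1 hfix).symm⟩, mem_sphere_zero_iff_norm.1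
      (Metric.isClosed_sphere.mem_of_mapClusterPt hx ((eventually_le_atBot 0).mono hsphere))⟩

set_option maxHeartbeats 1000000 in
/-- Compactness of the normalized backward sequence and localization of its α-limit set
in the unit sphere of the finite-dimensional spectral subspace `ran (P_α - P_β)`
(backward version). -/
theorem alpha_limit_in_finite_dimensional_eigenspace
    {X : Type*} [NormedAddCommGroup X] [NormedSpace ℂ X] [CompleteSpace X]
    (S Pa Pb : X →L[ℂ] X)
    (hPa : Pa ∘L Pa = Pa) (hPb : Pb ∘L Pb = Pb)
    (hSa : S ∘L Pa = Pa ∘L S) (hSb : S ∘L Pb = Pb ∘L S)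
    (hab : Pa ∘L Pb = Pb) (hba : Pb ∘L Pa = Pb)
    (α β : ℝ) (hα : 0 < α) (hαβ : α < β)
    -- spectral splitting of `S` by `Pa` at modulus `α`
    (Va : LinearMap.ker (Pa : X →ₗ[ℂ] X) →L[ℂ] LinearMap.ker (Pa : X →ₗ[ℂ] X))
    (hVa : ∀ x : LinearMap.ker (Pa : X →ₗ[ℂ] X), (Va x : X) = S x)
    (hσVa : spectrum ℂ Va ⊆ {z : ℂ | ‖z‖ < α})
    (Ua : LinearMap.range (Pa : X →ₗ[ℂ] X) →L[ℂ] LinearMap.range (Pa : X →ₗ[ℂ] X))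
    (hUa : ∀ x : LinearMap.range (Pa : X →ₗ[ℂ] X), (Ua x : X) = S x)
    (hσUa : spectrum ℂ Ua ⊆ {z : ℂ | α < ‖z‖})
    -- spectral splitting of `S` by `Pb` at modulus `β`
    (Vb : LinearMap.ker (Pb : X →ₗ[ℂ] X) →L[ℂ] LinearMap.ker (Pb : X →ₗ[ℂ] X))
    (hVb : ∀ x : LinearMap.ker (Pb : X →ₗ[ℂ] X), (Vb x : X) = S x)
    (hσVb : spectrum ℂ Vb ⊆ {z : ℂ | ‖z‖ < β})
    (Ub : LinearMap.range (Pb : X →ₗ[ℂ] X) →L[ℂ] LinearMap.range (Pb : X →ₗ[ℂ] X))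
    (hUb : ∀ x : LinearMap.range (Pb : X →ₗ[ℂ] X), (Ub x : X) = S x)
    (hσUb : spectrum ℂ Ub ⊆ {z : ℂ | β < ‖z‖})
    -- `P_* = P_α - P_β` has finite-dimensional range
    (hfin : FiniteDimensional ℂ (LinearMap.range ((Pa - Pb : X →L[ℂ] X) : X →ₗ[ℂ] X)))
    (v : ℤ → X) (hvne : ∀ n : ℤ, n ≤ 0 → v n ≠ 0)
    (hv : Tendsto (fun n : ℤ => ‖v (n + 1) - S (v n)‖ / ‖v n‖) atBot (𝓝 0))
    -- `‖P_α v(n)‖/‖(I-P_α) v(n)‖ → ∞` as `n → -∞`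
    (hXa : ∀ C : ℝ, ∀ᶠ n in atBot, C * ‖v n - Pa (v n)‖ ≤ ‖Pa (v n)‖)
    -- `‖P_β v(n)‖/‖(I-P_β) v(n)‖ → 0` as `n → -∞`
    (hXb : ∀ ε : ℝ, 0 < ε → ∀ᶠ n in atBot, ‖Pb (v n)‖ ≤ ε * ‖v n - Pb (v n)‖) :
    IsCompact (closure ((fun n : ℤ => ‖v n‖⁻¹ • v n) '' {n : ℤ | n ≤ 0})) ∧
    (⋂ n : ℤ, ⋂ _ : n ≤ 0,
      closure ((fun m : ℤ => ‖v m‖⁻¹ • v m) '' {m : ℤ | m ≤ n})).Nonempty ∧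
    IsCompact (⋂ n : ℤ, ⋂ _ : n ≤ 0,
      closure ((fun m : ℤ => ‖v m‖⁻¹ • v m) '' {m : ℤ | m ≤ n})) ∧
    (⋂ n : ℤ, ⋂ _ : n ≤ 0,
      closure ((fun m : ℤ => ‖v m‖⁻¹ • v m) '' {m : ℤ | m ≤ n})) ⊆
      {x : X | x ∈ LinearMap.range ((Pa - Pb : X →L[ℂ] X) : X →ₗ[ℂ] X) ∧ ‖x‖ = 1} :=
  alpha_limit_in_finite_dimensional_eigenspace_general Pa Pb hfin v hvne hXa hXb
end

section
/- Let X be a complex Banach space and S_p : X → X a bounded linear operator. Let 0 ≤ a < b and let P be a bounded linear projection on X commuting with S_p such that the spectrum of V := S_p restricted to ker P lies in {z : |z| ≤ a}, and U := S_p restricted to ran P is invertible with spectrum in {z : |z| ≥ b}; write Q := I − P and U^{−m} := (U^{−1})^m. For a bounded sequence (R_n)_{n<0} of bounded linear operators on X, λ ∈ (a,b) and n ≤ 0, set δ_n(λ,R) := Σ_{k=n+1}^{0} λ^{k−n−1} ‖U^{n−k} ∘ P ∘ R_{k−1}‖ + Σ_{k=−∞}^{n} λ^{k−n−1} ‖V^{n−k}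 ∘ Q ∘ R_{k−1}‖. Then for every λ ∈ (a,b) there exists a constant M(λ) > 0, depending only on λ, S_p, P, a, b (and not on the sequence (R_n)), such that sup_{n≤0} δ_n(λ,R) ≤ M(λ) · sup_{n<0} ‖R_n‖ for every bounded sequence (R_n)_{n<0}. In particular, for each fixed λ ∈ (a,b), sup_{n≤0} δ_n(λ,R) < 1 whenever sup_{n<0} ‖R_n‖ is sufficiently small. -/
/-! By Gelfand's formula the spectral hypotheses make the powers decay geometrically at the
right rates: `ρ(V) ≤ a < λ` and `ρ(U⁻¹) ≤ 1/b < 1/λ`, so `∑ ‖Vⁱ‖ λ⁻ⁱ` and `∑ ‖U⁻ʲ‖ λʲ` converge.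
Every term of `δ_n(λ,R)` factors through a power of `V` on `ker P` or of `U⁻¹` on `ran P`, so
`‖R_k‖ ≤ C` bounds `δ_n(λ,R)` by `λ⁻¹ (‖P‖ ∑ ‖U⁻ʲ‖ λʲ + ‖I - P‖ ∑ ‖Vⁱ‖ λ⁻ⁱ) C`, uniformly in `n`. -/

open scoped NNReal ENNReal

theorem spectralRadius_le_ofReal_of_spectrum_subset {𝕜 A : Type*} [NormedField 𝕜] [Ring A]
    [Algebra 𝕜 A] {a : A} {c : ℝ} (hσ : spectrum 𝕜 a ⊆ {z : 𝕜 | ‖z‖ ≤ c}) :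
    spectralRadius 𝕜 a ≤ ENNReal.ofReal c :=
  iSup₂_le fun z hz => by
    rw [← ENNReal.ofReal_coe_nnreal, coe_nnnorm]
    exact ENNReal.ofReal_le_ofReal (hσ hz)

section Summable

variable {A : Type*} [NormedRing A] [NormedAlgebra ℂ A] [CompleteSpace A]

theorem summable_norm_pow_mul_pow_of_lt_inv_spectralRadius (a : A) {r : ℝ≥0}
    (hr : (r : ℝ≥0∞) < (spectralRadius ℂ a)⁻¹) :
    Summable fun n => ‖a ^ n‖ * (r : ℝ) ^ n := by
  -- Cauchy–Hadamard for `∑ zⁿ aⁿ`: its `limsup ‖aⁿ‖^(1/n)` is at most `ρ(a)` (Gelfand).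
  let p : FormalMultilinearSeries ℂ ℂ A := fun n =>
    ContinuousMultilinearMap.mkPiRing ℂ (Fin n) (a ^ n)
  have hradius : (spectralRadius ℂ a)⁻¹ ≤ p.radius := by
    rw [ENNReal.inv_le_iff_inv_le, p.radius_inv_eq_limsup]
    convert spectrum.limsup_pow_nnnorm_pow_one_div_le_spectralRadius a using 3 with n
    rw [ENNReal.coe_rpow_of_nonneg _ (by positivity)]
    simp [p, ← norm_toNNReal, ContinuousMultilinearMap.norm_mkPiRing]
  simpa [p, ContinuousMultilinearMap.norm_mkPiRing] using
    p.summable_norm_mul_pow (hr.trans_le hradius)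

theorem summable_norm_pow_mul_pow_of_spectrum_subset (a : A) {c r : ℝ}
    (hσ : spectrum ℂ a ⊆ {z : ℂ | ‖z‖ ≤ c}) (hr : 0 ≤ r) (hcr : c * r < 1) :
    Summable fun n => ‖a ^ n‖ * r ^ n := by
  have hρ := spectralRadius_le_ofReal_of_spectrum_subset hσ
  have hlt : (r.toNNReal : ℝ≥0∞) < (spectralRadius ℂ a)⁻¹ := by
    rw [ENNReal.lt_inv_iff_lt_inv]
    rcases hr.eq_or_lt with rfl | hr
    · simpa using hρ.trans_lt ENNReal.ofReal_lt_top
    · refine hρ.trans_lt ?_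
      change _ < (ENNReal.ofReal r)⁻¹
      rw [← ENNReal.ofReal_inv_of_pos hr]
      exact (ENNReal.ofReal_lt_ofReal_iff (by positivity)).2 (by rwa [← one_div, lt_div_iff₀ hr])
  simpa [Real.coe_toNNReal r hr] using summable_norm_pow_mul_pow_of_lt_inv_spectralRadius a hlt

end Summable

theorem spectrum_inv_subset_of_subset {𝕜 A : Type*} [NormedField 𝕜] [Ring A] [Algebra 𝕜 A]
    (u : Aˣ) {b : ℝ} (hb : 0 < b) (hσ : spectrum 𝕜 (u : A) ⊆ {z : 𝕜 | b ≤ ‖z‖}) :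
    spectrum 𝕜 (↑u⁻¹ : A) ⊆ {z : 𝕜 | ‖z‖ ≤ b⁻¹} := by
  intro z hz
  rw [← spectrum.map_inv] at hz
  have hbz : b ≤ ‖z‖⁻¹ := by simpa using hσ hz
  exact (le_inv_comm₀ hb (inv_pos.1 (hb.trans_le hbz))).1 hbz

namespace ContinuousLinearMap

variable {𝕜 E F G : Type*} [NontriviallyNormedField 𝕜] [SeminormedAddCommGroup E]
  [NormedSpace 𝕜 E] [SeminormedAddCommGroup F] [NormedSpace 𝕜 F] [SeminormedAddCommGroup G]
  [NormedSpace 𝕜 G]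

theorem norm_codRestrict_le (f : F →L[𝕜] E) (K : Submodule 𝕜 E) (hf : ∀ x, f x ∈ K) :
    ‖f.codRestrict K hf‖ ≤ ‖f‖ :=
  opNorm_le_bound _ (norm_nonneg f) f.le_opNorm

theorem norm_subtypeL_comp_comp_codRestrict_comp_le (K : Submodule 𝕜 E) (A : K →L[𝕜] K)
    (f : F →L[𝕜] E) (hf : ∀ x, f x ∈ K) (W : G →L[𝕜] F) :
    ‖K.subtypeL ∘L A ∘L f.codRestrict K hf ∘L W‖ ≤ ‖A‖ * (‖f‖ * ‖W‖) :=
  calc ‖K.subtypeL ∘L A ∘L f.codRestrict K hf ∘L W‖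
      ≤ ‖K.subtypeL‖ * (‖A‖ * (‖f.codRestrict K hf‖ * ‖W‖)) := by
        grw [opNorm_comp_le, opNorm_comp_le, opNorm_comp_le]
    _ ≤ 1 * (‖A‖ * (‖f‖ * ‖W‖)) := by
        grw [Submodule.norm_subtypeL_le, norm_codRestrict_le]
    _ = ‖A‖ * (‖f‖ * ‖W‖) := one_mul _

theorem pow_comp_subtypeL_of_restrict (S : E →L[𝕜] E) (K : Submodule 𝕜 E) (V : K →L[𝕜] K)
    (hV : ∀ x, (V x : E) = S x) (n : ℕ) : (S ^ n) ∘L K.subtypeL = K.subtypeL ∘L (V ^ n) := by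
  have hS : S ∘L K.subtypeL = K.subtypeL ∘L V := ext fun x => (hV x).symm
  induction n with
  | zero => rfl
  | succ n ih =>
    rw [pow_succ', pow_succ', mul_def, mul_def, comp_assoc, ih, ← comp_assoc, hS, comp_assoc]

theorem norm_pow_comp_comp_le_of_restrict (S : E →L[𝕜] E) (K : Submodule 𝕜 E) (V : K →L[𝕜] K)
    (hV : ∀ x, (V x : E) = S x) (f : F →L[𝕜] E) (hf : ∀ x, f x ∈ K) (W : G →L[𝕜] F) (n : ℕ) :
    ‖(S ^ n) ∘L f ∘L W‖ ≤ ‖V ^ n‖ * (‖f‖ * ‖W‖) := by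
  have hS : (S ^ n) ∘L f ∘L W = ((S ^ n) ∘L K.subtypeL) ∘L f.codRestrict K hf ∘L W := rfl
  rw [hS, pow_comp_subtypeL_of_restrict S K V hV n]
  exact norm_subtypeL_comp_comp_codRestrict_comp_le K (V ^ n) f hf W

theorem sum_range_mul_norm_subtypeL_comp_pow_succ_comp_le (K : Submodule 𝕜 E) (A : K →L[𝕜] K)
    (f : F →L[𝕜] E) (hf : ∀ x, f x ∈ K) {lam C : ℝ} (hlam : 0 < lam) (hC : 0 ≤ C)
    (hA : Summable fun j => ‖A ^ j‖ * lam ^ j) (R : ℕ → G →L[𝕜] F) (N : ℕ)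
    (hR : ∀ j < N, ‖R j‖ ≤ C) :
    ∑ j ∈ Finset.range N, lam ^ j * ‖K.subtypeL ∘L (A ^ (j + 1)) ∘L f.codRestrict K hf ∘L R j‖
      ≤ lam⁻¹ * (∑' j, ‖A ^ j‖ * lam ^ j) * ‖f‖ * C := by
  have hterm : ∀ j ∈ Finset.range N,
      lam ^ j * ‖K.subtypeL ∘L (A ^ (j + 1)) ∘L f.codRestrict K hf ∘L R j‖
        ≤ lam⁻¹ * (‖f‖ * C) * (‖A ^ (j + 1)‖ * lam ^ (j + 1)) := by
    intro j hj
    grw [norm_subtypeL_comp_comp_codRestrict_comp_le, hR j (Finset.mem_range.1 hj)]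
    apply le_of_eq
    field_simp
    ring
  calc _ ≤ ∑ j ∈ Finset.range N, lam⁻¹ * (‖f‖ * C) * (‖A ^ (j + 1)‖ * lam ^ (j + 1)) :=
        Finset.sum_le_sum hterm
    _ ≤ ∑ j ∈ Finset.range (N + 1), lam⁻¹ * (‖f‖ * C) * (‖A ^ j‖ * lam ^ j) := by
        rw [Finset.sum_range_succ']
        exact le_add_of_nonneg_right (by positivity)
    _ ≤ lam⁻¹ * (‖f‖ * C) * ∑' j, ‖A ^ j‖ * lam ^ j := by
        rw [← Finset.mul_sum]
        gcongr
        exact hA.sum_le_tsum _ fun j _ => by positivity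
    _ = lam⁻¹ * (∑' j, ‖A ^ j‖ * lam ^ j) * ‖f‖ * C := by ring

theorem tsum_zpow_mul_norm_pow_comp_comp_le (S : E →L[𝕜] E) (K : Submodule 𝕜 E)
    (V : K →L[𝕜] K) (hV : ∀ x, (V x : E) = S x) (f : F →L[𝕜] E) (hf : ∀ x, f x ∈ K)
    {lam C : ℝ} (hlam : 0 < lam) (hVsum : Summable fun i => ‖V ^ i‖ * lam⁻¹ ^ i)
    (R : ℕ → G →L[𝕜] F) (hR : ∀ i, ‖R i‖ ≤ C) :
    ∑' i : ℕ, lam ^ (-(i : ℤ) - 1) * ‖(S ^ i) ∘L f ∘L R i‖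
      ≤ lam⁻¹ * (∑' i, ‖V ^ i‖ * lam⁻¹ ^ i) * ‖f‖ * C := by
  have hterm : ∀ i : ℕ, lam ^ (-(i : ℤ) - 1) * ‖(S ^ i) ∘L f ∘L R i‖
      ≤ lam⁻¹ * (‖f‖ * C) * (‖V ^ i‖ * lam⁻¹ ^ i) := by
    intro i
    have hzpow : lam ^ (-(i : ℤ) - 1) = lam⁻¹ * lam⁻¹ ^ i := by
      rw [zpow_sub₀ hlam.ne', zpow_neg, zpow_natCast, zpow_one, inv_pow, div_eq_mul_inv, mul_comm]
    grw [norm_pow_comp_comp_le_of_restrict S K V hV f hf, hR i, hzpow]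
    apply le_of_eq
    ring
  have hbound : Summable fun i => lam⁻¹ * (‖f‖ * C) * (‖V ^ i‖ * lam⁻¹ ^ i) :=
    hVsum.mul_left _
  calc _ ≤ ∑' i : ℕ, lam⁻¹ * (‖f‖ * C) * (‖V ^ i‖ * lam⁻¹ ^ i) :=
        (hbound.of_nonneg_of_le (fun i => by positivity) hterm).tsum_le_tsum hterm hbound
    _ = lam⁻¹ * (∑' i, ‖V ^ i‖ * lam⁻¹ ^ i) * ‖f‖ * C := by rw [tsum_mul_left]; ring

end ContinuousLinearMap

theorem backward_delta_linear_bound_general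
    {X : Type*} [NormedAddCommGroup X] [NormedSpace ℂ X] [CompleteSpace X]
    (S P : X →L[ℂ] X)
    (hproj : P ∘L P = P)
    (a b : ℝ) (ha : 0 ≤ a)
    (V : LinearMap.ker (P : X →ₗ[ℂ] X) →L[ℂ] LinearMap.ker (P : X →ₗ[ℂ] X))
    (hV : ∀ x : LinearMap.ker (P : X →ₗ[ℂ] X), (V x : X) = S x)
    (hσV : spectrum ℂ V ⊆ {z : ℂ | ‖z‖ ≤ a})
    (U Ui : LinearMap.range (P : X →ₗ[ℂ] X) →L[ℂ] LinearMap.range (P : X →ₗ[ℂ] X))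
    (hUUi : U ∘L Ui = 1) (hUiU : Ui ∘L U = 1)
    (hσU : spectrum ℂ U ⊆ {z : ℂ | b ≤ ‖z‖})
    (lam : ℝ) (hlam : lam ∈ Set.Ioo a b) :
    -- `δ R n` is the quantity `δ_n(λ,R)` of the paper, for `n ≤ 0`
    let δ : (ℤ → X →L[ℂ] X) → ℤ → ℝ := fun R n =>
      (∑ j ∈ Finset.range (-n).toNat, lam ^ j *
          ‖(LinearMap.range (P : X →ₗ[ℂ] X)).subtypeL ∘L (Ui ^ (j + 1)) ∘L
              (P.codRestrict (LinearMap.range (P : X →ₗ[ℂ] X)) fun x => LinearMap.mem_range_self (P : X →ₗ[ℂ] X) x) ∘L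
            R (n + j)‖) +
        ∑' i : ℕ, lam ^ (-(i : ℤ) - 1) * ‖(S ^ i) ∘L (1 - P) ∘L R (n - i - 1)‖
    ∃ M : ℝ, 0 < M ∧
      (∀ (R : ℤ → X →L[ℂ] X) (C : ℝ), (∀ n : ℤ, n < 0 → ‖R n‖ ≤ C) →
        ∀ n : ℤ, n ≤ 0 → δ R n ≤ M * C) ∧
      (∃ ε : ℝ, 0 < ε ∧ ∀ R : ℤ → X →L[ℂ] X, (∀ n : ℤ, n < 0 → ‖R n‖ ≤ ε) →
        ∀ n : ℤ, n ≤ 0 → δ R n < 1) := by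
  intro δ
  obtain ⟨hal, hlb⟩ := hlam
  have hlam : 0 < lam := ha.trans_lt hal
  have hb : 0 < b := hlam.trans hlb
  have : CompleteSpace (LinearMap.ker (P : X →ₗ[ℂ] X)) := P.isClosed_ker.completeSpace_coe
  have : CompleteSpace (LinearMap.range (P : X →ₗ[ℂ] X)) :=
    (ContinuousLinearMap.IsIdempotentElem.isClosed_range hproj).completeSpace_coe
  have hUisum : Summable fun j => ‖Ui ^ j‖ * lam ^ j :=
    summable_norm_pow_mul_pow_of_spectrum_subset Ui
      (spectrum_inv_subset_of_subset ⟨U, Ui, hUUi, hUiU⟩ hb hσU) hlam.le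
      (by rwa [inv_mul_lt_one₀ hb])
  have hVsum : Summable fun i => ‖V ^ i‖ * lam⁻¹ ^ i :=
    summable_norm_pow_mul_pow_of_spectrum_subset V hσV (inv_nonneg.2 hlam.le)
      (by rwa [mul_inv_lt_iff₀ hlam, one_mul])
  have hkerP : ∀ x, (1 - P) x ∈ LinearMap.ker (P : X →ₗ[ℂ] X) := fun x => by
    simp [← ContinuousLinearMap.comp_apply, hproj]
  obtain ⟨M, hM, hbound⟩ : ∃ M : ℝ, 0 < M ∧ ∀ (R : ℤ → X →L[ℂ] X) (C : ℝ),
      (∀ n : ℤ, n < 0 → ‖R n‖ ≤ C) → ∀ n : ℤ, n ≤ 0 → δ R n ≤ M * C := by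
    refine ⟨lam⁻¹ * (∑' j, ‖Ui ^ j‖ * lam ^ j) * ‖P‖
      + lam⁻¹ * (∑' i, ‖V ^ i‖ * lam⁻¹ ^ i) * ‖1 - P‖ + 1, by positivity, fun R C hR n hn => ?_⟩
    have hC : 0 ≤ C := (norm_nonneg _).trans (hR (-1) (by norm_num))
    grw [← le_add_of_nonneg_right zero_le_one, add_mul]
    exact add_le_add
      (ContinuousLinearMap.sum_range_mul_norm_subtypeL_comp_pow_succ_comp_le _ Ui P _ hlam hC
        hUisum (fun j => R (n + j)) _ fun j hj => hR _ (by omega))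
      (ContinuousLinearMap.tsum_zpow_mul_norm_pow_comp_comp_le S _ V hV (1 - P) hkerP hlam
        hVsum (fun i => R (n - i - 1)) fun i => hR _ (by omega))
  refine ⟨M, hM, hbound, (2 * M)⁻¹, by positivity, fun R hR n hn => ?_⟩
  calc δ R n ≤ M * (2 * M)⁻¹ := hbound R _ hR n hn
    _ = 1 / 2 := by field_simp
    _ < 1 := by norm_num

/-- Backward analogue of the linear bound on the smallness quantity:
`sup_{n ≤ 0} δ_n(λ,R) ≤ M(λ) · sup_{n < 0} ‖R_n‖` with `M(λ)` independent of the
sequence `(R_n)`; in particular `sup_{n ≤ 0} δ_n(λ,R) < 1` when `sup_{n < 0} ‖R_n‖`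
is small enough. -/
theorem backward_delta_linear_bound
    {X : Type*} [NormedAddCommGroup X] [NormedSpace ℂ X] [CompleteSpace X]
    (S P : X →L[ℂ] X)
    (hproj : P ∘L P = P) (hcomm : S ∘L P = P ∘L S)
    (a b : ℝ) (ha : 0 ≤ a) (hab : a < b)
    (V : LinearMap.ker (P : X →ₗ[ℂ] X) →L[ℂ] LinearMap.ker (P : X →ₗ[ℂ] X))
    (hV : ∀ x : LinearMap.ker (P : X →ₗ[ℂ] X), (V x : X) = S x)
    (hσV : spectrum ℂ V ⊆ {z : ℂ | ‖z‖ ≤ a})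
    (U Ui : LinearMap.range (P : X →ₗ[ℂ] X) →L[ℂ] LinearMap.range (P : X →ₗ[ℂ] X))
    (hU : ∀ x : LinearMap.range (P : X →ₗ[ℂ] X), (U x : X) = S x)
    (hUUi : U ∘L Ui = 1) (hUiU : Ui ∘L U = 1)
    (hσU : spectrum ℂ U ⊆ {z : ℂ | b ≤ ‖z‖})
    (lam : ℝ) (hlam : lam ∈ Set.Ioo a b) :
    -- `δ R n` is the quantity `δ_n(λ,R)` of the paper, for `n ≤ 0`
    let δ : (ℤ → X →L[ℂ] X) → ℤ → ℝ := fun R n =>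
      (∑ j ∈ Finset.range (-n).toNat, lam ^ j *
          ‖(LinearMap.range (P : X →ₗ[ℂ] X)).subtypeL ∘L (Ui ^ (j + 1)) ∘L
              (P.codRestrict (LinearMap.range (P : X →ₗ[ℂ] X)) fun x => LinearMap.mem_range_self (P : X →ₗ[ℂ] X) x) ∘L
            R (n + j)‖) +
        ∑' i : ℕ, lam ^ (-(i : ℤ) - 1) * ‖(S ^ i) ∘L (1 - P) ∘L R (n - i - 1)‖
    ∃ M : ℝ, 0 < M ∧
      (∀ (R : ℤ → X →L[ℂ] X) (C : ℝ), (∀ n : ℤ, n < 0 → ‖R n‖ ≤ C) →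
        ∀ n : ℤ, n ≤ 0 → δ R n ≤ M * C) ∧
      (∃ ε : ℝ, 0 < ε ∧ ∀ R : ℤ → X →L[ℂ] X, (∀ n : ℤ, n < 0 → ‖R n‖ ≤ ε) →
        ∀ n : ℤ, n ≤ 0 → δ R n < 1) :=
  backward_delta_linear_bound_general S P hproj a b ha V hV hσV U Ui hUUi hUiU hσU lam hlam
end
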